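/- arXiv:1102.2971 — 8 statements merged into one kernel-verified Lean document; each statement's English description precedes it below -/
import Mathlib

section
/- Let D be a positive odd squarefree integer and s,t,u,v integers coprime to D. Then |σ_D(s,t,u,v)| ≤ S_D(su, tv), where σ_D(s,t,u,v) = Σ_{ab=D} Π_{p|b}(J(s,p)+J(ua,p)) Π_{p|a}(J(t,p)+J(vb,p)) and S_D(u,v) = σ_D(1,1,u,v). -/
open Finset

/-- `E_D(u,v)`: number of pairs `(a,b)` of positive integers with `D = a*b`,
`u*a` a square mod `b` and `v*b` a square mod `a`. -/
noncomputable def Ecard (D : ℕ) (u v : ℤ) : ℕ :=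
  Set.ncard {p : ℕ × ℕ | 0 < p.1 ∧ 0 < p.2 ∧ p.1 * p.2 = D ∧
    (∃ n : ℤ, u * p.1 ≡ n ^ 2 [ZMOD (p.2 : ℤ)]) ∧
    (∃ n : ℤ, v * p.2 ≡ n ^ 2 [ZMOD (p.1 : ℤ)])}

/-- `σ_D(s,t,u,v)`. -/
def sigmaSum (D : ℕ) (s t u v : ℤ) : ℤ :=
  ∑ a ∈ D.divisors,
    (∏ p ∈ (D / a).primeFactors, (jacobiSym s p + jacobiSym (u * a) p)) *
    (∏ p ∈ a.primeFactors, (jacobiSym t p + jacobiSym (v * (D / a)) p))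

/-- `S_D(u,v) = σ_D(1,1,u,v)`. -/
def Ssum (D : ℕ) (u v : ℤ) : ℤ :=
  ∑ a ∈ D.divisors,
    (∏ p ∈ (D / a).primeFactors, (1 + jacobiSym (u * a) p)) *
    (∏ p ∈ a.primeFactors, (1 + jacobiSym (v * (D / a)) p))
lemma aux_abs_add (ε δ : ℤ) (hε : ε = 1 ∨ ε = -1) (hδ : δ = 1 ∨ δ = -1) :
    |ε + δ| = 1 + ε * δ := by
  rcases hε with h | h <;> rcases hδ with h' | h' <;> subst h <;> subst h' <;> norm_num

lemma aux_cop {D p : ℕ} (hsq : Squarefree D) (hp : p.Prime) {a : ℕ} (ha : a ∣ D)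
    (hpb : p ∣ D / a) : IsCoprime ((a : ℤ)) (p : ℤ) := by
  rw [Int.isCoprime_iff_gcd_eq_one]
  have : ¬ p ∣ a := by
    intro hpa
    have : p * p ∣ D := by
      have := Nat.div_mul_cancel ha
      exact this ▸ mul_dvd_mul hpb hpa
    exact hp.not_isUnit (hsq p this)
  simpa [Int.gcd_natCast_natCast] using (Nat.coprime_comm.mp ((hp.coprime_iff_not_dvd).mpr this))

theorem abs_sigmaSum_le (D : ℕ) (hD : Odd D) (hsq : Squarefree D) (hpos : 0 < D)
    (s t u v : ℤ) (hs : IsCoprime s (D : ℤ)) (ht : IsCoprime t (D : ℤ))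
    (hu : IsCoprime u (D : ℤ)) (hv : IsCoprime v (D : ℤ)) :
    |sigmaSum D s t u v| ≤ Ssum D (s * u) (t * v) := by
  rw [sigmaSum, Ssum]
  refine (Finset.abs_sum_le_sum_abs _ _).trans_eq (Finset.sum_congr rfl ?_)
  intro a ha
  rw [Nat.mem_divisors] at ha
  obtain ⟨hadvd, hD0⟩ := ha
  rw [abs_mul, Finset.abs_prod, Finset.abs_prod]
  congr 1
  · refine Finset.prod_congr rfl fun p hp => ?_
    have hpp : p.Prime := Nat.prime_of_mem_primeFactors hp
    have hpb : p ∣ D / a := Nat.dvd_of_mem_primeFactors hp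
    have hpD : (p : ℤ) ∣ (D : ℤ) := Int.natCast_dvd_natCast.mpr
      (hpb.trans (Nat.div_dvd_of_dvd hadvd))
    have hs' : Int.gcd s p = 1 := Int.isCoprime_iff_gcd_eq_one.mp
      (hs.of_isCoprime_of_dvd_right hpD)
    have hua : Int.gcd (u * a) p = 1 := Int.isCoprime_iff_gcd_eq_one.mp
      ((hu.of_isCoprime_of_dvd_right hpD).mul_left (aux_cop hsq hpp hadvd hpb))
    rw [aux_abs_add _ _ (jacobiSym.eq_one_or_neg_one hs')
      (jacobiSym.eq_one_or_neg_one hua)]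
    simp [jacobiSym.mul_left, mul_assoc]
  · refine Finset.prod_congr rfl fun p hp => ?_
    have hpp : p.Prime := Nat.prime_of_mem_primeFactors hp
    have hpa : p ∣ a := Nat.dvd_of_mem_primeFactors hp
    have hpD : (p : ℤ) ∣ (D : ℤ) := Int.natCast_dvd_natCast.mpr (hpa.trans hadvd)
    have hbd : D / a ∣ D := Nat.div_dvd_of_dvd hadvd
    have hcop : IsCoprime ((D / a : ℕ) : ℤ) (p : ℤ) := by
      have : p ∣ D / (D / a) := by
        rwa [Nat.div_div_self hadvd hpos.ne']
      exact aux_cop hsq hpp hbd this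
    have ht' : Int.gcd t p = 1 := Int.isCoprime_iff_gcd_eq_one.mp
      (ht.of_isCoprime_of_dvd_right hpD)
    have hvb : Int.gcd (v * (D / a : ℕ)) p = 1 := Int.isCoprime_iff_gcd_eq_one.mp
      ((hv.of_isCoprime_of_dvd_right hpD).mul_left hcop)
    have hcast : ((D : ℤ) / (a : ℤ)) = ((D / a : ℕ) : ℤ) := (Int.natCast_div _ _).symm
    rw [hcast, aux_abs_add _ _ (jacobiSym.eq_one_or_neg_one ht')
      (jacobiSym.eq_one_or_neg_one hvb)]
    simp [jacobiSym.mul_left, mul_assoc]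
end

section
/- Let D be a positive odd squarefree integer and s,t,u,v integers coprime to D. Then σ_D(s,t,u,v) = Σ_{abcd=D} (-1)^{β(c)β(d)} J(a,d) J(b,c) J(s,b) J(t,a) J(u,d) J(v,c), where the sum runs over factorizations of D into four positive factors, J is the Jacobi symbol, and β(n) ∈ 𝔽₂ is defined by J(-1,n) = (-1)^{β(n)}. -/
open Finset

/-- `β(n) = 0` if `n ≡ 1 (mod 4)` and `1` if `n ≡ 3 (mod 4)`, as an exponent. -/
def betaExp (n : ℕ) : ℕ := if n % 4 = 3 then 1 else 0

private lemma jacobi_prod_finset (x : ℤ) (t : Finset ℕ) (ht : ∀ p ∈ t, p ≠ 0) :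
    jacobiSym x (∏ p ∈ t, p) = ∏ p ∈ t, jacobiSym x p := by
  classical
  induction t using Finset.induction_on with
  | empty => simp
  | @insert q tt hq ih =>
    rw [Finset.prod_insert hq, Finset.prod_insert hq,
      jacobiSym.mul_right' x (ht q (Finset.mem_insert_self q tt))
        (Finset.prod_ne_zero_iff.mpr fun p hp => ht p (Finset.mem_insert_of_mem hp)),
      ih fun p hp => ht p (Finset.mem_insert_of_mem hp)]

private lemma jacobi_prod_primeFactors (x : ℤ) {n : ℕ} (hn : Squarefree n) :
    (∏ p ∈ n.primeFactors, jacobiSym x p) = jacobiSym x n := by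
  conv_rhs => rw [← Nat.prod_primeFactors_of_squarefree hn]
  rw [jacobi_prod_finset x _ fun p hp => (Nat.prime_of_mem_primeFactors hp).ne_zero]

private lemma prod_add_eq_sum_divisors {n : ℕ} (hn : Squarefree n) (f g : ℕ → ℤ) :
    (∏ p ∈ n.primeFactors, (f p + g p))
      = ∑ d ∈ n.divisors, (∏ p ∈ d.primeFactors, f p) * (∏ p ∈ (n / d).primeFactors, g p) := by
  classical
  rw [Finset.prod_add]
  refine Finset.sum_nbij' (fun t => ∏ p ∈ t, p) (fun d => d.primeFactors) ?_ ?_ ?_ ?_ ?_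
  · intro t ht
    rw [Finset.mem_powerset] at ht
    refine Nat.mem_divisors.mpr ⟨?_, hn.ne_zero⟩
    conv_rhs => rw [← Nat.prod_primeFactors_of_squarefree hn]
    exact Finset.prod_dvd_prod_of_subset _ _ _ ht
  · intro d hd
    exact Finset.mem_powerset.mpr (Nat.primeFactors_mono (Nat.mem_divisors.mp hd).1 hn.ne_zero)
  · intro t ht
    exact Nat.primeFactors_prod fun p hp =>
      Nat.prime_of_mem_primeFactors (Finset.mem_powerset.mp ht hp)
  · intro d hd
    exact Nat.prod_primeFactors_of_squarefree (hn.squarefree_of_dvd (Nat.mem_divisors.mp hd).1)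
  · intro t ht
    rw [Finset.mem_powerset] at ht
    have h1 : (∏ p ∈ t, p).primeFactors = t :=
      Nat.primeFactors_prod fun p hp => Nat.prime_of_mem_primeFactors (ht hp)
    have h3 : (n / ∏ p ∈ t, p).primeFactors = n.primeFactors \ t := by
      rw [← Nat.prod_primeFactors_sdiff_of_squarefree hn ht]
      exact Nat.primeFactors_prod fun p hp =>
        Nat.prime_of_mem_primeFactors (Finset.mem_sdiff.mp hp).1
    rw [h1, h3]

private lemma odd_of_dvd' {d n : ℕ} (h : d ∣ n) (hn : Odd n) : Odd d := by
  rcases h with ⟨k, rfl⟩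
  exact (Nat.odd_mul.mp hn).1

private lemma neg_one_pow_div_two {n : ℕ} (hn : Odd n) :
    ((-1 : ℤ)) ^ (n / 2) = (-1) ^ betaExp n := by
  obtain ⟨k, rfl⟩ := hn
  have h2 : (2 * k + 1) / 2 = k := by omega
  rw [h2, betaExp]
  rcases Nat.even_or_odd k with hk | hk
  · rw [hk.neg_one_pow, if_neg, pow_zero]
    obtain ⟨m, rfl⟩ := hk; omega
  · rw [hk.neg_one_pow, if_pos, pow_one]
    obtain ⟨m, rfl⟩ := hk; omega

private lemma sign_eq' {c d : ℕ} (hc : Odd c) (hd : Odd d) :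
    ((-1 : ℤ)) ^ (c / 2 * (d / 2)) = (-1) ^ (betaExp c * betaExp d) := by
  rw [pow_mul, neg_one_pow_div_two hc, ← pow_mul, mul_comm, pow_mul,
    neg_one_pow_div_two hd, ← pow_mul, mul_comm]

private lemma jacobi_mul_comm' {c d : ℕ} (hc : Odd c) (hd : Odd d) (h : Nat.Coprime d c) :
    jacobiSym (c : ℤ) d * jacobiSym (d : ℤ) c = (-1) ^ (betaExp c * betaExp d) := by
  rw [jacobiSym.quadratic_reciprocity hc hd, mul_assoc, ← sq,
    jacobiSym.sq_one (by rwa [Int.gcd_natCast_natCast]), mul_one, sign_eq' hc hd]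

private lemma reindex_divisors {D : ℕ} (hsq : Squarefree D) (F : ℕ → ℕ → ℕ → ℤ) :
    (∑ A ∈ D.divisors, ∑ b ∈ (D / A).divisors, ∑ a ∈ A.divisors, F a b (A / a))
      = ∑ a ∈ D.divisors, ∑ b ∈ (D / a).divisors, ∑ c ∈ ((D / a) / b).divisors, F a b c := by
  have hD : D ≠ 0 := hsq.ne_zero
  have hL : (∑ A ∈ D.divisors, ∑ b ∈ (D / A).divisors, ∑ a ∈ A.divisors, F a b (A / a))
      = ∑ x ∈ D.divisors.sigma (fun A => ((D / A).divisors.sigma fun _b => A.divisors)),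
          F x.2.2 x.2.1 (x.1 / x.2.2) := by
    rw [Finset.sum_sigma]
    exact Finset.sum_congr rfl fun A _ => by rw [Finset.sum_sigma]
  have hR : (∑ a ∈ D.divisors, ∑ b ∈ (D / a).divisors, ∑ c ∈ ((D / a) / b).divisors, F a b c)
      = ∑ y ∈ D.divisors.sigma (fun a => ((D / a).divisors.sigma fun b => ((D / a) / b).divisors)),
          F y.1 y.2.1 y.2.2 := by
    rw [Finset.sum_sigma]
    exact Finset.sum_congr rfl fun a _ => by rw [Finset.sum_sigma]
  rw [hL, hR]
  refine Finset.sum_nbij' (fun x => ⟨x.2.2, x.2.1, x.1 / x.2.2⟩)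
    (fun y => ⟨y.1 * y.2.2, y.2.1, y.1⟩) ?_ ?_ ?_ ?_ ?_
  · rintro ⟨A, b, a⟩ hx
    rw [Finset.mem_sigma, Finset.mem_sigma] at hx
    obtain ⟨hA, hb, ha⟩ := hx
    have hAD : A ∣ D := (Nat.mem_divisors.mp hA).1
    have haA : a ∣ A := (Nat.mem_divisors.mp ha).1
    have hbDA : b ∣ D / A := (Nat.mem_divisors.mp hb).1
    have haD : a ∣ D := haA.trans hAD
    have hapos : 0 < a := Nat.pos_of_mem_divisors ha
    have hbpos : 0 < b := Nat.pos_of_mem_divisors hb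
    have hDpos : 0 < D := Nat.pos_of_ne_zero hD
    have hDa : D / a = (A / a) * (D / A) :=
      Nat.div_eq_of_eq_mul_left hapos
        (by rw [mul_comm _ a, ← mul_assoc, Nat.mul_div_cancel' haA, Nat.mul_div_cancel' hAD])
    have hDapos : 0 < D / a := Nat.div_pos (Nat.le_of_dvd hDpos haD) hapos
    have hbDa : b ∣ D / a := by rw [hDa]; exact hbDA.mul_left _
    refine Finset.mem_sigma.mpr ⟨Nat.mem_divisors.mpr ⟨haD, hD⟩, Finset.mem_sigma.mpr
      ⟨Nat.mem_divisors.mpr ⟨hbDa, hDapos.ne'⟩, Nat.mem_divisors.mpr ⟨?_, ?_⟩⟩⟩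
    · rw [hDa, Nat.mul_div_assoc _ hbDA]
      exact dvd_mul_right _ _
    · exact (Nat.div_pos (Nat.le_of_dvd hDapos hbDa) hbpos).ne'
  · rintro ⟨a, b, c⟩ hy
    rw [Finset.mem_sigma, Finset.mem_sigma] at hy
    obtain ⟨ha, hb, hc⟩ := hy
    have haD : a ∣ D := (Nat.mem_divisors.mp ha).1
    have hbDa : b ∣ D / a := (Nat.mem_divisors.mp hb).1
    have hcDab : c ∣ (D / a) / b := (Nat.mem_divisors.mp hc).1
    have hcDa : c ∣ D / a := hcDab.trans (Nat.div_dvd_of_dvd hbDa)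
    have hacD : a * c ∣ D := (Nat.dvd_div_iff_mul_dvd haD).mp hcDa
    have hbc : b * c ∣ D / a := (Nat.dvd_div_iff_mul_dvd hbDa).mp hcDab
    have hacpos : 0 < a * c :=
      Nat.pos_of_ne_zero (fun h => hD (Nat.eq_zero_of_zero_dvd (h ▸ hacD)))
    refine Finset.mem_sigma.mpr ⟨Nat.mem_divisors.mpr ⟨hacD, hD⟩, Finset.mem_sigma.mpr
      ⟨Nat.mem_divisors.mpr ⟨?_, ?_⟩, Nat.mem_divisors.mpr ⟨dvd_mul_right _ _, hacpos.ne'⟩⟩⟩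
    · rw [← Nat.div_div_eq_div_mul]
      exact (Nat.dvd_div_iff_mul_dvd hcDa).mpr (by rwa [mul_comm c b])
    · exact (Nat.div_pos (Nat.le_of_dvd (Nat.pos_of_ne_zero hD) hacD) hacpos).ne'
  · rintro ⟨A, b, a⟩ hx
    rw [Finset.mem_sigma, Finset.mem_sigma] at hx
    obtain ⟨hA, hb, ha⟩ := hx
    have haA : a ∣ A := (Nat.mem_divisors.mp ha).1
    show (⟨a * (A / a), b, a⟩ : (_ : ℕ) × (_ : ℕ) × ℕ) = ⟨A, b, a⟩
    rw [Nat.mul_div_cancel' haA]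
  · rintro ⟨a, b, c⟩ hy
    rw [Finset.mem_sigma, Finset.mem_sigma] at hy
    obtain ⟨ha, hb, hc⟩ := hy
    have hapos : 0 < a := Nat.pos_of_mem_divisors ha
    show (⟨a, b, a * c / a⟩ : (_ : ℕ) × (_ : ℕ) × ℕ) = ⟨a, b, c⟩
    rw [Nat.mul_div_cancel_left c hapos]
  · rintro ⟨A, b, a⟩ _; rfl

theorem sigmaSum_eq_quadruple_sum (D : ℕ) (hD : Odd D) (hsq : Squarefree D) (hpos : 0 < D)
    (s t u v : ℤ) (hs : IsCoprime s (D : ℤ)) (ht : IsCoprime t (D : ℤ))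
    (hu : IsCoprime u (D : ℤ)) (hv : IsCoprime v (D : ℤ)) :
    sigmaSum D s t u v =
      ∑ a ∈ D.divisors, ∑ b ∈ (D / a).divisors, ∑ c ∈ ((D / a) / b).divisors,
        (-1 : ℤ) ^ (betaExp c * betaExp (D / (a * b * c))) *
          jacobiSym (a : ℤ) (D / (a * b * c)) * jacobiSym (b : ℤ) c *
          jacobiSym s b * jacobiSym t a * jacobiSym u (D / (a * b * c)) * jacobiSym v c := by
  classical
  have hDne : D ≠ 0 := hpos.ne'
  have main : sigmaSum D s t u v
      = ∑ A ∈ D.divisors, ∑ b ∈ (D / A).divisors, ∑ a ∈ A.divisors,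
          (-1 : ℤ) ^ (betaExp (A / a) * betaExp (D / (a * b * (A / a)))) *
            jacobiSym (a : ℤ) (D / (a * b * (A / a))) * jacobiSym (b : ℤ) (A / a) *
            jacobiSym s b * jacobiSym t a * jacobiSym u (D / (a * b * (A / a))) *
            jacobiSym v (A / a) := by
    rw [sigmaSum]
    refine Finset.sum_congr rfl fun A hA => ?_
    obtain ⟨hAD, -⟩ := Nat.mem_divisors.mp hA
    have hsqA : Squarefree A := hsq.squarefree_of_dvd hAD
    have hDAdvd : D / A ∣ D := Nat.div_dvd_of_dvd hAD
    have hsqB : Squarefree (D / A) := hsq.squarefree_of_dvd hDAdvd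
    rw [prod_add_eq_sum_divisors hsqB, prod_add_eq_sum_divisors hsqA, Finset.sum_mul_sum]
    refine Finset.sum_congr rfl fun b hb => Finset.sum_congr rfl fun a ha => ?_
    obtain ⟨hbB, -⟩ := Nat.mem_divisors.mp hb
    obtain ⟨haA, -⟩ := Nat.mem_divisors.mp ha
    have hcA : A / a ∣ A := Nat.div_dvd_of_dvd haA
    have hdB : (D / A) / b ∣ D / A := Nat.div_dvd_of_dvd hbB
    rw [jacobi_prod_primeFactors s (hsqB.squarefree_of_dvd hbB),
      jacobi_prod_primeFactors _ (hsqB.squarefree_of_dvd hdB),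
      jacobi_prod_primeFactors t (hsqA.squarefree_of_dvd haA),
      jacobi_prod_primeFactors _ (hsqA.squarefree_of_dvd hcA)]
    have hd_eq : D / (a * b * (A / a)) = (D / A) / b := by
      rw [mul_right_comm, Nat.mul_div_cancel' haA, ← Nat.div_div_eq_div_mul]
    have hsqD' : Squarefree (A * (D / A)) := by rwa [Nat.mul_div_cancel' hAD]
    have hcopAB : Nat.Coprime A (D / A) := Nat.coprime_of_squarefree_mul hsqD'
    have hcop : Nat.Coprime ((D / A) / b) (A / a) :=
      Nat.Coprime.coprime_dvd_left hdB (Nat.Coprime.coprime_dvd_right hcA hcopAB.symm)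
    have hoddc : Odd (A / a) := odd_of_dvd' (hcA.trans hAD) hD
    have hoddd : Odd ((D / A) / b) := odd_of_dvd' (hdB.trans hDAdvd) hD
    have hcd := jacobi_mul_comm' hoddc hoddd hcop
    have hA_cast : (A : ℤ) = (a : ℤ) * ((A / a : ℕ) : ℤ) := by
      exact_mod_cast congrArg (Nat.cast : ℕ → ℤ) (Nat.mul_div_cancel' haA).symm
    have hB_cast : ((D / A : ℕ) : ℤ) = (b : ℤ) * (((D / A) / b : ℕ) : ℤ) := by
      exact_mod_cast congrArg (Nat.cast : ℕ → ℤ) (Nat.mul_div_cancel' hbB).symm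
    have e1 : jacobiSym (u * (A : ℤ)) ((D / A) / b)
        = jacobiSym u ((D / A) / b) *
          (jacobiSym (a : ℤ) ((D / A) / b) * jacobiSym ((A / a : ℕ) : ℤ) ((D / A) / b)) := by
      rw [jacobiSym.mul_left, hA_cast, jacobiSym.mul_left]
    have e2 : jacobiSym (v * ((D / A : ℕ) : ℤ)) (A / a)
        = jacobiSym v (A / a) *
          (jacobiSym (b : ℤ) (A / a) * jacobiSym (((D / A) / b : ℕ) : ℤ) (A / a)) := by
      rw [jacobiSym.mul_left, hB_cast, jacobiSym.mul_left]
    rw [show v * ((D : ℤ) / (A : ℤ)) = v * ((D / A : ℕ) : ℤ) by rw [← Int.natCast_div],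
      hd_eq, e1, e2]
    linear_combination (jacobiSym s b * jacobiSym u ((D / A) / b) *
      jacobiSym (a : ℤ) ((D / A) / b) * jacobiSym t a * jacobiSym v (A / a) *
      jacobiSym (b : ℤ) (A / a)) * hcd
  rw [main]
  exact reindex_divisors hsq (fun a b c =>
    (-1 : ℤ) ^ (betaExp c * betaExp (D / (a * b * c))) *
      jacobiSym (a : ℤ) (D / (a * b * c)) * jacobiSym (b : ℤ) c *
      jacobiSym s b * jacobiSym t a * jacobiSym u (D / (a * b * c)) * jacobiSym v c)
end

section
/- Let D be a positive odd squarefree integer with D ≡ 1 (mod 4). Then S_D(-1,1) = S_D(1,1), where S_D(u,v) = Σ_{ab=D} Π_{p|b}(1 + J(ua,p)) Π_{p|a}(1 + J(vb,p)) and J denotes the Jacobi/Legendre symbol. -/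
open Finset

private def jacF (c : ℤ) : ArithmeticFunction ℤ :=
  ⟨fun e => if e = 0 then 0 else jacobiSym c e, by simp⟩

private lemma jacF_mult (c : ℤ) : (jacF c).IsMultiplicative := by
  constructor
  · simp [jacF, jacobiSym.one_right]
  · intro m n h
    rcases eq_or_ne m 0 with rfl | hm
    · simp [jacF]
    rcases eq_or_ne n 0 with rfl | hn
    · simp [jacF]
    simp [jacF, hm, hn, mul_ne_zero hm hn, jacobiSym.mul_right' c hm hn]

private lemma prod_one_add_jacobi (c : ℤ) {n : ℕ} (hn : Squarefree n) :
    ∏ p ∈ n.primeFactors, (1 + jacobiSym c p) = ∑ d ∈ n.divisors, jacobiSym c d := by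
  have h := (jacF_mult c).prodPrimeFactors_one_add_of_squarefree hn
  calc ∏ p ∈ n.primeFactors, (1 + jacobiSym c p)
      = ∏ p ∈ n.primeFactors, (1 + jacF c p) := by
        refine Finset.prod_congr rfl fun p hp => ?_
        simp [jacF, (Nat.pos_of_mem_primeFactors hp).ne']
    _ = ∑ d ∈ n.divisors, jacF c d := h
    _ = ∑ d ∈ n.divisors, jacobiSym c d := by
        refine Finset.sum_congr rfl fun d hd => ?_
        simp [jacF, (Nat.pos_of_mem_divisors hd).ne']

private lemma sum_antidiagonal_swap (n : ℕ) (f : ℕ × ℕ → ℤ) :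
    ∑ p ∈ n.divisorsAntidiagonal, f p = ∑ p ∈ n.divisorsAntidiagonal, f p.swap := by
  conv_lhs => rw [← Nat.map_swap_divisorsAntidiagonal, Finset.sum_map]
  simp [Prod.swap]

private noncomputable def PhiJ (w : ℤ) (n : ℕ) : ℤ :=
  ∑ p ∈ n.divisorsAntidiagonal, jacobiSym (w * p.2) p.1

private lemma PhiJ_neg_one_eq_zero {x : ℕ} (hx : Odd x) (hx4 : x % 4 = 3) :
    PhiJ (-1) x = 0 := by
  have hswap : PhiJ (-1) x = ∑ p ∈ x.divisorsAntidiagonal, jacobiSym (-1 * p.1) p.2 :=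
    sum_antidiagonal_swap x (fun p => jacobiSym (-1 * p.2) p.1)
  have h2 : PhiJ (-1) x + PhiJ (-1) x = 0 := by
    nth_rewrite 2 [hswap]
    rw [PhiJ, ← Finset.sum_add_distrib]
    refine Finset.sum_eq_zero ?_
    rintro ⟨e, b⟩ hp
    obtain ⟨hmul, hne⟩ := Nat.mem_divisorsAntidiagonal.mp hp
    simp only at hmul ⊢
    have hob : Odd e ∧ Odd b := Nat.odd_mul.mp (hmul ▸ hx)
    have he2 := Nat.odd_iff.mp hob.1
    have hb2 := Nat.odd_iff.mp hob.2
    have hm : e % 4 * (b % 4) % 4 = 3 := by rw [← Nat.mul_mod, hmul, hx4]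
    rcases Nat.odd_mod_four_iff.mp he2 with h1 | h3
    · have hb4 : b % 4 = 3 := by rw [h1] at hm; omega
      rw [neg_one_mul, neg_one_mul, jacobiSym.neg _ hob.1, jacobiSym.neg _ hob.2,
        ZMod.χ₄_nat_one_mod_four h1, ZMod.χ₄_nat_three_mod_four hb4,
        jacobiSym.quadratic_reciprocity_one_mod_four h1 hob.2]
      ring
    · have hb4 : b % 4 = 1 := by rw [h3] at hm; omega
      rw [neg_one_mul, neg_one_mul, jacobiSym.neg _ hob.1, jacobiSym.neg _ hob.2,
        ZMod.χ₄_nat_one_mod_four hb4, ZMod.χ₄_nat_three_mod_four h3,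
        jacobiSym.quadratic_reciprocity_one_mod_four hb4 hob.1]
      ring
  linarith

private lemma PhiJ_one_eq_neg_one {y : ℕ} (hy : Odd y) (hy4 : y % 4 = 1) :
    PhiJ 1 y = PhiJ (-1) y := by
  have hswap : ∀ w : ℤ, PhiJ w y = ∑ p ∈ y.divisorsAntidiagonal, jacobiSym (w * p.1) p.2 :=
    fun w => sum_antidiagonal_swap y (fun p => jacobiSym (w * p.2) p.1)
  have h2 : (PhiJ 1 y - PhiJ (-1) y) + (PhiJ 1 y - PhiJ (-1) y) = 0 := by
    nth_rewrite 2 [hswap 1]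
    nth_rewrite 2 [hswap (-1)]
    rw [PhiJ, PhiJ, ← Finset.sum_sub_distrib, ← Finset.sum_sub_distrib,
      ← Finset.sum_add_distrib]
    refine Finset.sum_eq_zero ?_
    rintro ⟨e, b⟩ hp
    obtain ⟨hmul, hne⟩ := Nat.mem_divisorsAntidiagonal.mp hp
    simp only at hmul ⊢
    have hob : Odd e ∧ Odd b := Nat.odd_mul.mp (hmul ▸ hy)
    have he2 := Nat.odd_iff.mp hob.1
    have hb2 := Nat.odd_iff.mp hob.2
    have hm : e % 4 * (b % 4) % 4 = 1 := by rw [← Nat.mul_mod, hmul, hy4]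
    rw [one_mul, one_mul, neg_one_mul, neg_one_mul, jacobiSym.neg _ hob.1,
      jacobiSym.neg _ hob.2]
    rcases Nat.odd_mod_four_iff.mp he2 with h1 | h3
    · have hb4 : b % 4 = 1 := by rw [h1] at hm; omega
      rw [ZMod.χ₄_nat_one_mod_four h1, ZMod.χ₄_nat_one_mod_four hb4]
      ring
    · have hb4 : b % 4 = 3 := by rw [h3] at hm; omega
      rw [ZMod.χ₄_nat_three_mod_four h3, ZMod.χ₄_nat_three_mod_four hb4,
        jacobiSym.quadratic_reciprocity_three_mod_four h3 hb4]
      ring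
  linarith

private lemma chi_recip {e₁ e₂ : ℕ} (h₁ : Odd e₁) (h₂ : Odd e₂) (hcop : Nat.Coprime e₁ e₂) :
    (ZMod.χ₄ e₂ - 1) * (jacobiSym e₁ e₂ * jacobiSym e₂ e₁)
      = ZMod.χ₄ e₁ * ZMod.χ₄ e₂ - ZMod.χ₄ e₁ := by
  have he2 := Nat.odd_iff.mp h₁
  have hb2 := Nat.odd_iff.mp h₂
  have hsq : jacobiSym (e₂ : ℤ) e₁ * jacobiSym (e₂ : ℤ) e₁ = 1 := by
    have h := jacobiSym.sq_one (a := (e₂ : ℤ)) (b := e₁) (by simpa using hcop.symm)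
    rwa [sq] at h
  rcases Nat.odd_mod_four_iff.mp hb2 with h1 | h3
  · rw [ZMod.χ₄_nat_one_mod_four h1]; ring
  · rcases Nat.odd_mod_four_iff.mp he2 with g1 | g3
    · rw [ZMod.χ₄_nat_three_mod_four h3, ZMod.χ₄_nat_one_mod_four g1,
        jacobiSym.quadratic_reciprocity_one_mod_four g1 h₂]
      linear_combination (-2 : ℤ) * hsq
    · rw [ZMod.χ₄_nat_three_mod_four h3, ZMod.χ₄_nat_three_mod_four g3,
        jacobiSym.quadratic_reciprocity_three_mod_four g3 h3]
      linear_combination (2 : ℤ) * hsq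

private lemma regroup (D : ℕ) (F : ℕ × ℕ → ℕ × ℕ → ℤ) :
    (∑ p ∈ D.divisorsAntidiagonal, ∑ r ∈ p.2.divisorsAntidiagonal,
        ∑ q ∈ p.1.divisorsAntidiagonal, F r q)
    = ∑ p ∈ D.divisorsAntidiagonal, ∑ r ∈ p.2.divisorsAntidiagonal,
        ∑ q ∈ p.1.divisorsAntidiagonal, F (r.1, q.2) (q.1, r.2) := by
  have flat : ∀ G : (ℕ × ℕ) → (ℕ × ℕ) → (ℕ × ℕ) → ℤ,
      (∑ p ∈ D.divisorsAntidiagonal, ∑ r ∈ p.2.divisorsAntidiagonal,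
        ∑ q ∈ p.1.divisorsAntidiagonal, G p r q)
      = ∑ y ∈ ((D.divisorsAntidiagonal).sigma fun p => p.2.divisorsAntidiagonal).sigma
          (fun x => x.1.1.divisorsAntidiagonal), G y.1.1 y.1.2 y.2 := by
    intro G
    rw [Finset.sum_sigma, Finset.sum_sigma]
  rw [flat (fun _ r q => F r q), flat (fun _ r q => F (r.1, q.2) (q.1, r.2))]
  refine Finset.sum_nbij'
    (fun y => ⟨⟨(y.2.1 * y.1.2.2, y.1.2.1 * y.2.2), (y.1.2.1, y.2.2)⟩, (y.2.1, y.1.2.2)⟩)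
    (fun y => ⟨⟨(y.2.1 * y.1.2.2, y.1.2.1 * y.2.2), (y.1.2.1, y.2.2)⟩, (y.2.1, y.1.2.2)⟩)
    ?_ ?_ ?_ ?_ ?_
  · rintro ⟨⟨⟨A, B⟩, ⟨e₂, b⟩⟩, ⟨e₁, a⟩⟩ hy
    simp only [Finset.mem_sigma, Nat.mem_divisorsAntidiagonal] at hy ⊢
    obtain ⟨⟨⟨hAB, hD⟩, hB, hBne⟩, hA, hAne⟩ := hy
    have he₂ : e₂ ≠ 0 := fun h => hBne (by rw [← hB, h, zero_mul])
    have hb : b ≠ 0 := fun h => hBne (by rw [← hB, h, mul_zero])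
    have he₁ : e₁ ≠ 0 := fun h => hAne (by rw [← hA, h, zero_mul])
    have ha : a ≠ 0 := fun h => hAne (by rw [← hA, h, mul_zero])
    refine ⟨⟨⟨?_, hD⟩, trivial, mul_ne_zero he₂ ha⟩, trivial, mul_ne_zero he₁ hb⟩
    have : e₁ * b * (e₂ * a) = e₁ * a * (e₂ * b) := by ring
    rw [this, hA, hB, hAB]
  · rintro ⟨⟨⟨A, B⟩, ⟨e₂, b⟩⟩, ⟨e₁, a⟩⟩ hy
    simp only [Finset.mem_sigma, Nat.mem_divisorsAntidiagonal] at hy ⊢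
    obtain ⟨⟨⟨hAB, hD⟩, hB, hBne⟩, hA, hAne⟩ := hy
    have he₂ : e₂ ≠ 0 := fun h => hBne (by rw [← hB, h, zero_mul])
    have hb : b ≠ 0 := fun h => hBne (by rw [← hB, h, mul_zero])
    have he₁ : e₁ ≠ 0 := fun h => hAne (by rw [← hA, h, zero_mul])
    have ha : a ≠ 0 := fun h => hAne (by rw [← hA, h, mul_zero])
    refine ⟨⟨⟨?_, hD⟩, trivial, mul_ne_zero he₂ ha⟩, trivial, mul_ne_zero he₁ hb⟩
    have : e₁ * b * (e₂ * a) = e₁ * a * (e₂ * b) := by ring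
    rw [this, hA, hB, hAB]
  · rintro ⟨⟨⟨A, B⟩, ⟨e₂, b⟩⟩, ⟨e₁, a⟩⟩ hy
    simp only [Finset.mem_sigma, Nat.mem_divisorsAntidiagonal] at hy
    obtain ⟨⟨⟨hAB, hD⟩, hB, hBne⟩, hA, hAne⟩ := hy
    simp only [hA, hB]
  · rintro ⟨⟨⟨A, B⟩, ⟨e₂, b⟩⟩, ⟨e₁, a⟩⟩ hy
    simp only [Finset.mem_sigma, Nat.mem_divisorsAntidiagonal] at hy
    obtain ⟨⟨⟨hAB, hD⟩, hB, hBne⟩, hA, hAne⟩ := hy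
    simp only [hA, hB]
  · rintro ⟨⟨⟨A, B⟩, ⟨e₂, b⟩⟩, ⟨e₁, a⟩⟩ hy
    rfl

private lemma key_pointwise {D : ℕ} (hsq : Squarefree D) (hD : Odd D) {A B e₁ a e₂ b : ℕ}
    (hAB : A * B = D) (hA : e₁ * a = A) (hB : e₂ * b = B) :
    (jacobiSym (-1 * (A : ℤ)) e₂ - jacobiSym (1 * (A : ℤ)) e₂) * jacobiSym (1 * (B : ℤ)) e₁
    = (jacobiSym (-1 * (a : ℤ)) e₂ - jacobiSym (1 * (a : ℤ)) e₂)
        * jacobiSym (-1 * (b : ℤ)) e₁ := by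
  have hDodd : Odd ((e₁ * a) * (e₂ * b)) := by rw [hA, hB, hAB]; exact hD
  have h1 := Nat.odd_mul.mp hDodd
  have h2 := Nat.odd_mul.mp h1.1
  have h3 := Nat.odd_mul.mp h1.2
  have hcopAB : Nat.Coprime A B := by
    have hsq' : Squarefree (A * B) := by rw [hAB]; exact hsq
    exact (Nat.squarefree_mul_iff.mp hsq').1
  have hcop : Nat.Coprime e₁ e₂ :=
    Nat.Coprime.coprime_dvd_right (Dvd.intro b hB)
      (Nat.Coprime.coprime_dvd_left (Dvd.intro a hA) hcopAB)
  rw [← hA, ← hB]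
  push_cast
  simp only [jacobiSym.mul_left, jacobiSym.one_left, one_mul]
  rw [jacobiSym.at_neg_one h3.1, jacobiSym.at_neg_one h2.1]
  linear_combination (jacobiSym (a : ℤ) e₂ * jacobiSym (b : ℤ) e₁) * chi_recip h2.1 h3.1 hcop

theorem Ssum_neg_one_eq (D : ℕ) (hD : Odd D) (hsq : Squarefree D) (hpos : 0 < D)
    (hmod : D % 4 = 1) : Ssum D (-1) 1 = Ssum D 1 1 := by
  have expand : ∀ u : ℤ, Ssum D u 1 =
      ∑ p ∈ D.divisorsAntidiagonal,
        (∑ r ∈ p.2.divisorsAntidiagonal, jacobiSym (u * p.1) r.1) *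
        (∑ q ∈ p.1.divisorsAntidiagonal, jacobiSym (1 * p.2) q.1) := by
    intro u
    rw [Ssum]
    have hcast : ∀ a ∈ D.divisors,
        (∏ p ∈ (D / a).primeFactors, (1 + jacobiSym (u * a) p)) *
          (∏ p ∈ a.primeFactors, (1 + jacobiSym (1 * ((D : ℤ) / (a : ℤ))) p))
        = (∏ p ∈ (D / a).primeFactors, (1 + jacobiSym (u * a) p)) *
          (∏ p ∈ a.primeFactors, (1 + jacobiSym (1 * ((D / a : ℕ) : ℤ)) p)) := by
      intro a ha
      obtain ⟨hdvd, hD0⟩ := Nat.mem_divisors.mp ha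
      have hcast1 : ((D : ℤ) / (a : ℤ)) = ((D / a : ℕ) : ℤ) := by
        obtain ⟨c, rfl⟩ := hdvd
        have ha0 : a ≠ 0 := by rintro rfl; exact hD0 (zero_mul c)
        rw [Nat.mul_div_cancel_left c (Nat.pos_of_ne_zero ha0)]
        push_cast
        rw [Int.mul_ediv_cancel_left _ (by exact_mod_cast ha0)]
      rw [hcast1]
    rw [Finset.sum_congr rfl hcast, ← Nat.sum_divisorsAntidiagonal (fun A B =>
      (∏ p ∈ B.primeFactors, (1 + jacobiSym (u * A) p)) *
      (∏ p ∈ A.primeFactors, (1 + jacobiSym (1 * B) p)))]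
    refine Finset.sum_congr rfl fun p hp => ?_
    obtain ⟨hAB, hD0⟩ := Nat.mem_divisorsAntidiagonal.mp hp
    have hsqA : Squarefree p.1 :=
      Squarefree.squarefree_of_dvd (Dvd.intro p.2 hAB) hsq
    have hsqB : Squarefree p.2 :=
      Squarefree.squarefree_of_dvd (Dvd.intro_left p.1 hAB) hsq
    rw [prod_one_add_jacobi _ hsqB, prod_one_add_jacobi _ hsqA,
      ← Nat.sum_divisorsAntidiagonal (fun e _ => jacobiSym (u * p.1) e),
      ← Nat.sum_divisorsAntidiagonal (fun e _ => jacobiSym (1 * p.2) e)]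
  rw [← sub_eq_zero, expand (-1), expand 1, ← Finset.sum_sub_distrib]
  have step1 : ∀ p ∈ D.divisorsAntidiagonal,
      (∑ r ∈ p.2.divisorsAntidiagonal, jacobiSym (-1 * p.1) r.1) *
        (∑ q ∈ p.1.divisorsAntidiagonal, jacobiSym (1 * p.2) q.1) -
      (∑ r ∈ p.2.divisorsAntidiagonal, jacobiSym (1 * p.1) r.1) *
        (∑ q ∈ p.1.divisorsAntidiagonal, jacobiSym (1 * p.2) q.1)
      = ∑ r ∈ p.2.divisorsAntidiagonal, ∑ q ∈ p.1.divisorsAntidiagonal,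
          (jacobiSym (-1 * q.2) r.1 - jacobiSym (1 * q.2) r.1) * jacobiSym (-1 * r.2) q.1 := by
    intro p hp
    obtain ⟨hAB, hD0⟩ := Nat.mem_divisorsAntidiagonal.mp hp
    rw [← sub_mul, ← Finset.sum_sub_distrib,
      Finset.sum_mul_sum p.2.divisorsAntidiagonal p.1.divisorsAntidiagonal
        (fun r => jacobiSym (-1 * p.1) r.1 - jacobiSym (1 * p.1) r.1)
        (fun q => jacobiSym (1 * p.2) q.1)]
    refine Finset.sum_congr rfl fun r hr => Finset.sum_congr rfl fun q hq => ?_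
    obtain ⟨hB, _⟩ := Nat.mem_divisorsAntidiagonal.mp hr
    obtain ⟨hA, _⟩ := Nat.mem_divisorsAntidiagonal.mp hq
    exact key_pointwise hsq hD hAB hA hB
  rw [Finset.sum_congr rfl step1,
    regroup D (fun r q => (jacobiSym (-1 * q.2) r.1 - jacobiSym (1 * q.2) r.1) *
      jacobiSym (-1 * r.2) q.1)]
  refine Finset.sum_eq_zero fun p hp => ?_
  obtain ⟨hAB, hD0⟩ := Nat.mem_divisorsAntidiagonal.mp hp
  have hodd : Odd p.1 ∧ Odd p.2 := Nat.odd_mul.mp (hAB ▸ hD)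
  rw [← Finset.sum_mul_sum p.2.divisorsAntidiagonal p.1.divisorsAntidiagonal
      (fun r => jacobiSym (-1 * r.2) r.1 - jacobiSym (1 * r.2) r.1)
      (fun q => jacobiSym (-1 * q.2) q.1)]
  have hfac : (∑ r ∈ p.2.divisorsAntidiagonal,
      (jacobiSym (-1 * r.2) r.1 - jacobiSym (1 * r.2) r.1)) = PhiJ (-1) p.2 - PhiJ 1 p.2 := by
    rw [PhiJ, PhiJ, Finset.sum_sub_distrib]
  have hfac2 : (∑ q ∈ p.1.divisorsAntidiagonal, jacobiSym (-1 * q.2) q.1) = PhiJ (-1) p.1 :=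
    rfl
  rw [hfac, hfac2]
  have hm : p.1 % 4 * (p.2 % 4) % 4 = 1 := by rw [← Nat.mul_mod, hAB, hmod]
  rcases Nat.odd_mod_four_iff.mp (Nat.odd_iff.mp hodd.2) with y1 | y3
  · rw [PhiJ_one_eq_neg_one hodd.2 y1, sub_self, zero_mul]
  · have hx4 : p.1 % 4 = 3 := by
      rcases Nat.odd_mod_four_iff.mp (Nat.odd_iff.mp hodd.1) with x1 | x3
      · rw [x1, y3] at hm; omega
      · exact x3
    rw [PhiJ_neg_one_eq_zero hodd.1 hx4, mul_zero]
end

section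
/- Let D be a positive odd squarefree integer and u an integer coprime to D. Then S_D(u,1) ≤ S_D(-u,1) + S_D(u,-1) ≤ 2·S_D(u,1), where S_D(u,v) = Σ_{ab=D} Π_{p|b}(1 + J(ua,p)) Π_{p|a}(1 + J(vb,p)). -/
open Finset

open Matrix


lemma SIzmod2 (a : ZMod 2) : a = 0 ∨ a = 1 := by revert a; decide

lemma SIvadd {n : Type*} (v : n → ZMod 2) : v + v = 0 := by
  funext p
  show v p + v p = 0
  have : ∀ a : ZMod 2, a + a = 0 := by decide
  exact this _

def SIcnt {n : Type*} [Fintype n] [DecidableEq n] (M : Matrix n n (ZMod 2)) (w : n → ZMod 2) : ℕ :=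
  (Finset.univ.filter fun x : n → ZMod 2 => M.mulVec x = w).card

lemma SIcnt_shift {n : Type*} [Fintype n] [DecidableEq n] (M : Matrix n n (ZMod 2))
    (w : n → ZMod 2) (z : n → ZMod 2) : SIcnt M (M.mulVec z + w) = SIcnt M w := by
  unfold SIcnt
  apply Finset.card_bij' (fun x _ => x + z) (fun y _ => y + z)
  · intro x hx
    simp only [mem_filter, mem_univ, true_and] at hx ⊢
    rw [Matrix.mulVec_add, hx]
    rw [add_comm (M.mulVec z) w] at *
    rw [add_assoc, SIvadd, add_zero]
  · intro y hy
    simp only [mem_filter, mem_univ, true_and] at hy ⊢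
    rw [Matrix.mulVec_add, hy, add_comm]
  · intro x _; rw [add_assoc, SIvadd, add_zero]
  · intro y _; rw [add_assoc, SIvadd, add_zero]

lemma SIcnt_ker_transpose {n : Type*} [Fintype n] [DecidableEq n] (M : Matrix n n (ZMod 2)) :
    SIcnt M 0 = SIcnt Mᵀ 0 := by
  classical
  suffices h : ∀ N : Matrix n n (ZMod 2), SIcnt N 0 = 2 ^ (Fintype.card n - N.rank) by
    rw [h, h, Matrix.rank_transpose]
  intro N
  have h1 : SIcnt N 0 = Fintype.card {x : n → ZMod 2 // N.mulVec x = 0} := by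
    rw [Fintype.card_subtype]; rfl
  have h2 : Fintype.card {x : n → ZMod 2 // N.mulVec x = 0}
      = Fintype.card (LinearMap.ker N.mulVecLin) := by
    apply Fintype.card_congr
    apply Equiv.subtypeEquivRight
    intro x
    simp [LinearMap.mem_ker]
  have h3 : Fintype.card (LinearMap.ker N.mulVecLin)
      = 2 ^ Module.finrank (ZMod 2) (LinearMap.ker N.mulVecLin) := by
    rw [Module.card_eq_pow_finrank (K := ZMod 2), ZMod.card]
  have h4 : Module.finrank (ZMod 2) (LinearMap.ker N.mulVecLin)
      = Fintype.card n - N.rank := by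
    have h5 := LinearMap.finrank_range_add_finrank_ker (N.mulVecLin)
    rw [Module.finrank_pi] at h5
    have : N.rank = Module.finrank (ZMod 2) (LinearMap.range N.mulVecLin) := rfl
    omega
  rw [h1, h2, h3, h4]

lemma SIadd_eq_zero {n : Type*} {u v : n → ZMod 2} : u + v = 0 ↔ u = v := by
  constructor
  · intro h
    have := congrArg (· + v) h
    simpa [add_assoc, SIvadd] using this
  · rintro rfl; exact SIvadd u

lemma SIsplit {n : Type*} [Fintype n] [DecidableEq n] (σf : (n → ZMod 2) → ZMod 2)
    (P : (n → ZMod 2) → Prop) [DecidablePred P] :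
    (univ.filter P).card = (univ.filter fun y => P y ∧ σf y = 0).card
      + (univ.filter fun y => P y ∧ σf y = 1).card := by
  classical
  rw [← Finset.card_union_of_disjoint]
  · rw [← Finset.filter_or]
    apply congrArg
    apply Finset.filter_congr
    intro y _
    rcases SIzmod2 (σf y) with h | h <;> simp [h]
  · rw [Finset.disjoint_left]
    intro y h1 h2
    simp only [mem_filter] at h1 h2
    rw [h1.2.2] at h2
    exact zero_ne_one h2.2.2

lemma SIbij {n : Type*} [Fintype n] [DecidableEq n] (z : n → ZMod 2)
    (P Q : (n → ZMod 2) → Prop) [DecidablePred P] [DecidableQ : DecidablePred Q]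
    (h : ∀ x, P x ↔ Q (x + z)) :
    (univ.filter P).card = (univ.filter Q).card := by
  apply Finset.card_bij' (fun x _ => x + z) (fun y _ => y + z)
  · intro x hx
    simp only [mem_filter, mem_univ, true_and] at hx ⊢
    exact (h x).1 hx
  · intro y hy
    simp only [mem_filter, mem_univ, true_and] at hy ⊢
    rw [h]
    rwa [add_assoc, SIvadd, add_zero]
  · intro x _; rw [add_assoc, SIvadd, add_zero]
  · intro y _; rw [add_assoc, SIvadd, add_zero]

lemma SIabs {n : Type*} [Fintype n] [DecidableEq n] (ε : n → ZMod 2)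
    (A B : Matrix n n (ZMod 2)) (hB : B = A + Matrix.diagonal ε)
    (hAT : Aᵀ = B + Matrix.vecMulVec ε ε) :
    SIcnt A 0 ≤ SIcnt B 0 + SIcnt B ε ∧ SIcnt B 0 + SIcnt B ε ≤ 2 * SIcnt A 0 := by
  classical
  have hker : ∀ y, Aᵀ.mulVec y = 0 ↔ B.mulVec y = fun p => (ε ⬝ᵥ y) * ε p := by
    intro y
    have hexp : Aᵀ.mulVec y = B.mulVec y + fun p => (ε ⬝ᵥ y) * ε p := by
      rw [hAT, Matrix.add_mulVec]
      congr 1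
      funext p
      show (Matrix.vecMulVec ε ε).mulVec y p = (ε ⬝ᵥ y) * ε p
      simp only [Matrix.mulVec, dotProduct, Matrix.vecMulVec_apply]
      rw [Finset.sum_mul]
      apply Finset.sum_congr rfl
      intro q _
      ring
    rw [hexp, add_comm]
    rw [show (0 : n → ZMod 2) = (fun p => (ε ⬝ᵥ y) * ε p) + ((fun p => (ε ⬝ᵥ y) * ε p) + 0) by
      rw [← add_assoc, SIvadd, zero_add]]
    constructor
    · intro h
      have := add_left_cancel h
      rw [add_zero] at this
      exact this
    · intro h; rw [add_zero, h]
  have IDENT : SIcnt A 0 =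
      (univ.filter fun y => B.mulVec y = 0 ∧ ε ⬝ᵥ y = 0).card
      + (univ.filter fun y => B.mulVec y = ε ∧ ε ⬝ᵥ y = 1).card := by
    rw [SIcnt_ker_transpose]
    show (univ.filter fun y => Aᵀ.mulVec y = 0).card = _
    rw [SIsplit (fun y => ε ⬝ᵥ y)]
    congr 1
    · apply congrArg
      apply Finset.filter_congr
      intro y _
      constructor
      · rintro ⟨h1, h2⟩
        refine ⟨?_, h2⟩
        rw [hker] at h1
        rw [h1]
        funext p; rw [h2, zero_mul]; rfl
      · rintro ⟨h1, h2⟩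
        refine ⟨?_, h2⟩
        rw [hker, h1]
        funext p; rw [h2, zero_mul]; rfl
    · apply congrArg
      apply Finset.filter_congr
      intro y _
      constructor
      · rintro ⟨h1, h2⟩
        refine ⟨?_, h2⟩
        rw [hker] at h1
        rw [h1]
        funext p; rw [h2, one_mul]
      · rintro ⟨h1, h2⟩
        refine ⟨?_, h2⟩
        rw [hker, h1]
        funext p; rw [h2, one_mul]
  have hsub1 : (univ.filter fun y => B.mulVec y = 0 ∧ ε ⬝ᵥ y = 0).card ≤ SIcnt B 0 := by
    apply Finset.card_le_card
    intro y hy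
    simp only [mem_filter] at hy ⊢
    exact ⟨hy.1, hy.2.1⟩
  have hsub2 : (univ.filter fun y => B.mulVec y = ε ∧ ε ⬝ᵥ y = 1).card ≤ SIcnt B ε := by
    apply Finset.card_le_card
    intro y hy
    simp only [mem_filter] at hy ⊢
    exact ⟨hy.1, hy.2.1⟩
  constructor
  · rw [IDENT]; omega
  · -- right inequality
    by_cases hz : ∃ z, B.mulVec z = 0 ∧ ε ⬝ᵥ z = 1
    · obtain ⟨z₀, hz1, hz2⟩ := hz
      have e0 : SIcnt B 0 = 2 * (univ.filter fun y => B.mulVec y = 0 ∧ ε ⬝ᵥ y = 0).card := by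
        show (univ.filter fun y => B.mulVec y = 0).card = _
        rw [SIsplit (fun y => ε ⬝ᵥ y)]
        have : (univ.filter fun y => B.mulVec y = 0 ∧ ε ⬝ᵥ y = 1).card
            = (univ.filter fun y => B.mulVec y = 0 ∧ ε ⬝ᵥ y = 0).card := by
          apply SIbij z₀
          intro x
          rw [Matrix.mulVec_add, dotProduct_add, hz1, hz2]
          constructor
          · rintro ⟨h1, h2⟩
            refine ⟨by rw [h1, add_zero], by rw [h2]; decide⟩
          · rintro ⟨h1, h2⟩
            rw [add_zero] at h1
            refine ⟨h1, ?_⟩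
            rcases SIzmod2 (ε ⬝ᵥ x) with h | h
            · rw [h] at h2; exact absurd h2 (by decide)
            · exact h
        omega
      have e1 : SIcnt B ε = 2 * (univ.filter fun y => B.mulVec y = ε ∧ ε ⬝ᵥ y = 1).card := by
        show (univ.filter fun y => B.mulVec y = ε).card = _
        rw [SIsplit (fun y => ε ⬝ᵥ y)]
        have : (univ.filter fun y => B.mulVec y = ε ∧ ε ⬝ᵥ y = 0).card
            = (univ.filter fun y => B.mulVec y = ε ∧ ε ⬝ᵥ y = 1).card := by
          apply SIbij z₀
          intro x
          rw [Matrix.mulVec_add, dotProduct_add, hz1, hz2]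
          constructor
          · rintro ⟨h1, h2⟩
            refine ⟨by rw [h1, add_zero], by rw [h2]; decide⟩
          · rintro ⟨h1, h2⟩
            rw [add_zero] at h1
            refine ⟨h1, ?_⟩
            rcases SIzmod2 (ε ⬝ᵥ x) with h | h
            · exact h
            · rw [h] at h2; exact absurd h2 (by decide)
        omega
      rw [IDENT, e0, e1]; omega
    · push_neg at hz
      have hz' : ∀ z, B.mulVec z = 0 → ε ⬝ᵥ z = 0 := by
        intro z h
        rcases SIzmod2 (ε ⬝ᵥ z) with h' | h'
        · exact h'
        · exact absurd h' (hz z h)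
      have e0 : (univ.filter fun y => B.mulVec y = 0 ∧ ε ⬝ᵥ y = 0).card = SIcnt B 0 := by
        apply congrArg
        apply Finset.filter_congr
        intro y _
        constructor
        · exact fun h => h.1
        · exact fun h => ⟨h, hz' y h⟩
      by_cases hy : ∃ y, B.mulVec y = ε ∧ ε ⬝ᵥ y = 1
      · obtain ⟨y₀, hy1, hy2⟩ := hy
        have e1 : (univ.filter fun y => B.mulVec y = ε ∧ ε ⬝ᵥ y = 1).card = SIcnt B ε := by
          apply congrArg
          apply Finset.filter_congr
          intro y _
          constructor
          · exact fun h => h.1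
          · intro h
            refine ⟨h, ?_⟩
            have hk : B.mulVec (y + y₀) = 0 := by
              rw [Matrix.mulVec_add, h, hy1, SIvadd]
            have := hz' _ hk
            rw [dotProduct_add, hy2] at this
            rcases SIzmod2 (ε ⬝ᵥ y) with h' | h'
            · rw [h'] at this; norm_num at this
            · exact h'
        rw [IDENT, e0, e1]; omega
      · -- every solution of B y = ε has σ y = 0; show SIcnt B ε ≤ SIcnt B 0
        have hle : SIcnt B ε ≤ SIcnt B 0 := by
          by_cases hye : ∃ y, B.mulVec y = ε
          · obtain ⟨y₀, hy1⟩ := hye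
            apply le_of_eq
            apply SIbij y₀
            intro x
            rw [Matrix.mulVec_add, hy1]
            constructor
            · intro h; rw [h]; exact SIvadd ε
            · intro h
              exact SIadd_eq_zero.mp h
          · have : SIcnt B ε = 0 := by
              show #(filter (fun x => B.mulVec x = ε) univ) = 0
              rw [Finset.card_eq_zero, Finset.filter_eq_empty_iff]
              intro y _
              exact fun h => hye ⟨y, h⟩
            omega
        rw [IDENT, e0]
        have : (univ.filter fun y => B.mulVec y = ε ∧ ε ⬝ᵥ y = 1).card = 0 := by
          rw [Finset.card_eq_zero, Finset.filter_eq_empty_iff]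
          intro y _
          rintro ⟨h1, h2⟩
          push_neg at hy
          exact (hy y h1) h2
        omega


def SInu (j : ℤ) : ZMod 2 := if j = 1 then 0 else 1

lemma SInu_one : SInu 1 = 0 := by simp [SInu]

lemma SInu_eq_zero_iff {j : ℤ} (h : j = 1 ∨ j = -1) : (SInu j = 0 ↔ j = 1) := by
  rcases h with rfl | rfl <;> simp [SInu]

lemma SInu_mul {x y : ℤ} (hx : x = 1 ∨ x = -1) (hy : y = 1 ∨ y = -1) :
    SInu (x * y) = SInu x + SInu y := by
  rcases hx with rfl | rfl <;> rcases hy with rfl | rfl <;> simp [SInu] <;> decide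

lemma SIpm_prod {α : Type*} (s : Finset α) (f : α → ℤ) (h : ∀ a ∈ s, f a = 1 ∨ f a = -1) :
    (∏ a ∈ s, f a) = 1 ∨ (∏ a ∈ s, f a) = -1 := by
  classical
  induction s using Finset.cons_induction with
  | empty => left; simp
  | cons a s ha ih =>
    rw [Finset.prod_cons]
    rcases h a (Finset.mem_cons_self a s) with h1 | h1 <;>
      rcases ih (fun x hx => h x (Finset.mem_cons_of_mem hx)) with h2 | h2 <;>
      rw [h1, h2] <;> norm_num

lemma SInu_prod {α : Type*} (s : Finset α) (f : α → ℤ) (h : ∀ a ∈ s, f a = 1 ∨ f a = -1) :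
    SInu (∏ a ∈ s, f a) = ∑ a ∈ s, SInu (f a) := by
  classical
  induction s using Finset.cons_induction with
  | empty => simp [SInu]
  | cons a s ha ih =>
    rw [Finset.prod_cons, Finset.sum_cons,
      SInu_mul (h a (Finset.mem_cons_self a s))
        (SIpm_prod s f (fun x hx => h x (Finset.mem_cons_of_mem hx))),
      ih (fun x hx => h x (Finset.mem_cons_of_mem hx))]

lemma SInu_neg_one_pow (k : ℕ) : SInu ((-1) ^ k) = (k : ZMod 2) := by
  rcases Nat.even_or_odd k with h | h
  · rw [h.neg_one_pow]
    rw [SInu_one]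
    symm
    rw [ZMod.natCast_eq_zero_iff]
    exact h.two_dvd
  · rw [h.neg_one_pow]
    have h1 : SInu (-1) = 1 := by simp [SInu]
    rw [h1]
    obtain ⟨m, rfl⟩ := h
    push_cast
    have h2 : (2 : ZMod 2) = 0 := by decide
    rw [h2]
    ring

lemma SIprod_one_add (s : Finset ℕ) (f : ℕ → ℤ) (h : ∀ p ∈ s, f p = 1 ∨ f p = -1) :
    (∏ p ∈ s, (1 + f p)) = if ∀ p ∈ s, f p = 1 then (2 : ℤ) ^ s.card else 0 := by
  by_cases hall : ∀ p ∈ s, f p = 1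
  · rw [if_pos hall]
    rw [Finset.prod_congr rfl (fun p hp => by rw [hall p hp]; norm_num : ∀ p ∈ s, (1 + f p) = 2)]
    rw [Finset.prod_const]
  · rw [if_neg hall]
    push_neg at hall
    obtain ⟨p, hp, hne⟩ := hall
    apply Finset.prod_eq_zero hp
    rcases h p hp with h1 | h1
    · exact absurd h1 hne
    · rw [h1]; ring

/-- The index type: primes dividing `D`. -/
abbrev SIdx (D : ℕ) := {p : ℕ // p ∈ D.primeFactors}

/-- Rédei-type matrix. -/
def SIMm (D : ℕ) : Matrix (SIdx D) (SIdx D) (ZMod 2) :=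
  Matrix.of fun p q => if p = q then 0 else SInu (jacobiSym ((q : ℕ) : ℤ) (p : ℕ))

def SIw (D : ℕ) (w : ℤ) : SIdx D → ZMod 2 := fun p => SInu (jacobiSym w (p : ℕ))

def SIr (D : ℕ) : SIdx D → ZMod 2 := fun p => ∑ q : SIdx D, SIMm D p q

def SIC (D : ℕ) (u' v' : ℤ) : Matrix (SIdx D) (SIdx D) (ZMod 2) :=
  SIMm D + Matrix.diagonal (fun p => SIw D u' p + SIr D p + SIw D v' p)

section facts
variable {D : ℕ}

lemma SIp_prime (p : SIdx D) : (p : ℕ).Prime := Nat.prime_of_mem_primeFactors p.2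

lemma SIp_dvd (p : SIdx D) : (p : ℕ) ∣ D := Nat.dvd_of_mem_primeFactors p.2

lemma SIp_odd (hD : Odd D) (p : SIdx D) : Odd (p : ℕ) := by
  apply (SIp_prime p).odd_of_ne_two
  intro h
  have h2 : 2 ∣ D := h ▸ SIp_dvd p
  rw [Nat.odd_iff] at hD
  omega

lemma SIp_coprime (hD : Odd D) {w : ℤ} (hw : IsCoprime w (D : ℤ)) (p : SIdx D) :
    IsCoprime w ((p : ℕ) : ℤ) :=
  hw.of_isCoprime_of_dvd_right (Int.natCast_dvd_natCast.mpr (SIp_dvd p))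

lemma SIp_coprime_nat {c : ℕ} (p : SIdx D) (hpc : ¬ (p : ℕ) ∣ c) :
    IsCoprime ((c : ℕ) : ℤ) ((p : ℕ) : ℤ) := by
  rw [Nat.isCoprime_iff_coprime]
  exact (((SIp_prime p).coprime_iff_not_dvd).mpr hpc).symm

lemma SIjac_pm {w : ℤ} (p : SIdx D) (h : IsCoprime w ((p : ℕ) : ℤ)) :
    jacobiSym w (p : ℕ) = 1 ∨ jacobiSym w (p : ℕ) = -1 :=
  jacobiSym.eq_one_or_neg_one (Int.isCoprime_iff_gcd_eq_one.mp h)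

end facts

lemma SIfilter_eq {D c : ℕ} (hD0 : D ≠ 0) (hc : c ∣ D) :
    D.primeFactors.filter (fun q => q ∣ c) = c.primeFactors := by
  ext q
  simp only [Finset.mem_filter, Nat.mem_primeFactors]
  constructor
  · rintro ⟨⟨hq, _, _⟩, hqc⟩
    exact ⟨hq, hqc, fun h => hD0 (by simpa [h] using hc)⟩
  · rintro ⟨hq, hqc, _⟩
    exact ⟨⟨hq, hqc.trans hc, hD0⟩, hqc⟩

/-- `J(·|p)` as a monoid hom. -/
def SIjacHom (p : ℕ) : ℤ →* ℤ where
  toFun a := jacobiSym a p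
  map_one' := jacobiSym.one_left p
  map_mul' a b := jacobiSym.mul_left a b p

lemma SIsum_eq {D : ℕ} (hD0 : D ≠ 0) (hsq : Squarefree D) (p : SIdx D) (c : ℕ)
    (hc : c ∣ D) (hpc : ¬ (p : ℕ) ∣ c) :
    (∑ q : SIdx D, if (q : ℕ) ∣ c then SIMm D p q else 0)
      = SInu (jacobiSym ((c : ℕ) : ℤ) (p : ℕ)) := by
  classical
  have hstep1 : ∀ q : SIdx D, (if (q : ℕ) ∣ c then SIMm D p q else 0)
      = (if (q : ℕ) ∣ c then SInu (jacobiSym ((q : ℕ) : ℤ) (p : ℕ)) else 0) := by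
    intro q
    by_cases hq : (q : ℕ) ∣ c
    · rw [if_pos hq, if_pos hq]
      have hne : p ≠ q := by
        intro h
        exact hpc (h ▸ hq)
      rw [SIMm]
      simp only [Matrix.of_apply]
      rw [if_neg hne]
    · rw [if_neg hq, if_neg hq]
  rw [Finset.sum_congr rfl (fun q _ => hstep1 q)]
  rw [Finset.univ_eq_attach]
  rw [Finset.sum_attach D.primeFactors
    (fun q => if q ∣ c then SInu (jacobiSym ((q : ℕ) : ℤ) (p : ℕ)) else 0)]
  rw [← Finset.sum_filter, SIfilter_eq hD0 hc]
  have hcsq : Squarefree c := hsq.squarefree_of_dvd hc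
  have hpm : ∀ q ∈ c.primeFactors, jacobiSym ((q : ℕ) : ℤ) (p : ℕ) = 1 ∨
      jacobiSym ((q : ℕ) : ℤ) (p : ℕ) = -1 := by
    intro q hq
    apply SIjac_pm p
    apply SIp_coprime_nat p
    intro hdvd
    have hq' := Nat.dvd_of_mem_primeFactors hq
    exact hpc ((((SIp_prime p).prime.dvd_of_dvd_pow (n := 1)) (by simpa using hdvd)).trans hq')
  rw [← SInu_prod _ _ hpm]
  congr 1
  have hmp : (∏ a ∈ c.primeFactors, jacobiSym ((a : ℕ) : ℤ) (p : ℕ))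
      = jacobiSym (((∏ a ∈ c.primeFactors, a : ℕ) : ℕ) : ℤ) (p : ℕ) := by
    rw [Nat.cast_prod]
    exact (map_prod (SIjacHom (p : ℕ)) (fun q => ((q : ℕ) : ℤ)) c.primeFactors).symm
  rw [hmp, Nat.prod_primeFactors_of_squarefree hcsq]

lemma SIeps_eq {D : ℕ} (hD : Odd D) (p : SIdx D) :
    SIw D (-1) p = (((p : ℕ) / 2 : ℕ) : ZMod 2) := by
  rw [SIw, jacobiSym.at_neg_one (SIp_odd hD p),
    ZMod.χ₄_eq_neg_one_pow (Nat.odd_iff.mp (SIp_odd hD p)), SInu_neg_one_pow]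

lemma SIrec {D : ℕ} (hD : Odd D) (p q : SIdx D) (hne : p ≠ q) :
    SInu (jacobiSym ((p : ℕ) : ℤ) (q : ℕ))
      = SInu (jacobiSym ((q : ℕ) : ℤ) (p : ℕ)) + SIw D (-1) p * SIw D (-1) q := by
  have hpq : ((p : ℕ) : ℤ).gcd ((q : ℕ) : ℤ) = 1 := by
    apply Int.isCoprime_iff_gcd_eq_one.mp
    apply SIp_coprime_nat q
    rw [Nat.prime_dvd_prime_iff_eq (SIp_prime q) (SIp_prime p)]
    intro h
    exact hne (Subtype.ext h.symm)
  have hqp : ((q : ℕ) : ℤ).gcd ((p : ℕ) : ℤ) = 1 := by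
    rw [Int.gcd_comm]; exact hpq
  have hQR := jacobiSym.quadratic_reciprocity (SIp_odd hD p) (SIp_odd hD q)
  have hpow : ((-1 : ℤ)) ^ ((p : ℕ) / 2 * ((q : ℕ) / 2)) = 1 ∨
      ((-1 : ℤ)) ^ ((p : ℕ) / 2 * ((q : ℕ) / 2)) = -1 := by
    rcases Nat.even_or_odd ((p : ℕ) / 2 * ((q : ℕ) / 2)) with h | h
    · left; exact h.neg_one_pow
    · right; exact h.neg_one_pow
  rw [hQR, SInu_mul hpow (jacobiSym.eq_one_or_neg_one hqp),
    SInu_neg_one_pow, SIeps_eq hD p, SIeps_eq hD q, Nat.cast_mul]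
  ring

lemma SIpoint {D : ℕ} (hD : Odd D) (hsq : Squarefree D) (hD0 : D ≠ 0)
    {u' v' : ℤ} (hu' : IsCoprime u' (D : ℤ)) (hv' : IsCoprime v' (D : ℤ))
    {a b : ℕ} (hab : a * b = D) (p : SIdx D) :
    ((SIC D u' v').mulVec (fun q : SIdx D => if (q : ℕ) ∣ a then 1 else 0)) p = SIw D u' p
      ↔ (if (p : ℕ) ∣ a then jacobiSym (v' * (b : ℕ)) (p : ℕ) = 1
         else jacobiSym (u' * (a : ℕ)) (p : ℕ) = 1) := by
  classical
  have hadvd : a ∣ D := ⟨b, hab.symm⟩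
  have hbdvd : b ∣ D := ⟨a, by rw [← hab, mul_comm]⟩
  have hcop : a.Coprime b := by
    have h2 := hsq
    rw [← hab] at h2
    exact (Nat.squarefree_mul_iff.mp h2).1
  have hdvd_or : ∀ q : SIdx D, (q : ℕ) ∣ a ∨ (q : ℕ) ∣ b := by
    intro q
    have : (q : ℕ) ∣ a * b := hab ▸ SIp_dvd q
    exact ((SIp_prime q).dvd_mul).mp this
  have hdvd_not : ∀ q : SIdx D, (q : ℕ) ∣ a → ¬ (q : ℕ) ∣ b := by
    intro q h1 h2
    have h3 := Nat.dvd_gcd h1 h2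
    rw [Nat.Coprime] at hcop
    rw [hcop] at h3
    exact (SIp_prime q).ne_one (Nat.dvd_one.mp h3)
  set x : SIdx D → ZMod 2 := fun q => if (q : ℕ) ∣ a then 1 else 0 with hx
  have hmv : ((SIC D u' v').mulVec x) p
      = (∑ q : SIdx D, if (q : ℕ) ∣ a then SIMm D p q else 0)
        + (SIw D u' p + SIr D p + SIw D v' p) * x p := by
    rw [SIC, Matrix.add_mulVec, Pi.add_apply, Matrix.mulVec_diagonal]
    congr 1
    show (SIMm D) p ⬝ᵥ x = _
    rw [dotProduct]
    apply Finset.sum_congr rfl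
    intro q _
    show SIMm D p q * (if (q : ℕ) ∣ a then (1 : ZMod 2) else 0) = _
    by_cases h : (q : ℕ) ∣ a
    · rw [if_pos h, if_pos h, mul_one]
    · rw [if_neg h, if_neg h, mul_zero]
  rw [hmv]
  by_cases hpa : (p : ℕ) ∣ a
  · rw [if_pos hpa]
    have hpb : ¬ (p : ℕ) ∣ b := hdvd_not p hpa
    have hxp : x p = 1 := by
      show (if (p : ℕ) ∣ a then (1 : ZMod 2) else 0) = 1
      exact if_pos hpa
    have hS2 : (∑ q : SIdx D, if (q : ℕ) ∣ b then SIMm D p q else 0)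
        = SInu (jacobiSym ((b : ℕ) : ℤ) (p : ℕ)) := SIsum_eq hD0 hsq p b hbdvd hpb
    have hsplit : SIr D p = (∑ q : SIdx D, if (q : ℕ) ∣ a then SIMm D p q else 0)
        + (∑ q : SIdx D, if (q : ℕ) ∣ b then SIMm D p q else 0) := by
      rw [SIr, ← Finset.sum_add_distrib]
      apply Finset.sum_congr rfl
      intro q _
      rcases hdvd_or q with h | h
      · rw [if_pos h, if_neg (hdvd_not q h), add_zero]
      · have h2 : ¬ (q : ℕ) ∣ a := fun h3 => hdvd_not q h3 h
        rw [if_neg h2, if_pos h, zero_add]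
    have hv'p : jacobiSym v' (p : ℕ) = 1 ∨ jacobiSym v' (p : ℕ) = -1 :=
      SIjac_pm p (SIp_coprime hD hv' p)
    have hbp : jacobiSym ((b : ℕ) : ℤ) (p : ℕ) = 1 ∨ jacobiSym ((b : ℕ) : ℤ) (p : ℕ) = -1 :=
      SIjac_pm p (SIp_coprime_nat p hpb)
    have hmulpm : jacobiSym (v' * (b : ℕ)) (p : ℕ) = 1 ∨
        jacobiSym (v' * (b : ℕ)) (p : ℕ) = -1 := by
      rw [jacobiSym.mul_left]
      rcases hv'p with h1 | h1 <;> rcases hbp with h2 | h2 <;> rw [h1, h2] <;> norm_num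
    rw [← SInu_eq_zero_iff hmulpm, jacobiSym.mul_left, SInu_mul hv'p hbp,
      show SInu (jacobiSym v' ((p : ℕ) : ℕ)) = SIw D v' p from rfl, ← hS2, hsplit, hxp]
    exact (by decide :
      ∀ s t w1 w2 : ZMod 2, (s + (w1 + (s + t) + w2) * 1 = w1 ↔ w2 + t = 0)) _ _ _ _
  · rw [if_neg hpa]
    have hxp : x p = 0 := by
      show (if (p : ℕ) ∣ a then (1 : ZMod 2) else 0) = 0
      exact if_neg hpa
    have hS1 : (∑ q : SIdx D, if (q : ℕ) ∣ a then SIMm D p q else 0)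
        = SInu (jacobiSym ((a : ℕ) : ℤ) (p : ℕ)) := SIsum_eq hD0 hsq p a hadvd hpa
    have hu'p : jacobiSym u' (p : ℕ) = 1 ∨ jacobiSym u' (p : ℕ) = -1 :=
      SIjac_pm p (SIp_coprime hD hu' p)
    have hap : jacobiSym ((a : ℕ) : ℤ) (p : ℕ) = 1 ∨ jacobiSym ((a : ℕ) : ℤ) (p : ℕ) = -1 :=
      SIjac_pm p (SIp_coprime_nat p hpa)
    have hmulpm : jacobiSym (u' * (a : ℕ)) (p : ℕ) = 1 ∨
        jacobiSym (u' * (a : ℕ)) (p : ℕ) = -1 := by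
      rw [jacobiSym.mul_left]
      rcases hu'p with h1 | h1 <;> rcases hap with h2 | h2 <;> rw [h1, h2] <;> norm_num
    rw [← SInu_eq_zero_iff hmulpm, jacobiSym.mul_left, SInu_mul hu'p hap,
      show SInu (jacobiSym u' ((p : ℕ) : ℕ)) = SIw D u' p from rfl, hS1, hxp]
    exact (by decide :
      ∀ s w1 r : ZMod 2, (s + r * 0 = w1 ↔ w1 + s = 0)) _ _ _

lemma SIkey {D : ℕ} (hD : Odd D) (hsq : Squarefree D) (hD0 : D ≠ 0)
    {u' v' : ℤ} (hu' : IsCoprime u' (D : ℤ)) (hv' : IsCoprime v' (D : ℤ))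
    {a : ℕ} (hdvd : a ∣ D) :
    ((SIC D u' v').mulVec (fun p : SIdx D => if (p : ℕ) ∣ a then 1 else 0) = SIw D u')
      ↔ ((∀ p ∈ (D / a).primeFactors, jacobiSym (u' * (a : ℕ)) p = 1)
          ∧ (∀ p ∈ a.primeFactors, jacobiSym (v' * ((D / a : ℕ) : ℕ)) p = 1)) := by
  have hab : a * (D / a) = D := Nat.mul_div_cancel' hdvd
  have ha0 : a ≠ 0 := by rintro rfl; simp at hab; exact hD0 hab.symm
  have hb0 : D / a ≠ 0 := by
    intro h; rw [h, mul_zero] at hab; exact hD0 hab.symm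
  have hcop : a.Coprime (D / a) := by
    have h2 := hsq
    rw [← hab] at h2
    exact (Nat.squarefree_mul_iff.mp h2).1
  have hpoint := fun p => SIpoint hD hsq hD0 hu' hv' hab p
  rw [funext_iff]
  constructor
  · intro h
    constructor
    · intro p hp
      have hpP : p ∈ D.primeFactors :=
        Nat.mem_primeFactors.mpr ⟨Nat.prime_of_mem_primeFactors hp,
          (Nat.dvd_of_mem_primeFactors hp).trans (Nat.div_dvd_of_dvd hdvd), hD0⟩
      have hnpa : ¬ p ∣ a := by
        intro hpa
        have h3 := Nat.dvd_gcd hpa (Nat.dvd_of_mem_primeFactors hp)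
        rw [Nat.Coprime] at hcop
        rw [hcop] at h3
        exact (Nat.prime_of_mem_primeFactors hp).ne_one (Nat.dvd_one.mp h3)
      have h4 := (hpoint ⟨p, hpP⟩).mp (h ⟨p, hpP⟩)
      rw [if_neg hnpa] at h4
      exact h4
    · intro p hp
      have hpa : p ∣ a := Nat.dvd_of_mem_primeFactors hp
      have hpP : p ∈ D.primeFactors :=
        Nat.mem_primeFactors.mpr ⟨Nat.prime_of_mem_primeFactors hp, hpa.trans hdvd, hD0⟩
      have h4 := (hpoint ⟨p, hpP⟩).mp (h ⟨p, hpP⟩)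
      rw [if_pos hpa] at h4
      exact h4
  · rintro ⟨h1, h2⟩ p
    apply (hpoint p).mpr
    by_cases hpa : (p : ℕ) ∣ a
    · rw [if_pos hpa]
      exact h2 (p : ℕ) (Nat.mem_primeFactors.mpr ⟨SIp_prime p, hpa, ha0⟩)
    · rw [if_neg hpa]
      apply h1 (p : ℕ)
      have hpb : (p : ℕ) ∣ D / a := by
        have h5 : (p : ℕ) ∣ a * (D / a) := by rw [hab]; exact SIp_dvd p
        exact ((SIp_prime p).dvd_mul.mp h5).resolve_left hpa
      exact Nat.mem_primeFactors.mpr ⟨SIp_prime p, hpb, hb0⟩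

lemma SIjdvd {D : ℕ} (hsq : Squarefree D) (x : SIdx D → ZMod 2) :
    (∏ p ∈ D.primeFactors.attach, (if x p = 1 then (p : ℕ) else 1)) ∣ D := by
  calc (∏ p ∈ D.primeFactors.attach, (if x p = 1 then (p : ℕ) else 1))
      ∣ ∏ p ∈ D.primeFactors.attach, (p : ℕ) := by
        apply Finset.prod_dvd_prod_of_dvd
        intro p _
        by_cases h : x p = 1
        · rw [if_pos h]
        · rw [if_neg h]; exact one_dvd _
    _ = ∏ p ∈ D.primeFactors, p := Finset.prod_attach D.primeFactors (fun p => p)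
    _ = D := Nat.prod_primeFactors_of_squarefree hsq

lemma SIij {D : ℕ} (x : SIdx D → ZMod 2) (p : SIdx D) :
    ((p : ℕ) ∣ (∏ q ∈ D.primeFactors.attach, (if x q = 1 then (q : ℕ) else 1))) ↔ x p = 1 := by
  constructor
  · intro h
    rcases (Prime.dvd_finset_prod_iff (SIp_prime p).prime _).mp h with ⟨q, _, hq⟩
    by_cases hxq : x q = 1
    · rw [if_pos hxq] at hq
      have : (p : ℕ) = (q : ℕ) :=
        (Nat.prime_dvd_prime_iff_eq (SIp_prime p) (SIp_prime q)).mp hq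
      rwa [show p = q from Subtype.ext this]
    · rw [if_neg hxq] at hq
      exact absurd (Nat.dvd_one.mp hq) (SIp_prime p).ne_one
  · intro h
    have h2 : (if x p = 1 then (p : ℕ) else 1)
        ∣ ∏ q ∈ D.primeFactors.attach, (if x q = 1 then (q : ℕ) else 1) :=
      Finset.dvd_prod_of_mem (fun q : SIdx D => if x q = 1 then (q : ℕ) else 1)
        (Finset.mem_attach D.primeFactors p)
    rwa [if_pos h] at h2

lemma SIji {D : ℕ} (hD0 : D ≠ 0) (hsq : Squarefree D) {a : ℕ} (hdvd : a ∣ D) :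
    (∏ p ∈ D.primeFactors.attach,
      (if (fun q : SIdx D => if (q : ℕ) ∣ a then (1 : ZMod 2) else 0) p = 1
        then (p : ℕ) else 1)) = a := by
  have h1 : (∏ p ∈ D.primeFactors.attach,
      (if (fun q : SIdx D => if (q : ℕ) ∣ a then (1 : ZMod 2) else 0) p = 1
        then (p : ℕ) else 1))
      = ∏ p ∈ D.primeFactors.attach, (if (p : ℕ) ∣ a then (p : ℕ) else 1) := by
    apply Finset.prod_congr rfl
    intro p _
    show (if (if (p : ℕ) ∣ a then (1 : ZMod 2) else 0) = 1 then (p : ℕ) else 1)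
        = (if (p : ℕ) ∣ a then (p : ℕ) else 1)
    by_cases h : (p : ℕ) ∣ a
    · simp only [if_pos h]
      rw [if_pos trivial]
    · simp only [if_neg h]
      rw [if_neg (by decide : ¬((0 : ZMod 2) = 1))]
  rw [h1, Finset.prod_attach D.primeFactors (fun p => if p ∣ a then p else 1),
    ← Finset.prod_filter, SIfilter_eq hD0 hdvd]
  exact Nat.prod_primeFactors_of_squarefree (hsq.squarefree_of_dvd hdvd)


lemma SIcop' {c p : ℕ} (hp : p.Prime) (hpc : ¬ p ∣ c) : IsCoprime ((c : ℕ) : ℤ) ((p : ℕ) : ℤ) :=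
  Nat.isCoprime_iff_coprime.mpr ((hp.coprime_iff_not_dvd.mpr hpc).symm)

lemma SIxj {D : ℕ} (x : SIdx D → ZMod 2) :
    (fun p : SIdx D => if (p : ℕ) ∣ (∏ q ∈ D.primeFactors.attach,
      (if x q = 1 then (q : ℕ) else 1)) then (1 : ZMod 2) else 0) = x := by
  funext p
  by_cases h : x p = 1
  · rw [if_pos ((SIij x p).mpr h), h]
  · rw [if_neg (fun hd => h ((SIij x p).mp hd))]
    exact ((SIzmod2 (x p)).resolve_right h).symm

lemma SIcount {D : ℕ} (hD : Odd D) (hsq : Squarefree D) (hpos : 0 < D)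
    (u' v' : ℤ) (hu' : IsCoprime u' (D : ℤ)) (hv' : IsCoprime v' (D : ℤ)) :
    Ssum D u' v' = (SIcnt (SIC D u' v') (SIw D u') : ℤ) * 2 ^ D.primeFactors.card := by
  classical
  have hD0 : D ≠ 0 := hpos.ne'
  have hterm : ∀ a ∈ D.divisors,
      (∏ p ∈ (D / a).primeFactors, (1 + jacobiSym (u' * a) p)) *
      (∏ p ∈ a.primeFactors, (1 + jacobiSym (v' * ((D : ℤ) / (a : ℤ))) p))
      = if ((∀ p ∈ (D / a).primeFactors, jacobiSym (u' * (a : ℕ)) p = 1)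
            ∧ (∀ p ∈ a.primeFactors, jacobiSym (v' * ((D / a : ℕ) : ℕ)) p = 1))
        then (2 : ℤ) ^ D.primeFactors.card else 0 := by
    intro a ha
    obtain ⟨hdvd, -⟩ := Nat.mem_divisors.mp ha
    rw [show ((D : ℤ) / (a : ℤ)) = ((D / a : ℕ) : ℤ) from (Int.natCast_ediv D a).symm]
    have hab : a * (D / a) = D := Nat.mul_div_cancel' hdvd
    have ha0 : a ≠ 0 := by rintro rfl; simp at hab; exact hD0 hab.symm
    have hb0 : D / a ≠ 0 := by intro h; rw [h, mul_zero] at hab; exact hD0 hab.symm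
    have hcop : a.Coprime (D / a) := by
      have h2 := hsq
      rw [← hab] at h2
      exact (Nat.squarefree_mul_iff.mp h2).1
    have hpmb : ∀ p ∈ (D / a).primeFactors, jacobiSym (u' * (a : ℕ)) p = 1 ∨
        jacobiSym (u' * (a : ℕ)) p = -1 := by
      intro p hp
      have hp' := Nat.prime_of_mem_primeFactors hp
      have hpD : p ∣ D := (Nat.dvd_of_mem_primeFactors hp).trans (Nat.div_dvd_of_dvd hdvd)
      have hnpa : ¬ p ∣ a := by
        intro hpa
        have h3 := Nat.dvd_gcd hpa (Nat.dvd_of_mem_primeFactors hp)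
        rw [Nat.Coprime] at hcop
        rw [hcop] at h3
        exact hp'.ne_one (Nat.dvd_one.mp h3)
      apply jacobiSym.eq_one_or_neg_one
      apply Int.isCoprime_iff_gcd_eq_one.mp
      exact IsCoprime.mul_left
        (hu'.of_isCoprime_of_dvd_right (Int.natCast_dvd_natCast.mpr hpD))
        (SIcop' hp' hnpa)
    have hpma : ∀ p ∈ a.primeFactors, jacobiSym (v' * ((D / a : ℕ) : ℕ)) p = 1 ∨
        jacobiSym (v' * ((D / a : ℕ) : ℕ)) p = -1 := by
      intro p hp
      have hp' := Nat.prime_of_mem_primeFactors hp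
      have hpD : p ∣ D := (Nat.dvd_of_mem_primeFactors hp).trans hdvd
      have hnpb : ¬ p ∣ D / a := by
        intro hpb
        have h3 := Nat.dvd_gcd (Nat.dvd_of_mem_primeFactors hp) hpb
        rw [Nat.Coprime] at hcop
        rw [hcop] at h3
        exact hp'.ne_one (Nat.dvd_one.mp h3)
      apply jacobiSym.eq_one_or_neg_one
      apply Int.isCoprime_iff_gcd_eq_one.mp
      exact IsCoprime.mul_left
        (hv'.of_isCoprime_of_dvd_right (Int.natCast_dvd_natCast.mpr hpD))
        (SIcop' hp' hnpb)
    rw [SIprod_one_add _ _ hpmb, SIprod_one_add _ _ hpma]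
    have hcard : (D / a).primeFactors.card + a.primeFactors.card = D.primeFactors.card := by
      conv_rhs => rw [← hab]
      rw [Nat.primeFactors_mul ha0 hb0,
        Finset.card_union_of_disjoint (Nat.Coprime.disjoint_primeFactors hcop)]
      omega
    by_cases h1 : ∀ p ∈ (D / a).primeFactors, jacobiSym (u' * (a : ℕ)) p = 1
    · by_cases h2 : ∀ p ∈ a.primeFactors, jacobiSym (v' * ((D / a : ℕ) : ℕ)) p = 1
      · rw [if_pos h1, if_pos h2, if_pos ⟨h1, h2⟩, ← pow_add, hcard]
      · rw [if_neg h2, mul_zero, eq_comm, ite_eq_right_iff]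
        intro hh
        exact absurd hh.2 h2
    · rw [if_neg h1, zero_mul, eq_comm, ite_eq_right_iff]
      intro hh
      exact absurd hh.1 h1
  have hcard2 : (D.divisors.filter (fun a =>
      (∀ p ∈ (D / a).primeFactors, jacobiSym (u' * (a : ℕ)) p = 1)
        ∧ (∀ p ∈ a.primeFactors, jacobiSym (v' * ((D / a : ℕ) : ℕ)) p = 1))).card
      = SIcnt (SIC D u' v') (SIw D u') := by
    unfold SIcnt
    apply Finset.card_bij'
      (fun a _ => fun p : SIdx D => if (p : ℕ) ∣ a then (1 : ZMod 2) else 0)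
      (fun x _ => ∏ p ∈ D.primeFactors.attach, (if x p = 1 then (p : ℕ) else 1))
    · intro a ha
      rw [Finset.mem_filter] at ha ⊢
      obtain ⟨hamem, hcond⟩ := ha
      exact ⟨Finset.mem_univ _,
        (SIkey hD hsq hD0 hu' hv' (Nat.mem_divisors.mp hamem).1).mpr hcond⟩
    · intro x hx
      rw [Finset.mem_filter] at hx ⊢
      have hjd := SIjdvd hsq x
      refine ⟨Nat.mem_divisors.mpr ⟨hjd, hD0⟩, ?_⟩
      apply (SIkey hD hsq hD0 hu' hv' hjd).mp
      rw [SIxj x]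
      exact hx.2
    · intro a ha
      exact SIji hD0 hsq (Nat.mem_divisors.mp (Finset.mem_filter.mp ha).1).1
    · intro x _
      exact SIxj x
  rw [Ssum, Finset.sum_congr rfl hterm, ← Finset.sum_filter, Finset.sum_const,
    nsmul_eq_mul, hcard2]

lemma SIw1 {D : ℕ} : SIw D 1 = 0 := by
  funext p
  show SInu (jacobiSym 1 (p : ℕ)) = 0
  rw [jacobiSym.one_left, SInu_one]

lemma SIwneg {D : ℕ} (hD : Odd D) {w : ℤ} (hw : IsCoprime w (D : ℤ)) :
    SIw D (-w) = SIw D w + SIw D (-1) := by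
  funext p
  show SInu (jacobiSym (-w) (p : ℕ)) = _
  have hm1 : jacobiSym (-1) (p : ℕ) = 1 ∨ jacobiSym (-1) (p : ℕ) = -1 :=
    SIjac_pm p (isCoprime_one_left.neg_left)
  have hwp : jacobiSym w (p : ℕ) = 1 ∨ jacobiSym w (p : ℕ) = -1 :=
    SIjac_pm p (SIp_coprime hD hw p)
  rw [show (-w) = (-1) * w by ring, jacobiSym.mul_left, SInu_mul hm1 hwp]
  show _ = SIw D w p + SIw D (-1) p
  rw [add_comm]
  rfl

lemma SIBA {D : ℕ} (u' : ℤ) :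
    SIC D u' (-1) = SIC D u' 1 + Matrix.diagonal (SIw D (-1)) := by
  rw [SIC, SIC, add_assoc, Matrix.diagonal_add]
  congr 1
  apply congrArg Matrix.diagonal
  funext p
  have h1 : SIw D 1 p = 0 := congrFun SIw1 p
  rw [h1]
  ring

lemma SIBeq {D : ℕ} (hD : Odd D) {u' : ℤ} (hu' : IsCoprime u' (D : ℤ)) :
    SIC D (-u') 1 = SIC D u' (-1) := by
  rw [SIC, SIC]
  congr 1
  apply congrArg Matrix.diagonal
  funext p
  have h1 : SIw D 1 p = 0 := congrFun SIw1 p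
  have h2 : SIw D (-u') p = SIw D u' p + SIw D (-1) p := congrFun (SIwneg hD hu') p
  rw [h1, h2]
  ring

lemma SIAT {D : ℕ} (hD : Odd D) (u' : ℤ) :
    (SIC D u' 1)ᵀ = SIC D u' (-1) + Matrix.vecMulVec (SIw D (-1)) (SIw D (-1)) := by
  ext i j
  rw [Matrix.transpose_apply, Matrix.add_apply, Matrix.vecMulVec_apply]
  rw [SIC, SIC, Matrix.add_apply, Matrix.add_apply]
  by_cases h : i = j
  · subst h
    rw [Matrix.diagonal_apply_eq, Matrix.diagonal_apply_eq]
    have h1 : SIw D 1 i = 0 := congrFun SIw1 i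
    rw [h1]
    have : ∀ m w r e : ZMod 2, m + (w + r + 0) = m + (w + r + e) + e * e := by decide
    exact this _ _ _ _
  · have h' : ¬ (j = i) := fun hh => h hh.symm
    rw [Matrix.diagonal_apply_ne _ h', Matrix.diagonal_apply_ne _ h]
    show SIMm D j i + 0 = SIMm D i j + 0 + _
    rw [add_zero, add_zero]
    have hji : SIMm D j i = SInu (jacobiSym ((i : ℕ) : ℤ) (j : ℕ)) := by
      rw [SIMm]
      show (if j = i then 0 else SInu (jacobiSym ((i : ℕ) : ℤ) (j : ℕ))) = _
      rw [if_neg h']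
    have hij : SIMm D i j = SInu (jacobiSym ((j : ℕ) : ℤ) (i : ℕ)) := by
      rw [SIMm]
      show (if i = j then 0 else SInu (jacobiSym ((j : ℕ) : ℤ) (i : ℕ))) = _
      rw [if_neg h]
    rw [hji, hij]
    exact SIrec hD i j h

lemma SImv_one {D : ℕ} (u' v' : ℤ) (p : SIdx D) :
    ((SIC D u' v').mulVec (fun _ => 1)) p
      = SIr D p + (SIw D u' p + SIr D p + SIw D v' p) := by
  rw [SIC, Matrix.add_mulVec, Pi.add_apply, Matrix.mulVec_diagonal, mul_one]
  congr 1
  show (SIMm D) p ⬝ᵥ (fun _ => 1) = SIr D p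
  rw [dotProduct, SIr]
  apply Finset.sum_congr rfl
  intro q _
  exact mul_one _

theorem Ssum_ineq (D : ℕ) (hD : Odd D) (hsq : Squarefree D) (hpos : 0 < D)
    (u : ℤ) (hu : IsCoprime u (D : ℤ)) :
    Ssum D u 1 ≤ Ssum D (-u) 1 + Ssum D u (-1) ∧
      Ssum D (-u) 1 + Ssum D u (-1) ≤ 2 * Ssum D u 1 := by
  classical
  set ε : SIdx D → ZMod 2 := SIw D (-1) with hε
  set A : Matrix (SIdx D) (SIdx D) (ZMod 2) := SIC D u 1 with hA
  set B : Matrix (SIdx D) (SIdx D) (ZMod 2) := SIC D u (-1) with hB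
  have hBA : B = A + Matrix.diagonal ε := SIBA u
  have hAT : Aᵀ = B + Matrix.vecMulVec ε ε := SIAT hD u
  have hone : IsCoprime (1 : ℤ) ((D : ℕ) : ℤ) := isCoprime_one_left
  have hm1 : IsCoprime (-1 : ℤ) ((D : ℕ) : ℤ) := isCoprime_one_left.neg_left
  have hA1 : A.mulVec (fun _ => 1) = SIw D u := by
    funext p
    rw [hA, SImv_one]
    have h1 : SIw D 1 p = 0 := congrFun SIw1 p
    rw [h1]
    have : ∀ r w : ZMod 2, r + (w + r + 0) = w := by decide
    exact this _ _
  have hB1 : B.mulVec (fun _ => 1) = SIw D u + ε := by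
    funext p
    rw [hB, SImv_one]
    show _ = SIw D u p + ε p
    have : ∀ r w e : ZMod 2, r + (w + r + e) = w + e := by decide
    exact this _ _ _
  have c1 : SIcnt A (SIw D u) = SIcnt A 0 := by
    have := SIcnt_shift A 0 (fun _ => 1)
    rwa [add_zero, hA1] at this
  have c2 : SIcnt B (SIw D (-u)) = SIcnt B 0 := by
    have := SIcnt_shift B 0 (fun _ => 1)
    rwa [add_zero, hB1, ← SIwneg hD hu] at this
  have c3 : SIcnt B (SIw D u) = SIcnt B ε := by
    have := SIcnt_shift B ε (fun _ => 1)
    rwa [hB1, add_assoc, SIvadd, add_zero] at this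
  have e1 : Ssum D u 1 = (SIcnt A 0 : ℤ) * 2 ^ D.primeFactors.card := by
    rw [SIcount hD hsq hpos u 1 hu hone, ← hA, c1]
  have e2 : Ssum D (-u) 1 = (SIcnt B 0 : ℤ) * 2 ^ D.primeFactors.card := by
    rw [SIcount hD hsq hpos (-u) 1 hu.neg_left hone, SIBeq hD hu, ← hB, c2]
  have e3 : Ssum D u (-1) = (SIcnt B ε : ℤ) * 2 ^ D.primeFactors.card := by
    rw [SIcount hD hsq hpos u (-1) hu hm1, ← hB, c3]
  obtain ⟨habs1, habs2⟩ := SIabs ε A B hBA hAT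
  have h2n : (0 : ℤ) ≤ 2 ^ D.primeFactors.card := by positivity
  constructor
  · rw [e1, e2, e3, ← add_mul]
    apply mul_le_mul_of_nonneg_right _ h2n
    exact_mod_cast habs1
  · rw [e1, e2, e3, ← add_mul]
    rw [show (2 : ℤ) * ((SIcnt A 0 : ℤ) * 2 ^ D.primeFactors.card)
      = ((2 * SIcnt A 0 : ℕ) : ℤ) * 2 ^ D.primeFactors.card by push_cast; ring]
    apply mul_le_mul_of_nonneg_right _ h2n
    exact_mod_cast habs2
end

section
/- Let D be a positive odd squarefree integer with prime divisors p₁ < ... < p_ω, and u, v integers coprime to D. Then E_D(u,v) equals the number of solutions (x₁,...,x_ω) ∈ 𝔽₂^ω of the affine system: for each i, (β_u(p_i) + β_v(p_i) + Σ_{j≠i} α(p_j,p_i))·x_i + Σ_{j≠i} α(p_j,p_i)·x_j = β_u(p_i), where α(m,n), β_w(n) ∈ 𝔽₂ are defined by J(m,n) = (-1)^{α(m,n)} and J(w,n) = (-1)^{β_w(n)}. -/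
open Finset

/-- `α(m,n) ∈ 𝔽₂` defined by `J(m,n) = (-1)^{α(m,n)}`. -/
def alphaF2 (m n : ℕ) : ZMod 2 := if jacobiSym (m : ℤ) n = 1 then 0 else 1

/-- `β_w(n) ∈ 𝔽₂` defined by `J(w,n) = (-1)^{β_w(n)}`. -/
def betaF2 (w : ℤ) (n : ℕ) : ZMod 2 := if jacobiSym w n = 1 then 0 else 1

def chi (q : ℕ) (m : ℤ) : ZMod 2 := if jacobiSym m q = 1 then 0 else 1

lemma chi_eq_zero_iff {q : ℕ} {m : ℤ} : chi q m = 0 ↔ jacobiSym m q = 1 := by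
  unfold chi; split_ifs with h <;> simp [h]

lemma chi_mul (q : ℕ) {m n : ℤ} (hm : jacobiSym m q ≠ 0) (hn : jacobiSym n q ≠ 0) :
    chi q (m * n) = chi q m + chi q n := by
  rcases jacobiSym.trichotomy m q with h1 | h1 | h1 <;>
  rcases jacobiSym.trichotomy n q with h2 | h2 | h2 <;>
    first
      | exact absurd h1 hm
      | exact absurd h2 hn
      | (unfold chi; rw [jacobiSym.mul_left, h1, h2]; decide)

lemma chi_prod (q : ℕ) (s : Finset ℕ) (h : ∀ r ∈ s, jacobiSym (r : ℤ) q ≠ 0) :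
    chi q (∏ r ∈ s, (r : ℤ)) = ∑ r ∈ s, chi q (r : ℤ) ∧
    jacobiSym (∏ r ∈ s, (r : ℤ)) q ≠ 0 := by
  classical
  induction s using Finset.induction_on with
  | empty => simp [chi, jacobiSym.one_left]
  | @insert a s ha ih =>
    have h' : ∀ r ∈ s, jacobiSym (r : ℤ) q ≠ 0 := fun r hr => h r (mem_insert_of_mem hr)
    obtain ⟨ih1, ih2⟩ := ih h'
    have ha' := h a (mem_insert_self a s)
    rw [prod_insert ha, sum_insert ha]
    constructor
    · rw [chi_mul q ha' ih2, ih1]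
    · rw [jacobiSym.mul_left]; exact mul_ne_zero ha' ih2

lemma isSquare_zmod_prime {p : ℕ} (hp : p.Prime) {m : ℤ} (hm : Int.gcd m p = 1) :
    IsSquare ((m : ZMod p)) ↔ jacobiSym m p = 1 := by
  haveI : Fact p.Prime := ⟨hp⟩
  constructor
  · intro hsq
    rcases jacobiSym.trichotomy m p with h | h | h
    · exact absurd h (jacobiSym.ne_zero hm)
    · exact h
    · exact absurd hsq (ZMod.nonsquare_of_jacobiSym_eq_neg_one h)
  · exact ZMod.isSquare_of_jacobiSym_eq_one

lemma isSquare_zmod_iff (m : ℤ) : ∀ (b : ℕ), Squarefree b → IsCoprime m (b : ℤ) →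
    (IsSquare ((m : ZMod b)) ↔ ∀ p ∈ b.primeFactors, jacobiSym m p = 1) := by
  intro b
  induction b using Nat.strong_induction_on with
  | _ b ih =>
    intro hsb hmb
    rcases eq_or_ne b 1 with rfl | hb1
    · refine ⟨fun _ => by simp, fun _ => ⟨0, Subsingleton.elim _ _⟩⟩
    have hb0 : b ≠ 0 := hsb.ne_zero
    obtain ⟨p, hpp, hpd⟩ : ∃ p, p.Prime ∧ p ∣ b := ⟨b.minFac, Nat.minFac_prime hb1, Nat.minFac_dvd b⟩
    obtain ⟨c, hc⟩ := hpd
    have hc0 : c ≠ 0 := by rintro rfl; simp at hc; exact hb0 hc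
    have hcop : p.Coprime c := by
      rw [hc] at hsb
      exact Nat.coprime_of_squarefree_mul hsb
    have hclt : c < b := by
      rw [hc]
      exact lt_mul_of_one_lt_left (Nat.pos_of_ne_zero hc0) hpp.one_lt |>.trans_eq rfl
    have hsc : Squarefree c := hsb.squarefree_of_dvd (⟨p, by rw [hc]; ring⟩ : c ∣ b)
    have hmc : IsCoprime m (c : ℤ) := hmb.of_isCoprime_of_dvd_right (Int.natCast_dvd_natCast.mpr (⟨p, by rw [hc]; ring⟩ : c ∣ b))
    have hmp : IsCoprime m (p : ℤ) := hmb.of_isCoprime_of_dvd_right (Int.natCast_dvd_natCast.mpr (⟨c, hc⟩ : p ∣ b))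
    have e := ZMod.chineseRemainder hcop
    have key : IsSquare ((m : ZMod b)) ↔ IsSquare ((m : ZMod p)) ∧ IsSquare ((m : ZMod c)) := by
      subst hc
      constructor
      · intro hs
        have := hs.map e.toRingHom.toMonoidHom
        rw [show e.toRingHom.toMonoidHom ((m : ZMod (p*c))) = ((m : ZMod p), (m : ZMod c)) by
          simp [map_intCast, Prod.ext_iff]] at this
        obtain ⟨⟨r1, r2⟩, hr⟩ := this
        exact ⟨⟨r1, congrArg Prod.fst hr⟩, ⟨r2, congrArg Prod.snd hr⟩⟩
      · rintro ⟨⟨r1, h1⟩, ⟨r2, h2⟩⟩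
        have : IsSquare (((m : ZMod p), (m : ZMod c)) : ZMod p × ZMod c) :=
          ⟨(r1, r2), by simp [Prod.ext_iff, h1, h2]⟩
        have := this.map e.symm.toRingHom.toMonoidHom
        rwa [show e.symm.toRingHom.toMonoidHom (((m : ZMod p), (m : ZMod c))) = (m : ZMod (p*c)) by
          rw [show (((m : ZMod p), (m : ZMod c)) : ZMod p × ZMod c) = ((m : ZMod p × ZMod c)) by
            simp [Prod.ext_iff]]
          simp [map_intCast, Prod.ext_iff]] at this
    rw [key, isSquare_zmod_prime hpp (Int.isCoprime_iff_gcd_eq_one.mp hmp),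
      ih c hclt hsc hmc, hc, Nat.primeFactors_mul hpp.ne_zero hc0]
    simp only [mem_union, hpp.primeFactors, mem_singleton]
    constructor
    · rintro ⟨h1, h2⟩ q (rfl | hq)
      · exact h1
      · exact h2 q hq
    · intro h
      exact ⟨h p (Or.inl rfl), fun q hq => h q (Or.inr hq)⟩

lemma exists_sq_iff (w : ℤ) (c : ℕ) (hc : 0 < c) :
    (∃ n : ℤ, w ≡ n ^ 2 [ZMOD (c : ℤ)]) ↔ IsSquare ((w : ZMod c)) := by
  haveI : NeZero c := ⟨hc.ne'⟩
  constructor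
  · rintro ⟨n, hn⟩
    refine ⟨(n : ZMod c), ?_⟩
    have := (ZMod.intCast_eq_intCast_iff _ _ _).mpr hn
    rw [this]; push_cast; ring
  · rintro ⟨r, hr⟩
    refine ⟨(r.val : ℤ), ?_⟩
    rw [← ZMod.intCast_eq_intCast_iff]
    push_cast
    rw [ZMod.natCast_val, ZMod.cast_id, hr]
    ring

lemma sum_ite_erase {M : Type*} [AddCommMonoid M] (s : Finset ℕ) (q : ℕ) (f : ℕ → M) :
    ∑ r ∈ s, (if r = q then 0 else f r) = ∑ r ∈ s.erase q, f r := by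
  rw [← Finset.sum_erase (a := q) s (f := fun r => if r = q then 0 else f r) (if_pos rfl)]
  exact Finset.sum_congr rfl (fun r hr => if_neg (Finset.ne_of_mem_erase hr))

lemma sum_subtype_ite (P : Finset ℕ) (g : ℕ → ZMod 2) (q : ↥P) :
    (∑ r : ↥P, (if r = q then 0 else g ↑r)) = ∑ r ∈ P.erase ↑q, g r := by
  rw [show (fun r : ↥P => if r = q then 0 else g ↑r)
      = (fun r : ↥P => (fun n : ℕ => if n = (q : ℕ) then 0 else g n) ↑r) from
    funext fun r => by exact if_congr Subtype.ext_iff rfl rfl]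
  rw [Finset.sum_coe_sort P (fun n => if n = (q : ℕ) then 0 else g n)]
  exact sum_ite_erase P q g

lemma sumA (P : Finset ℕ) (q : ↥P) (c : ℕ) :
    (∑ r : ↥P, if r = q then 0 else alphaF2 ↑r c) = ∑ r ∈ P.erase ↑q, alphaF2 r c :=
  sum_subtype_ite P (fun n => alphaF2 n c) q

lemma sumB (P : Finset ℕ) (q : ↥P) (c a : ℕ) :
    (∑ r : ↥P, if r = q then 0 else alphaF2 ↑r c * (if (r : ℕ) ∣ a then (1 : ZMod 2) else 0))
      = ∑ r ∈ P.erase ↑q, alphaF2 r c * (if r ∣ a then 1 else 0) :=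
  sum_subtype_ite P (fun n => alphaF2 n c * (if n ∣ a then 1 else 0)) q

lemma chi_jacobi_eq (q : ℕ) (w : ℤ) (c : ℕ) (hsc : Squarefree c)
    (hwq : jacobiSym w q ≠ 0) (hcq : ∀ r ∈ c.primeFactors, jacobiSym (r : ℤ) q ≠ 0) :
    chi q (w * c) = betaF2 w q + ∑ r ∈ c.primeFactors, alphaF2 r q := by
  have hc : ((c : ℤ)) = ∏ r ∈ c.primeFactors, (r : ℤ) := by
    rw [← Nat.cast_prod, Nat.prod_primeFactors_of_squarefree hsc]
  rw [hc, chi_mul q hwq (chi_prod q _ hcq).2, (chi_prod q _ hcq).1]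
  rfl

lemma eq_point (u v : ℤ) (D a b q : ℕ) (hD : Squarefree D) (hab : a * b = D)
    (hu : IsCoprime u (D : ℤ)) (hv : IsCoprime v (D : ℤ)) (hq : q ∈ D.primeFactors) :
    ((betaF2 u q + betaF2 v q + ∑ r ∈ D.primeFactors.erase q, alphaF2 r q) *
        (if q ∣ a then 1 else 0) +
      ∑ r ∈ D.primeFactors.erase q, alphaF2 r q * (if r ∣ a then 1 else 0) = betaF2 u q)
    ↔ (if q ∣ a then jacobiSym (v * b) q = 1 else jacobiSym (u * a) q = 1) := by
  classical
  obtain ⟨hqp, hqD, hD0⟩ := Nat.mem_primeFactors.mp hq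
  have ha0 : a ≠ 0 := fun h => hD0 (by rw [← hab, h, zero_mul])
  have hb0 : b ≠ 0 := fun h => hD0 (by rw [← hab, h, mul_zero])
  have hsab : Squarefree (a * b) := by rw [hab]; exact hD
  have hcop : a.Coprime b := Nat.coprime_of_squarefree_mul hsab
  have hsa : Squarefree a := hD.squarefree_of_dvd ⟨b, hab.symm⟩
  have hsb : Squarefree b := hD.squarefree_of_dvd ⟨a, by rw [← hab]; ring⟩
  have hPF : D.primeFactors = a.primeFactors ∪ b.primeFactors := by
    rw [← hab, Nat.primeFactors_mul ha0 hb0]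
  have hdisj : Disjoint a.primeFactors b.primeFactors := hcop.disjoint_primeFactors
  -- coprimality to q facts
  have hqZ : (q : ℤ) ∣ (D : ℤ) := Int.natCast_dvd_natCast.mpr hqD
  have huq : jacobiSym u q ≠ 0 :=
    jacobiSym.ne_zero (Int.isCoprime_iff_gcd_eq_one.mp (hu.of_isCoprime_of_dvd_right hqZ))
  have hvq : jacobiSym v q ≠ 0 :=
    jacobiSym.ne_zero (Int.isCoprime_iff_gcd_eq_one.mp (hv.of_isCoprime_of_dvd_right hqZ))
  have hprime_nq : ∀ r, r.Prime → r ≠ q → jacobiSym (r : ℤ) q ≠ 0 := by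
    intro r hrp hrq
    apply jacobiSym.ne_zero
    have : Nat.Coprime r q := (Nat.coprime_primes hrp hqp).mpr hrq
    simpa [Int.gcd_natCast_natCast] using this
  have hnot_dvd : ∀ r ∈ b.primeFactors, ¬ r ∣ a := by
    intro r hr hra
    obtain ⟨hrp, hrb, -⟩ := Nat.mem_primeFactors.mp hr
    have : r ∣ Nat.gcd a b := Nat.dvd_gcd hra hrb
    rw [hcop] at this
    exact hrp.ne_one (Nat.dvd_one.mp this)
  by_cases hqa : q ∣ a
  · have hqA : q ∈ a.primeFactors := Nat.mem_primeFactors.mpr ⟨hqp, hqa, ha0⟩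
    have hqB : q ∉ b.primeFactors := Finset.disjoint_left.mp hdisj hqA
    have hErase : D.primeFactors.erase q = (a.primeFactors.erase q) ∪ b.primeFactors := by
      rw [hPF, Finset.erase_union_distrib, Finset.erase_eq_of_notMem hqB]
    have hdisj' : Disjoint (a.primeFactors.erase q) b.primeFactors :=
      hdisj.mono_left (Finset.erase_subset _ _)
    have hsum1 : ∑ r ∈ D.primeFactors.erase q, alphaF2 r q
        = (∑ r ∈ a.primeFactors.erase q, alphaF2 r q)
          + ∑ r ∈ b.primeFactors, alphaF2 r q := by
      rw [hErase, Finset.sum_union hdisj']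
    have hsum2 : ∑ r ∈ D.primeFactors.erase q, alphaF2 r q * (if r ∣ a then 1 else 0)
        = ∑ r ∈ a.primeFactors.erase q, alphaF2 r q := by
      rw [hErase, Finset.sum_union hdisj']
      have e1 : ∑ r ∈ a.primeFactors.erase q, alphaF2 r q * (if r ∣ a then 1 else 0)
          = ∑ r ∈ a.primeFactors.erase q, alphaF2 r q := by
        refine Finset.sum_congr rfl fun r hr => ?_
        have : r ∣ a := (Nat.mem_primeFactors.mp (Finset.mem_of_mem_erase hr)).2.1
        rw [if_pos this, mul_one]
      have e2 : ∑ r ∈ b.primeFactors, alphaF2 r q * (if r ∣ a then 1 else 0) = 0 := by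
        refine Finset.sum_eq_zero fun r hr => ?_
        rw [if_neg (hnot_dvd r hr), mul_zero]
      rw [e1, e2, add_zero]
    have hchain : chi q (v * b) = betaF2 v q + ∑ r ∈ b.primeFactors, alphaF2 r q := by
      refine chi_jacobi_eq q v b hsb hvq fun r hr => ?_
      exact hprime_nq r (Nat.prime_of_mem_primeFactors hr) (fun h => hqB (h ▸ hr))
    rw [hsum1, hsum2, if_pos hqa, if_pos hqa]
    rw [show jacobiSym (v * b) q = 1 ↔ chi q (v * b) = 0 from chi_eq_zero_iff.symm, hchain]
    have helper : ∀ c d e1 e2 : ZMod 2,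
        ((c + d + (e1 + e2)) * 1 + e1 = c ↔ d + e2 = 0) := by decide
    exact helper _ _ _ _
  · have hqb : q ∣ b := by
      rcases (Nat.Prime.dvd_mul hqp).mp (hab ▸ hqD) with h | h
      · exact absurd h hqa
      · exact h
    have hqB : q ∈ b.primeFactors := Nat.mem_primeFactors.mpr ⟨hqp, hqb, hb0⟩
    have hqA : q ∉ a.primeFactors := fun h => Finset.disjoint_left.mp hdisj h hqB
    have hErase : D.primeFactors.erase q = a.primeFactors ∪ (b.primeFactors.erase q) := by
      rw [hPF, Finset.erase_union_distrib, Finset.erase_eq_of_notMem hqA]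
    have hdisj' : Disjoint a.primeFactors (b.primeFactors.erase q) :=
      hdisj.mono_right (Finset.erase_subset _ _)
    have hsum2 : ∑ r ∈ D.primeFactors.erase q, alphaF2 r q * (if r ∣ a then 1 else 0)
        = ∑ r ∈ a.primeFactors, alphaF2 r q := by
      rw [hErase, Finset.sum_union hdisj']
      have e1 : ∑ r ∈ a.primeFactors, alphaF2 r q * (if r ∣ a then 1 else 0)
          = ∑ r ∈ a.primeFactors, alphaF2 r q := by
        refine Finset.sum_congr rfl fun r hr => ?_
        rw [if_pos (Nat.mem_primeFactors.mp hr).2.1, mul_one]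
      have e2 : ∑ r ∈ b.primeFactors.erase q, alphaF2 r q * (if r ∣ a then 1 else 0) = 0 := by
        refine Finset.sum_eq_zero fun r hr => ?_
        rw [if_neg (hnot_dvd r (Finset.mem_of_mem_erase hr)), mul_zero]
      rw [e1, e2, add_zero]
    have hchain : chi q (u * a) = betaF2 u q + ∑ r ∈ a.primeFactors, alphaF2 r q := by
      refine chi_jacobi_eq q u a hsa huq fun r hr => ?_
      exact hprime_nq r (Nat.prime_of_mem_primeFactors hr) (fun h => hqA (h ▸ hr))
    rw [hsum2, if_neg hqa, if_neg hqa]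
    rw [show jacobiSym (u * a) q = 1 ↔ chi q (u * a) = 0 from chi_eq_zero_iff.symm, hchain]
    have helper : ∀ c d e : ZMod 2, (e * 0 + d = c ↔ c + d = 0) := by decide
    exact helper _ _ _

lemma cond_iff (D : ℕ) (hD : Squarefree D) (hpos : 0 < D) (u v : ℤ)
    (hu : IsCoprime u (D : ℤ)) (hv : IsCoprime v (D : ℤ)) (a : ℕ) (ha : a ∣ D) :
    (IsSquare ((u * (a : ℤ) : ℤ) : ZMod (D / a)) ∧
      IsSquare ((v * ((D / a : ℕ) : ℤ) : ℤ) : ZMod a)) ↔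
    ∀ q ∈ D.primeFactors,
      (if q ∣ a then jacobiSym (v * ((D / a : ℕ) : ℤ)) q = 1
        else jacobiSym (u * (a : ℤ)) q = 1) := by
  classical
  set b := D / a with hb
  have hab : a * b = D := Nat.mul_div_cancel' ha
  have hD0 : D ≠ 0 := hpos.ne'
  have ha0 : a ≠ 0 := fun h => hD0 (by rw [← hab, h, zero_mul])
  have hb0 : b ≠ 0 := fun h => hD0 (by rw [← hab, h, mul_zero])
  have hsa : Squarefree a := hD.squarefree_of_dvd ha
  have hsb : Squarefree b := hD.squarefree_of_dvd ⟨a, by rw [← hab]; ring⟩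
  have hcop : a.Coprime b := Nat.coprime_of_squarefree_mul (by rw [hab]; exact hD)
  have hbZ : (b : ℤ) ∣ (D : ℤ) := Int.natCast_dvd_natCast.mpr ⟨a, by rw [← hab]; ring⟩
  have haZ : (a : ℤ) ∣ (D : ℤ) := Int.natCast_dvd_natCast.mpr ha
  have hcop1 : IsCoprime (u * (a : ℤ)) (b : ℤ) :=
    IsCoprime.mul_left (hu.of_isCoprime_of_dvd_right hbZ) (Nat.isCoprime_iff_coprime.mpr hcop)
  have hcop2 : IsCoprime (v * (b : ℤ)) (a : ℤ) :=
    IsCoprime.mul_left (hv.of_isCoprime_of_dvd_right haZ)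
      (Nat.isCoprime_iff_coprime.mpr hcop.symm)
  rw [isSquare_zmod_iff _ b hsb hcop1, isSquare_zmod_iff _ a hsa hcop2]
  constructor
  · rintro ⟨h1, h2⟩ q hq
    obtain ⟨hqp, hqD, -⟩ := Nat.mem_primeFactors.mp hq
    by_cases hqa : q ∣ a
    · rw [if_pos hqa]
      exact h2 q (Nat.mem_primeFactors.mpr ⟨hqp, hqa, ha0⟩)
    · rw [if_neg hqa]
      have hqb : q ∣ b := by
        rcases (hqp.dvd_mul).mp (hab ▸ hqD) with h | h
        · exact absurd h hqa
        · exact h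
      exact h1 q (Nat.mem_primeFactors.mpr ⟨hqp, hqb, hb0⟩)
  · intro h
    constructor
    · intro q hq
      obtain ⟨hqp, hqb, -⟩ := Nat.mem_primeFactors.mp hq
      have hqD : q ∈ D.primeFactors := Nat.primeFactors_mono (⟨a, by rw [← hab]; ring⟩ : b ∣ D) hD0 hq
      have hqa : ¬ q ∣ a := by
        intro hqa
        have : q ∣ Nat.gcd a b := Nat.dvd_gcd hqa hqb
        rw [hcop] at this
        exact hqp.ne_one (Nat.dvd_one.mp this)
      have := h q hqD
      rwa [if_neg hqa] at this
    · intro q hq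
      obtain ⟨hqp, hqa, -⟩ := Nat.mem_primeFactors.mp hq
      have hqD : q ∈ D.primeFactors := Nat.primeFactors_mono ha hD0 hq
      have := h q hqD
      rwa [if_pos hqa] at this

open scoped Classical in
lemma Ecard_eq_filter (D : ℕ) (hpos : 0 < D) (u v : ℤ) :
    Ecard D u v = (D.divisors.filter (fun a =>
      IsSquare ((u * (a : ℤ) : ℤ) : ZMod (D / a)) ∧
      IsSquare ((v * ((D / a : ℕ) : ℤ) : ℤ) : ZMod a))).card := by
  classical
  unfold Ecard
  have hset : {p : ℕ × ℕ | 0 < p.1 ∧ 0 < p.2 ∧ p.1 * p.2 = D ∧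
      (∃ n : ℤ, u * p.1 ≡ n ^ 2 [ZMOD (p.2 : ℤ)]) ∧
      (∃ n : ℤ, v * p.2 ≡ n ^ 2 [ZMOD (p.1 : ℤ)])}
      = (fun a => (a, D / a)) '' ((D.divisors.filter (fun a =>
        IsSquare ((u * (a : ℤ) : ℤ) : ZMod (D / a)) ∧
        IsSquare ((v * ((D / a : ℕ) : ℤ) : ℤ) : ZMod a))) : Set ℕ) := by
    ext ⟨a, b⟩
    simp only [Set.mem_setOf_eq, Set.mem_image, Finset.coe_filter, Set.mem_setOf_eq,
      Nat.mem_divisors, Prod.mk.injEq]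
    constructor
    · rintro ⟨ha, hb, hab, h1, h2⟩
      have hb' : D / a = b := by rw [← hab, Nat.mul_div_cancel_left b ha]
      refine ⟨a, ⟨⟨⟨b, hab.symm⟩, hpos.ne'⟩, ?_, ?_⟩, rfl, hb'⟩
      · rw [hb']; exact (exists_sq_iff _ _ hb).mp h1
      · rw [hb']; exact (exists_sq_iff _ _ ha).mp h2
    · rintro ⟨a', ⟨⟨hdvd, hD0⟩, hc1, hc2⟩, rfl, rfl⟩
      have ha' : 0 < a' := Nat.pos_of_dvd_of_pos hdvd hpos
      have hb' : 0 < D / a' := Nat.div_pos (Nat.le_of_dvd hpos hdvd) ha'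
      refine ⟨ha', hb', Nat.mul_div_cancel' hdvd, ?_, ?_⟩
      · exact (exists_sq_iff _ _ hb').mpr hc1
      · exact (exists_sq_iff _ _ ha').mpr hc2
  rw [hset, Set.ncard_image_of_injOn (fun x _ y _ h => congrArg Prod.fst h),
    Set.ncard_coe_finset]

lemma zmod2_cases (x : ZMod 2) : x = 0 ∨ x = 1 := by revert x; decide

theorem Ecard_eq_affine_count (D : ℕ) (hD : Odd D) (hsq : Squarefree D) (hpos : 0 < D)
    (u v : ℤ) (hu : IsCoprime u (D : ℤ)) (hv : IsCoprime v (D : ℤ)) :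
    Ecard D u v = Nat.card {x : D.primeFactors → ZMod 2 //
      ∀ q : D.primeFactors,
        (betaF2 u q + betaF2 v q +
            ∑ r : D.primeFactors, if r = q then 0 else alphaF2 r q) * x q +
          (∑ r : D.primeFactors, if r = q then 0 else alphaF2 r q * x r) = betaF2 u q} := by
  classical
  rw [Ecard_eq_filter D hpos u v, Nat.card_eq_fintype_card, Fintype.card_subtype]
  have hD0 : D ≠ 0 := hpos.ne'
  -- the key pointwise bridge
  have key : ∀ (a : ℕ), a ∣ D →
      ((∀ q : D.primeFactors,
        (betaF2 u q + betaF2 v q +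
            ∑ r : D.primeFactors, if r = q then 0 else alphaF2 r q) *
            (if (q : ℕ) ∣ a then (1 : ZMod 2) else 0) +
          (∑ r : D.primeFactors, if r = q then 0 else alphaF2 r q *
            (if (r : ℕ) ∣ a then (1 : ZMod 2) else 0)) = betaF2 u q) ↔
      (IsSquare ((u * (a : ℤ) : ℤ) : ZMod (D / a)) ∧
        IsSquare ((v * ((D / a : ℕ) : ℤ) : ℤ) : ZMod a))) := by
    intro a ha
    have hab : a * (D / a) = D := Nat.mul_div_cancel' ha
    rw [cond_iff D hsq hpos u v hu hv a ha]
    constructor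
    · intro h q hq
      have := h ⟨q, hq⟩
      simp only [sumA, sumB] at this
      exact (eq_point u v D a (D / a) q hsq hab hu hv hq).mp this
    · intro h q
      simp only [sumA, sumB]
      exact (eq_point u v D a (D / a) (q : ℕ) hsq hab hu hv q.2).mpr (h (q : ℕ) q.2)
  refine Finset.card_bij
    (fun a _ => fun q : D.primeFactors => if (q : ℕ) ∣ a then (1 : ZMod 2) else 0) ?_ ?_ ?_
  · -- maps into the filter
    intro a ha
    rw [Finset.mem_filter] at ha ⊢
    obtain ⟨hamem, hcond⟩ := ha
    obtain ⟨hadvd, -⟩ := Nat.mem_divisors.mp hamem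
    exact ⟨Finset.mem_univ _, (key a hadvd).mpr hcond⟩
  · -- injective
    intro a1 h1 a2 h2 heq
    obtain ⟨ha1, -⟩ := Nat.mem_divisors.mp (Finset.mem_filter.mp h1).1
    obtain ⟨ha2, -⟩ := Nat.mem_divisors.mp (Finset.mem_filter.mp h2).1
    have ha10 : a1 ≠ 0 := ne_zero_of_dvd_ne_zero hD0 ha1
    have ha20 : a2 ≠ 0 := ne_zero_of_dvd_ne_zero hD0 ha2
    have hdq : ∀ q ∈ D.primeFactors, (q ∣ a1 ↔ q ∣ a2) := by
      intro q hq
      have := congrFun heq ⟨q, hq⟩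
      by_cases d1 : q ∣ a1 <;> by_cases d2 : q ∣ a2 <;>
        simp only [d1, d2, if_pos, if_neg, if_true, if_false] at this <;>
        first
          | exact iff_of_true d1 d2
          | exact iff_of_false d1 d2
          | exact absurd this one_ne_zero
          | exact absurd this.symm one_ne_zero
    have hpf : a1.primeFactors = a2.primeFactors := by
      ext q
      simp only [Nat.mem_primeFactors]
      constructor
      · rintro ⟨hp, hd, -⟩
        exact ⟨hp, (hdq q (Nat.primeFactors_mono ha1 hD0
          (Nat.mem_primeFactors.mpr ⟨hp, hd, ha10⟩))).mp hd, ha20⟩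
      · rintro ⟨hp, hd, -⟩
        exact ⟨hp, (hdq q (Nat.primeFactors_mono ha2 hD0
          (Nat.mem_primeFactors.mpr ⟨hp, hd, ha20⟩))).mpr hd, ha10⟩
    calc a1 = ∏ p ∈ a1.primeFactors, p :=
          (Nat.prod_primeFactors_of_squarefree (hsq.squarefree_of_dvd ha1)).symm
      _ = ∏ p ∈ a2.primeFactors, p := by rw [hpf]
      _ = a2 := Nat.prod_primeFactors_of_squarefree (hsq.squarefree_of_dvd ha2)
  · -- surjective
    intro x hx
    have haff := (Finset.mem_filter.mp hx).2
    set T : Finset ℕ :=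
      (Finset.univ.filter fun q : D.primeFactors => x q = 1).image Subtype.val with hT
    have hTP : T ⊆ D.primeFactors := by
      intro t ht
      simp only [hT, Finset.mem_image, Finset.mem_filter, Finset.mem_univ, true_and] at ht
      obtain ⟨q, -, rfl⟩ := ht
      exact q.2
    set a : ℕ := ∏ p ∈ T, p with haprod
    have hprimes : ∀ p ∈ T, p.Prime := fun p hp => Nat.prime_of_mem_primeFactors (hTP hp)
    have hadvd : a ∣ D := by
      have := Finset.prod_dvd_prod_of_subset T D.primeFactors (fun p => p) hTP
      rwa [Nat.prod_primeFactors_of_squarefree hsq] at this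
    have ha0 : a ≠ 0 := ne_zero_of_dvd_ne_zero hD0 hadvd
    have hapf : a.primeFactors = T := Nat.primeFactors_prod hprimes
    have hdvd_iff : ∀ (q : D.primeFactors), ((q : ℕ) ∣ a ↔ x q = 1) := by
      intro q
      have hqp : (q : ℕ).Prime := Nat.prime_of_mem_primeFactors q.2
      constructor
      · intro hd
        have : (q : ℕ) ∈ T := hapf ▸ Nat.mem_primeFactors.mpr ⟨hqp, hd, ha0⟩
        simp only [hT, Finset.mem_image, Finset.mem_filter, Finset.mem_univ, true_and] at this
        obtain ⟨r, hr, hrq⟩ := this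
        rwa [show r = q from Subtype.ext hrq] at hr
      · intro hx1
        have : (q : ℕ) ∈ T := by
          simp only [hT, Finset.mem_image, Finset.mem_filter, Finset.mem_univ, true_and]
          exact ⟨q, hx1, rfl⟩
        rw [← hapf] at this
        exact (Nat.mem_primeFactors.mp this).2.1
    have hxeq : (fun q : D.primeFactors => if (q : ℕ) ∣ a then (1 : ZMod 2) else 0) = x := by
      funext q
      rcases zmod2_cases (x q) with h0 | h1
      · rw [if_neg, h0]
        intro hd
        rw [(hdvd_iff q).mp hd] at h0
        exact one_ne_zero h0
      · rw [if_pos ((hdvd_iff q).mpr h1), h1]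
    refine ⟨a, ?_, hxeq⟩
    rw [Finset.mem_filter, Nat.mem_divisors]
    refine ⟨⟨hadvd, hD0⟩, ?_⟩
    apply (key a hadvd).mp
    simp only [← hxeq] at haff
    exact haff
end

section
/- Let D be a positive odd squarefree integer and u,v integers coprime to D. Then E_D(u,v), the number of pairs (a,b) with D = ab, ua a square mod b, and vb a square mod a, is either 0 or a power of 2. -/
open Finset

namespace EcardAux

/-- indicator of `t ≠ 1` in `ZMod 2`, a "logarithm" for `{1, -1}`. -/
def sgn (t : ℤ) : ZMod 2 := if t = 1 then 0 else 1

lemma sgn_mul {s t : ℤ} (hs : s = 1 ∨ s = -1) (ht : t = 1 ∨ t = -1) :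
    sgn (s * t) = sgn s + sgn t := by
  rcases hs with rfl | rfl <;> rcases ht with rfl | rfl <;> norm_num [sgn] <;> decide

lemma sgn_eq_zero {t : ℤ} (h : t = 1 ∨ t = -1) : sgn t = 0 ↔ t = 1 := by
  rcases h with rfl | rfl <;> norm_num [sgn]

lemma zmod2_cases (z : ZMod 2) : z = 0 ∨ z = 1 := by revert z; decide

lemma zmod2_add_eq_zero {a b : ZMod 2} : a + b = 0 ↔ a = b := by revert a b; decide

lemma prod_isSquare_iff {M N : Type*} [Monoid M] [Monoid N] (x : M) (y : N) :
    IsSquare (x, y) ↔ IsSquare x ∧ IsSquare y := by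
  constructor
  · rintro ⟨⟨c, d⟩, h⟩
    rw [Prod.mk_mul_mk, Prod.ext_iff] at h
    exact ⟨⟨c, h.1⟩, ⟨d, h.2⟩⟩
  · rintro ⟨⟨c, hc⟩, ⟨d, hd⟩⟩
    exact ⟨(c, d), by rw [Prod.mk_mul_mk, hc, hd]⟩

lemma isSquare_zmod_mul {m n : ℕ} (h : Nat.Coprime m n) (w : ℤ) :
    IsSquare (w : ZMod (m * n)) ↔ IsSquare (w : ZMod m) ∧ IsSquare (w : ZMod n) := by
  have e := ZMod.chineseRemainder h
  have he : e ((w : ZMod (m * n))) = ((w : ZMod m), (w : ZMod n)) := by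
    have h1 : e ((w : ZMod (m * n))) = ((w : ℤ) : ZMod m × ZMod n) :=
      map_intCast (e : ZMod (m * n) →+* ZMod m × ZMod n) w
    rw [h1]
    ext <;> simp
  constructor
  · intro hsq
    have h2 : IsSquare (e ((w : ZMod (m * n)))) := hsq.map e.toMonoidHom
    rw [he] at h2
    exact (prod_isSquare_iff _ _).mp h2
  · rintro ⟨h1, h2⟩
    have h3 : IsSquare ((w : ZMod m), (w : ZMod n)) := (prod_isSquare_iff _ _).mpr ⟨h1, h2⟩
    have h4 : IsSquare (e.symm ((w : ZMod m), (w : ZMod n))) := h3.map e.symm.toMonoidHom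
    rw [← he, RingEquiv.symm_apply_apply] at h4
    exact h4

end EcardAux

namespace EcardAux2
open EcardAux

lemma isSquare_zmod_iff_forall (b : ℕ) (hb : Squarefree b) (w : ℤ) :
    IsSquare (w : ZMod b) ↔ ∀ p ∈ b.primeFactors, IsSquare (w : ZMod p) := by
  induction b using Nat.strong_induction_on with
  | _ b ih =>
    rcases eq_or_ne b 1 with rfl | hb1
    · simp only [Nat.primeFactors_one, Finset.notMem_empty, false_implies, implies_true,
        iff_true]
      exact ⟨0, Subsingleton.elim _ _⟩
    · have hb0 : b ≠ 0 := hb.ne_zero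
      obtain ⟨p, hp, hpd⟩ := Nat.exists_prime_and_dvd hb1
      obtain ⟨c, rfl⟩ := hpd
      have hc0 : c ≠ 0 := by rintro rfl; simp at hb0
      have hp0 : p ≠ 0 := hp.ne_zero
      have hcop : Nat.Coprime p c := by
        rw [hp.coprime_iff_not_dvd]
        intro hd
        exact hp.one_lt.ne' (Nat.isUnit_iff.mp (hb p (mul_dvd_mul_left p hd)))
      have hc : Squarefree c := hb.squarefree_of_dvd (Dvd.intro_left p rfl)
      have hlt : c < p * c := lt_mul_iff_one_lt_left (Nat.pos_of_ne_zero hc0) |>.mpr hp.one_lt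
      rw [isSquare_zmod_mul hcop, ih c hlt hc, Nat.primeFactors_mul hp0 hc0,
        Nat.Prime.primeFactors hp]
      constructor
      · rintro ⟨h1, h2⟩ q hq
        rcases Finset.mem_union.mp hq with hq | hq
        · rw [Finset.mem_singleton.mp hq]; exact h1
        · exact h2 q hq
      · intro h
        exact ⟨h p (Finset.mem_union_left _ (Finset.mem_singleton_self p)),
          fun q hq => h q (Finset.mem_union_right _ hq)⟩

lemma exists_sq_iff {b : ℕ} (hb : Squarefree b) (w : ℤ) (hw : IsCoprime w (b : ℤ)) :
    (∃ n : ℤ, w ≡ n ^ 2 [ZMOD (b : ℤ)]) ↔ ∀ p ∈ b.primeFactors, jacobiSym w p = 1 := by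
  have h1 : (∃ n : ℤ, w ≡ n ^ 2 [ZMOD (b : ℤ)]) ↔ IsSquare (w : ZMod b) := by
    constructor
    · rintro ⟨n, hn⟩
      refine ⟨(n : ZMod b), ?_⟩
      have h2 := (ZMod.intCast_eq_intCast_iff _ _ _).mpr hn
      push_cast at h2
      rw [h2]; ring
    · rintro ⟨z, hz⟩
      obtain ⟨n, rfl⟩ := ZMod.intCast_surjective z
      refine ⟨n, (ZMod.intCast_eq_intCast_iff _ _ _).mp ?_⟩
      push_cast
      rw [hz]; ring
  rw [h1, isSquare_zmod_iff_forall b hb w]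
  refine forall₂_congr fun p hp => ?_
  obtain ⟨hp', hpd, -⟩ := Nat.mem_primeFactors.mp hp
  haveI : Fact p.Prime := ⟨hp'⟩
  have hnd : ¬ ((p : ℤ) ∣ w) := by
    intro hd
    have h3 := hw.isUnit_of_dvd' hd (Int.natCast_dvd_natCast.mpr hpd)
    rw [Int.isUnit_iff] at h3
    rcases h3 with h3 | h3
    · exact hp'.one_lt.ne' (by exact_mod_cast h3)
    · have h4 : (0 : ℤ) ≤ (p : ℤ) := Int.natCast_nonneg p
      omega
  rw [← jacobiSym.legendreSym.to_jacobiSym]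
  exact (legendreSym.eq_one_iff p (by rwa [Ne, ZMod.intCast_zmod_eq_zero_iff_dvd])).symm

lemma sgn_prod {p : ℕ} (hp : p.Prime) {s : Finset ℕ} (hs : ∀ q ∈ s, q.Prime ∧ q ≠ p) :
    sgn (jacobiSym ((∏ q ∈ s, q : ℕ) : ℤ) p) = ∑ q ∈ s, sgn (jacobiSym (q : ℤ) p) := by
  induction s using Finset.cons_induction with
  | empty => simp [sgn, jacobiSym.one_left]
  | cons q s hq ih =>
    have hmem : ∀ r ∈ s, r.Prime ∧ r ≠ p := fun r hr => hs r (Finset.mem_cons_of_mem hr)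
    have hq' := hs q (Finset.mem_cons_self q s)
    rw [Finset.prod_cons, Finset.sum_cons, ← ih hmem, Nat.cast_mul, jacobiSym.mul_left]
    have hgcd : ∀ r : ℕ, r.Prime → r ≠ p → Int.gcd (r : ℤ) (p : ℤ) = 1 := fun r hr hrp => by
      rw [Int.gcd_natCast_natCast]
      exact (Nat.coprime_primes hr hp).mpr hrp
    have h1 : jacobiSym (q : ℤ) p = 1 ∨ jacobiSym (q : ℤ) p = -1 :=
      jacobiSym.eq_one_or_neg_one (hgcd q hq'.1 hq'.2)
    have h2 : jacobiSym ((∏ r ∈ s, r : ℕ) : ℤ) p = 1 ∨ jacobiSym ((∏ r ∈ s, r : ℕ) : ℤ) p = -1 := by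
      refine jacobiSym.eq_one_or_neg_one ?_
      rw [Int.gcd_natCast_natCast]
      exact Nat.Coprime.prod_left (fun r hr => (Nat.coprime_primes (hmem r hr).1 hp).mpr (hmem r hr).2)
    rw [sgn_mul h1 h2]

lemma primeFactors_eq_filter {D a : ℕ} (hD : D ≠ 0) (ha : a ∣ D) :
    a.primeFactors = D.primeFactors.filter (· ∣ a) := by
  have ha0 : a ≠ 0 := by rintro rfl; exact hD (zero_dvd_iff.mp ha)
  ext q
  simp only [Finset.mem_filter, Nat.mem_primeFactors]
  exact ⟨fun ⟨hq, hqa, _⟩ => ⟨⟨hq, hqa.trans ha, hD⟩, hqa⟩,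
    fun ⟨⟨hq, _, _⟩, hqa⟩ => ⟨hq, hqa, ha0⟩⟩

lemma indicator_sum {D a : ℕ} (hD : D ≠ 0) (ha : a ∣ D) (f : ℕ → ZMod 2) :
    ∑ q ∈ D.primeFactors, (if q ∣ a then 1 else 0) * f q = ∑ q ∈ a.primeFactors, f q := by
  rw [primeFactors_eq_filter hD ha, Finset.sum_filter]
  refine Finset.sum_congr rfl fun q hq => ?_
  by_cases h : q ∣ a <;> simp [h]

def vec (D a : ℕ) : {q // q ∈ D.primeFactors} → ZMod 2 := fun q => if (q : ℕ) ∣ a then 1 else 0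

noncomputable def cvec (D : ℕ) (u : ℤ) : {q // q ∈ D.primeFactors} → ZMod 2 :=
  fun p => sgn (jacobiSym u (p : ℕ))

noncomputable def Fmap (D : ℕ) (u v : ℤ) :
    ({q // q ∈ D.primeFactors} → ZMod 2) →ₗ[ZMod 2] ({q // q ∈ D.primeFactors} → ZMod 2) where
  toFun x := fun p =>
    (∑ q : {q // q ∈ D.primeFactors}, x q * sgn (jacobiSym ((q : ℕ) : ℤ) (p : ℕ))) +
      x p * (sgn (jacobiSym u (p : ℕ)) + sgn (jacobiSym v (p : ℕ)) +
        ∑ q : {q // q ∈ D.primeFactors}, sgn (jacobiSym ((q : ℕ) : ℤ) (p : ℕ)))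
  map_add' x y := by
    funext p
    simp only [Pi.add_apply, add_mul, Finset.sum_add_distrib]
    ring
  map_smul' r x := by
    funext p
    simp only [Pi.smul_apply, smul_eq_mul, RingHom.id_apply, mul_add, Finset.mul_sum, mul_assoc]

end EcardAux2

namespace EcardAux3
open EcardAux EcardAux2

lemma vec_sum (D a : ℕ) (hD : D ≠ 0) (ha : a ∣ D) (f : ℕ → ZMod 2) :
    (∑ q : {q // q ∈ D.primeFactors}, vec D a q * f (q : ℕ)) = ∑ q ∈ a.primeFactors, f q := by
  have h1 : (∑ q : {q // q ∈ D.primeFactors}, vec D a q * f (q : ℕ))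
      = ∑ q ∈ D.primeFactors, (if q ∣ a then 1 else 0) * f q := by
    simp only [vec]
    exact (Finset.sum_subtype D.primeFactors (fun x => Iff.rfl)
      (fun q => (if q ∣ a then (1 : ZMod 2) else 0) * f q)).symm
  rw [h1, indicator_sum hD ha]

lemma subtype_sum (D : ℕ) (f : ℕ → ZMod 2) :
    (∑ q : {q // q ∈ D.primeFactors}, f (q : ℕ)) = ∑ q ∈ D.primeFactors, f q :=
  (Finset.sum_subtype D.primeFactors (fun x => Iff.rfl) f).symm

lemma cond_iff {D : ℕ} (hsq : Squarefree D) (hpos : 0 < D) {u v : ℤ}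
    (hu : IsCoprime u (D : ℤ)) (hv : IsCoprime v (D : ℤ)) {a : ℕ} (ha : a ∣ D) :
    ((∃ n : ℤ, u * (a : ℤ) ≡ n ^ 2 [ZMOD ((D / a : ℕ) : ℤ)]) ∧
      (∃ n : ℤ, v * ((D / a : ℕ) : ℤ) ≡ n ^ 2 [ZMOD (a : ℤ)])) ↔
      Fmap D u v (vec D a) = cvec D u := by
  have hD0 : D ≠ 0 := hpos.ne'
  set b := D / a with hbdef
  have hab : a * b = D := Nat.mul_div_cancel' ha
  have ha0 : a ≠ 0 := by rintro rfl; exact hD0 (zero_dvd_iff.mp ha)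
  have hb0 : b ≠ 0 := by
    intro h
    rw [h, mul_zero] at hab
    exact hD0 hab.symm
  have hsq' : Squarefree (a * b) := by rw [hab]; exact hsq
  have hcop : Nat.Coprime a b := (Nat.squarefree_mul_iff.mp hsq').1
  have hsa : Squarefree a := (Nat.squarefree_mul_iff.mp hsq').2.1
  have hsb : Squarefree b := (Nat.squarefree_mul_iff.mp hsq').2.2
  have hbD : b ∣ D := Dvd.intro_left a hab
  have hprime : ∀ q ∈ D.primeFactors, q.Prime := fun q hq => (Nat.mem_primeFactors.mp hq).1
  have hua : IsCoprime (u * (a : ℤ)) (b : ℤ) :=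
    IsCoprime.mul_left (hu.of_isCoprime_of_dvd_right (Int.natCast_dvd_natCast.mpr hbD))
      ((Nat.isCoprime_iff_coprime).mpr hcop)
  have hvb : IsCoprime (v * (b : ℤ)) (a : ℤ) :=
    IsCoprime.mul_left (hv.of_isCoprime_of_dvd_right (Int.natCast_dvd_natCast.mpr ha))
      ((Nat.isCoprime_iff_coprime).mpr hcop.symm)
  rw [exists_sq_iff hsb _ hua, exists_sq_iff hsa _ hvb, funext_iff]
  have hPF : D.primeFactors = a.primeFactors ∪ b.primeFactors := by
    rw [← hab]; exact Nat.primeFactors_mul ha0 hb0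
  have hdisj : Disjoint a.primeFactors b.primeFactors := Nat.Coprime.disjoint_primeFactors hcop
  have key : ∀ p : {q // q ∈ D.primeFactors},
      ((Fmap D u v (vec D a)) p = cvec D u p) ↔
        (if (p : ℕ) ∣ a then jacobiSym (v * (b : ℤ)) (p : ℕ) = 1
          else jacobiSym (u * (a : ℤ)) (p : ℕ) = 1) := by
    rintro ⟨p, hp⟩
    have hpp : p.Prime := hprime p hp
    have hpD : p ∣ D := (Nat.mem_primeFactors.mp hp).2.1
    have hpDZ : ((p : ℕ) : ℤ) ∣ (D : ℤ) := Int.natCast_dvd_natCast.mpr hpD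
    have hSa : (∑ q : {q // q ∈ D.primeFactors},
        vec D a q * sgn (jacobiSym ((q : ℕ) : ℤ) p))
        = ∑ q ∈ a.primeFactors, sgn (jacobiSym (q : ℤ) p) :=
      vec_sum D a hD0 ha (fun q => sgn (jacobiSym (q : ℤ) p))
    have hT : (∑ q : {q // q ∈ D.primeFactors}, sgn (jacobiSym ((q : ℕ) : ℤ) p))
        = (∑ q ∈ a.primeFactors, sgn (jacobiSym (q : ℤ) p))
          + ∑ q ∈ b.primeFactors, sgn (jacobiSym (q : ℤ) p) := by
      rw [subtype_sum D (fun q => sgn (jacobiSym (q : ℤ) p)), hPF, Finset.sum_union hdisj]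
    have hju : jacobiSym u p = 1 ∨ jacobiSym u p = -1 :=
      jacobiSym.eq_one_or_neg_one (Int.isCoprime_iff_gcd_eq_one.mp
        (hu.of_isCoprime_of_dvd_right hpDZ))
    have hjv : jacobiSym v p = 1 ∨ jacobiSym v p = -1 :=
      jacobiSym.eq_one_or_neg_one (Int.isCoprime_iff_gcd_eq_one.mp
        (hv.of_isCoprime_of_dvd_right hpDZ))
    by_cases hpa : p ∣ a
    · rw [if_pos hpa]
      have hxp : vec D a ⟨p, hp⟩ = 1 := by simp [vec, hpa]
      have hpb : ¬ p ∣ b := fun hd =>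
        hpp.one_lt.ne' (Nat.eq_one_of_dvd_coprimes hcop hpa hd)
      have hSb : sgn (jacobiSym (b : ℤ) p) = ∑ q ∈ b.primeFactors, sgn (jacobiSym (q : ℤ) p) := by
        have h5 := sgn_prod hpp (s := b.primeFactors) (fun q hq => ⟨(Nat.mem_primeFactors.mp hq).1,
          fun hqp => hpb (hqp ▸ (Nat.mem_primeFactors.mp hq).2.1)⟩)
        rwa [Nat.prod_primeFactors_of_squarefree hsb] at h5
      have hjb : jacobiSym (b : ℤ) p = 1 ∨ jacobiSym (b : ℤ) p = -1 := by
        refine jacobiSym.eq_one_or_neg_one ?_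
        rw [Int.gcd_natCast_natCast]
        exact ((hpp.coprime_iff_not_dvd).mpr hpb).symm
      have hjvb : jacobiSym (v * (b : ℤ)) p = 1 ∨ jacobiSym (v * (b : ℤ)) p = -1 := by
        refine jacobiSym.eq_one_or_neg_one (Int.isCoprime_iff_gcd_eq_one.mp ?_)
        exact hvb.of_isCoprime_of_dvd_right (Int.natCast_dvd_natCast.mpr hpa)
      have hval : (Fmap D u v (vec D a)) ⟨p, hp⟩ =
          sgn (jacobiSym u p) + (sgn (jacobiSym v p) + sgn (jacobiSym (b : ℤ) p)) := by
        show (∑ q : {q // q ∈ D.primeFactors}, vec D a q * sgn (jacobiSym ((q : ℕ) : ℤ) p)) +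
          vec D a ⟨p, hp⟩ * (sgn (jacobiSym u p) + sgn (jacobiSym v p) +
            ∑ q : {q // q ∈ D.primeFactors}, sgn (jacobiSym ((q : ℕ) : ℤ) p)) = _
        rw [hSa, hT, hxp, one_mul, hSb]
        linear_combination
          (CharTwo.add_self_eq_zero (∑ q ∈ a.primeFactors, sgn (jacobiSym (q : ℤ) p)))
      rw [hval]
      show _ = sgn (jacobiSym u p) ↔ _
      rw [add_eq_left, ← sgn_mul hjv hjb, ← jacobiSym.mul_left]
      exact sgn_eq_zero hjvb
    · rw [if_neg hpa]
      have hxp : vec D a ⟨p, hp⟩ = 0 := by simp [vec, hpa]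
      have hSa' : sgn (jacobiSym (a : ℤ) p) = ∑ q ∈ a.primeFactors, sgn (jacobiSym (q : ℤ) p) := by
        have h5 := sgn_prod hpp (s := a.primeFactors) (fun q hq => ⟨(Nat.mem_primeFactors.mp hq).1,
          fun hqp => hpa (hqp ▸ (Nat.mem_primeFactors.mp hq).2.1)⟩)
        rwa [Nat.prod_primeFactors_of_squarefree hsa] at h5
      have hja : jacobiSym (a : ℤ) p = 1 ∨ jacobiSym (a : ℤ) p = -1 := by
        refine jacobiSym.eq_one_or_neg_one ?_
        rw [Int.gcd_natCast_natCast]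
        exact ((hpp.coprime_iff_not_dvd).mpr hpa).symm
      have hjua : jacobiSym (u * (a : ℤ)) p = 1 ∨ jacobiSym (u * (a : ℤ)) p = -1 := by
        refine jacobiSym.eq_one_or_neg_one (Int.isCoprime_iff_gcd_eq_one.mp ?_)
        refine hua.of_isCoprime_of_dvd_right (Int.natCast_dvd_natCast.mpr ?_)
        rcases hpp.dvd_mul.mp (by rw [hab]; exact hpD) with h | h
        · exact absurd h hpa
        · exact h
      have hval : (Fmap D u v (vec D a)) ⟨p, hp⟩ = sgn (jacobiSym (a : ℤ) p) := by
        show (∑ q : {q // q ∈ D.primeFactors}, vec D a q * sgn (jacobiSym ((q : ℕ) : ℤ) p)) +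
          vec D a ⟨p, hp⟩ * (sgn (jacobiSym u p) + sgn (jacobiSym v p) +
            ∑ q : {q // q ∈ D.primeFactors}, sgn (jacobiSym ((q : ℕ) : ℤ) p)) = _
        rw [hSa, hxp, zero_mul, add_zero, hSa']
      rw [hval]
      show _ = sgn (jacobiSym u p) ↔ _
      rw [show (jacobiSym (u * (a : ℤ)) p = 1) ↔ sgn (jacobiSym (u * (a : ℤ)) p) = 0 from
        (sgn_eq_zero hjua).symm, jacobiSym.mul_left, sgn_mul hju hja, zmod2_add_eq_zero]
      exact eq_comm
  constructor
  · rintro ⟨h1, h2⟩ ⟨p, hp⟩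
    rw [key ⟨p, hp⟩]
    by_cases hpa : p ∣ a
    · rw [if_pos hpa]
      exact h2 p (Nat.mem_primeFactors.mpr ⟨hprime p hp, hpa, ha0⟩)
    · rw [if_neg hpa]
      have hpb : p ∣ b := by
        rcases (hprime p hp).dvd_mul.mp
          (by rw [hab]; exact (Nat.mem_primeFactors.mp hp).2.1) with h | h
        · exact absurd h hpa
        · exact h
      exact h1 p (Nat.mem_primeFactors.mpr ⟨hprime p hp, hpb, hb0⟩)
  · intro h
    constructor
    · intro p hp
      have hpD : p ∈ D.primeFactors := by rw [hPF]; exact Finset.mem_union_right _ hp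
      have h3 := (key ⟨p, hpD⟩).mp (h ⟨p, hpD⟩)
      have hpa : ¬ p ∣ a := by
        intro hd
        exact Finset.disjoint_left.mp hdisj
          (Nat.mem_primeFactors.mpr ⟨(Nat.mem_primeFactors.mp hp).1, hd, ha0⟩) hp
      rwa [if_neg hpa] at h3
    · intro p hp
      have hpD : p ∈ D.primeFactors := by rw [hPF]; exact Finset.mem_union_left _ hp
      have h3 := (key ⟨p, hpD⟩).mp (h ⟨p, hpD⟩)
      rwa [if_pos (Nat.mem_primeFactors.mp hp).2.1] at h3

end EcardAux3

theorem Ecard_zero_or_two_pow (D : ℕ) (hD : Odd D) (hsq : Squarefree D) (hpos : 0 < D)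
    (u v : ℤ) (hu : IsCoprime u (D : ℤ)) (hv : IsCoprime v (D : ℤ)) :
    Ecard D u v = 0 ∨ ∃ k : ℕ, Ecard D u v = 2 ^ k := by
  classical
  have hD0 : D ≠ 0 := hpos.ne'
  haveI : Fact (Nat.Prime 2) := ⟨Nat.prime_two⟩
  set F := EcardAux2.Fmap D u v with hF
  set c := EcardAux2.cvec D u with hc
  set A : Set ℕ := {a | a ∣ D ∧ F (EcardAux2.vec D a) = c} with hA
  have h1 : Ecard D u v = A.ncard := by
    have himg : {p : ℕ × ℕ | 0 < p.1 ∧ 0 < p.2 ∧ p.1 * p.2 = D ∧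
        (∃ n : ℤ, u * p.1 ≡ n ^ 2 [ZMOD (p.2 : ℤ)]) ∧
        (∃ n : ℤ, v * p.2 ≡ n ^ 2 [ZMOD (p.1 : ℤ)])} = (fun a => (a, D / a)) '' A := by
      ext ⟨a, b⟩
      simp only [Set.mem_setOf_eq, Set.mem_image, hA]
      constructor
      · rintro ⟨ha1, hb1, hab, h1c, h2c⟩
        have haD : a ∣ D := ⟨b, hab.symm⟩
        have hbd : b = D / a := by rw [← hab, Nat.mul_div_cancel_left _ ha1]
        subst hbd
        exact ⟨a, ⟨haD, (EcardAux3.cond_iff hsq hpos hu hv haD).mp ⟨h1c, h2c⟩⟩, rfl⟩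
      · rintro ⟨a', ⟨ha', hcond⟩, heq⟩
        obtain ⟨rfl, rfl⟩ : a' = a ∧ D / a' = b := Prod.mk.injEq .. ▸ heq
        have ha1 : 0 < a' := Nat.pos_of_ne_zero (by rintro rfl; exact hD0 (zero_dvd_iff.mp ha'))
        have hcnd := (EcardAux3.cond_iff hsq hpos hu hv ha').mpr hcond
        exact ⟨ha1, Nat.div_pos (Nat.le_of_dvd hpos ha') ha1, Nat.mul_div_cancel' ha',
          hcnd.1, hcnd.2⟩
    rw [Ecard, himg, Set.ncard_image_of_injective _
      (fun x y h => by simpa using congrArg Prod.fst h)]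
  have hinj : Set.InjOn (EcardAux2.vec D) A := by
    rintro a ⟨ha, -⟩ a' ⟨ha', -⟩ hvec
    have hfa : ∀ q ∈ D.primeFactors, (q ∣ a ↔ q ∣ a') := by
      intro q hq
      have := congrFun hvec ⟨q, hq⟩
      simp only [EcardAux2.vec] at this
      constructor
      · intro hqa
        by_contra hqa'
        rw [if_pos hqa, if_neg hqa'] at this
        exact one_ne_zero this
      · intro hqa'
        by_contra hqa
        rw [if_neg hqa, if_pos hqa'] at this
        exact one_ne_zero this.symm
    have hsa : Squarefree a := hsq.squarefree_of_dvd ha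
    have hsa' : Squarefree a' := hsq.squarefree_of_dvd ha'
    rw [← Nat.prod_primeFactors_of_squarefree hsa, ← Nat.prod_primeFactors_of_squarefree hsa',
      EcardAux2.primeFactors_eq_filter hD0 ha, EcardAux2.primeFactors_eq_filter hD0 ha']
    refine Finset.prod_congr (Finset.filter_congr ?_) (fun _ _ => rfl)
    intro q hq
    simp only [hfa q hq]
  have h2 : A.ncard = {x : {q // q ∈ D.primeFactors} → ZMod 2 | F x = c}.ncard := by
    have himg : {x : {q // q ∈ D.primeFactors} → ZMod 2 | F x = c} = EcardAux2.vec D '' A := by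
      ext x
      simp only [Set.mem_setOf_eq, Set.mem_image, hA]
      constructor
      · intro hx
        set t := Finset.univ.filter (fun q : {q // q ∈ D.primeFactors} => x q = 1) with ht
        set a := ∏ q ∈ t, (q : ℕ) with hadef
        have haD : a ∣ D := by
          calc a ∣ ∏ q : {q // q ∈ D.primeFactors}, (q : ℕ) :=
                Finset.prod_dvd_prod_of_subset t Finset.univ _ (Finset.subset_univ t)
          _ = D := by
                rw [Finset.prod_coe_sort D.primeFactors (fun q => q)]
                exact Nat.prod_primeFactors_of_squarefree hsq
        have hvec : EcardAux2.vec D a = x := by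
          funext p
          have hdvd : (p : ℕ) ∣ a ↔ p ∈ t := by
            constructor
            · intro hd
              obtain ⟨q, hq, hdq⟩ :=
                (Prime.dvd_finset_prod_iff ((Nat.mem_primeFactors.mp p.2).1.prime) _).mp hd
              have : (p : ℕ) = (q : ℕ) :=
                (Nat.prime_dvd_prime_iff_eq (Nat.mem_primeFactors.mp p.2).1
                  (Nat.mem_primeFactors.mp q.2).1).mp hdq
              exact (Subtype.ext this) ▸ hq
            · intro hmem
              exact Finset.dvd_prod_of_mem _ hmem
          simp only [EcardAux2.vec]
          by_cases hm : p ∈ t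
          · rw [if_pos (hdvd.mpr hm)]
            exact ((Finset.mem_filter.mp hm).2).symm
          · rw [if_neg (fun hd => hm (hdvd.mp hd))]
            rcases EcardAux.zmod2_cases (x p) with h | h
            · exact h.symm
            · exact absurd (by rw [ht]; exact Finset.mem_filter.mpr ⟨Finset.mem_univ p, h⟩) hm
        exact ⟨a, ⟨haD, by rw [hvec]; exact hx⟩, hvec⟩
      · rintro ⟨a, ⟨ha, hcond⟩, rfl⟩
        exact hcond
    rw [himg, Set.ncard_image_of_injOn hinj]
  rcases Set.eq_empty_or_nonempty {x : {q // q ∈ D.primeFactors} → ZMod 2 | F x = c}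
    with he | ⟨x0, hx0⟩
  · left
    rw [h1, h2, he, Set.ncard_empty]
  · right
    have hx0' : F x0 = c := hx0
    have hfib : {x : {q // q ∈ D.primeFactors} → ZMod 2 | F x = c}
        = (fun k => x0 + k) '' ((LinearMap.ker F : Submodule (ZMod 2) _) : Set _) := by
      ext y
      simp only [Set.mem_setOf_eq, Set.mem_image, SetLike.mem_coe, LinearMap.mem_ker]
      constructor
      · intro hy
        exact ⟨y - x0, by rw [map_sub, hy, hx0', sub_self], by ring⟩
      · rintro ⟨k, hk, rfl⟩
        rw [map_add, hk, hx0', add_zero]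
    haveI : Fintype ↥(LinearMap.ker F) := Fintype.ofFinite _
    refine ⟨Module.finrank (ZMod 2) ↥(LinearMap.ker F), ?_⟩
    rw [h1, h2, hfib, Set.ncard_image_of_injective _ (add_right_injective x0),
      ← Nat.card_coe_set_eq, SetLike.coe_sort_coe, Nat.card_eq_fintype_card]
    have := Module.card_eq_pow_finrank (K := ZMod 2) (V := ↥(LinearMap.ker F))
    rw [ZMod.card 2] at this
    rw [this]
end

section
/- Let D be a positive odd squarefree integer. Then S_D(1,1) ≠ 0, and either S_D(2,2) = 0 or S_D(2,2) = S_D(1,1), where S_D(u,v) = Σ_{ab=D} Π_{p|b}(1 + J(ua,p)) Π_{p|a}(1 + J(vb,p)). -/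
open Finset

namespace SsumAux

open scoped symmDiff

/-- product of a finset of naturals -/
def pr (S : Finset ℕ) : ℕ := ∏ p ∈ S, p

/-- The solvability condition for a subset `S` of the prime factors `P`. -/
def cond (P : Finset ℕ) (u : ℤ) (S : Finset ℕ) : Prop :=
  (∀ p ∈ P \ S, jacobiSym (u * (pr S : ℤ)) p = 1) ∧
  (∀ p ∈ S, jacobiSym (u * (pr (P \ S) : ℤ)) p = 1)

lemma pr_mul_pr (S T : Finset ℕ) : pr S * pr T = pr (S ∆ T) * pr (S ∩ T) ^ 2 := by
  unfold pr
  have hS : ∏ p ∈ S, p = (∏ p ∈ S \ T, p) * ∏ p ∈ S ∩ T, p := by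
    rw [← Finset.prod_union (Finset.disjoint_sdiff_inter S T), Finset.sdiff_union_inter]
  have hT : ∏ p ∈ T, p = (∏ p ∈ T \ S, p) * ∏ p ∈ T ∩ S, p := by
    rw [← Finset.prod_union (Finset.disjoint_sdiff_inter T S), Finset.sdiff_union_inter]
  have hST : ∏ p ∈ S ∆ T, p = (∏ p ∈ S \ T, p) * ∏ p ∈ T \ S, p := by
    rw [symmDiff_def, Finset.sup_eq_union, Finset.prod_union disjoint_sdiff_sdiff]
  rw [hS, hT, hST, Finset.inter_comm T S]
  ring

lemma core {P : Finset ℕ} (hP : ∀ p ∈ P, p.Prime) {u v : ℤ} {S T : Finset ℕ}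
    (hS : S ⊆ P) (hT : T ⊆ P) {p : ℕ} (hpp : p.Prime) (hpS : p ∉ S) (hpT : p ∉ T) :
    jacobiSym (u * (pr S : ℤ)) p * jacobiSym (v * (pr T : ℤ)) p
      = jacobiSym (u * v * (pr (S ∆ T) : ℤ)) p := by
  have hcop : Nat.Coprime (pr (S ∩ T)) p := by
    apply Nat.Coprime.prod_left
    intro q hq
    exact (Nat.coprime_primes (hP q (hS (Finset.mem_inter.1 hq).1)) hpp).2
      (fun h => hpS (h ▸ (Finset.mem_inter.1 hq).1))
  have hnat : (pr S : ℤ) * (pr T : ℤ) = (pr (S ∆ T) : ℤ) * (pr (S ∩ T) : ℤ) ^ 2 := by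
    exact_mod_cast congrArg (Nat.cast : ℕ → ℤ) (pr_mul_pr S T)
  have key : u * (pr S : ℤ) * (v * (pr T : ℤ))
      = u * v * (pr (S ∆ T) : ℤ) * ((pr (S ∩ T) : ℤ)) ^ 2 := by
    linear_combination (u * v) * hnat
  rw [← jacobiSym.mul_left, key, jacobiSym.mul_left, jacobiSym.sq_one', mul_one]
  rwa [Int.gcd_natCast_natCast]

lemma sdiff_symmDiff_sdiff {P A B : Finset ℕ} (hA : A ⊆ P) (hB : B ⊆ P) :
    (P \ A) ∆ (P \ B) = A ∆ B := by
  ext x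
  have h1 := @hA x; have h2 := @hB x
  simp only [Finset.mem_symmDiff, Finset.mem_sdiff]
  tauto

lemma sdiff_symmDiff {P A B : Finset ℕ} (hA : A ⊆ P) (hB : B ⊆ P) :
    (P \ A) ∆ B = P \ (A ∆ B) := by
  ext x
  have h1 := @hA x; have h2 := @hB x
  simp only [Finset.mem_symmDiff, Finset.mem_sdiff]
  tauto

lemma symmDiff_sdiff {P A B : Finset ℕ} (hA : A ⊆ P) (hB : B ⊆ P) :
    A ∆ (P \ B) = P \ (A ∆ B) := by
  ext x
  have h1 := @hA x; have h2 := @hB x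
  simp only [Finset.mem_symmDiff, Finset.mem_sdiff]
  tauto

lemma cond_symmDiff {P : Finset ℕ} (hP : ∀ p ∈ P, p.Prime) {u v : ℤ} {A B : Finset ℕ}
    (hA : A ⊆ P) (hB : B ⊆ P) (hcA : cond P u A) (hcB : cond P v B) :
    cond P (u * v) (A ∆ B) := by
  have hPA : P \ A ⊆ P := Finset.sdiff_subset
  have hPB : P \ B ⊆ P := Finset.sdiff_subset
  constructor
  · intro p hp
    obtain ⟨hpP, hpAB⟩ := Finset.mem_sdiff.1 hp
    have hpp := hP p hpP
    by_cases hpA : p ∈ A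
    · have hpB : p ∈ B := by
        by_contra h
        exact hpAB (Finset.mem_symmDiff.2 (Or.inl ⟨hpA, h⟩))
      have := core hP hPA hPB hpp (by simp [hpA]) (by simp [hpB]) (u := u) (v := v)
      rw [sdiff_symmDiff_sdiff hA hB] at this
      rw [← this, hcA.2 p hpA, hcB.2 p hpB, one_mul]
    · have hpB : p ∉ B := by
        intro h
        exact hpAB (Finset.mem_symmDiff.2 (Or.inr ⟨h, hpA⟩))
      have := core hP hA hB hpp hpA hpB (u := u) (v := v)
      rw [← this, hcA.1 p (Finset.mem_sdiff.2 ⟨hpP, hpA⟩),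
        hcB.1 p (Finset.mem_sdiff.2 ⟨hpP, hpB⟩), one_mul]
  · intro p hp
    have hpP : p ∈ P := by
      rcases Finset.mem_symmDiff.1 hp with ⟨h, _⟩ | ⟨h, _⟩
      exacts [hA h, hB h]
    have hpp := hP p hpP
    rcases Finset.mem_symmDiff.1 hp with ⟨hpA, hpB⟩ | ⟨hpB, hpA⟩
    · have := core hP hPA hB hpp (by simp [hpA]) hpB (u := u) (v := v)
      rw [sdiff_symmDiff hA hB] at this
      rw [← this, hcA.2 p hpA, hcB.1 p (Finset.mem_sdiff.2 ⟨hpP, hpB⟩), one_mul]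
    · have := core hP hA hPB hpp hpA (by simp [hpB]) (u := u) (v := v)
      rw [symmDiff_sdiff hA hB] at this
      rw [← this, hcA.1 p (Finset.mem_sdiff.2 ⟨hpP, hpA⟩), hcB.2 p hpB, one_mul]

lemma jacobi_four {p : ℕ} (hpp : p.Prime) (hp2 : p ≠ 2) (x : ℤ) :
    jacobiSym (2 * 2 * x) p = jacobiSym (1 * x) p := by
  have h : Int.gcd (2 : ℤ) p = 1 := by
    have h2 : Nat.Coprime 2 p := (Nat.coprime_primes Nat.prime_two hpp).2 (Ne.symm hp2)
    rw [show (2 : ℤ) = ((2 : ℕ) : ℤ) by norm_num, Int.gcd_natCast_natCast]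
    exact h2
  rw [one_mul, jacobiSym.mul_left, show ((2 : ℤ) * 2) = (2 : ℤ) ^ 2 by ring,
    jacobiSym.sq_one' h, one_mul]

lemma cond_four_iff {P : Finset ℕ} (hP : ∀ p ∈ P, p.Prime) (hP2 : ∀ p ∈ P, p ≠ 2)
    {S : Finset ℕ} (hS : S ⊆ P) : cond P (2 * 2) S ↔ cond P 1 S := by
  unfold cond
  constructor <;> rintro ⟨h1, h2⟩ <;> refine ⟨fun p hp => ?_, fun p hp => ?_⟩
  · rw [← jacobi_four (hP p (Finset.mem_sdiff.1 hp).1) (hP2 p (Finset.mem_sdiff.1 hp).1)]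
    exact h1 p hp
  · rw [← jacobi_four (hP p (hS hp)) (hP2 p (hS hp))]
    exact h2 p hp
  · rw [jacobi_four (hP p (Finset.mem_sdiff.1 hp).1) (hP2 p (Finset.mem_sdiff.1 hp).1)]
    exact h1 p hp
  · rw [jacobi_four (hP p (hS hp)) (hP2 p (hS hp))]
    exact h2 p hp

lemma prod_one_add {s : Finset ℕ} {f : ℕ → ℤ} (hf : ∀ p ∈ s, f p = 1 ∨ f p = -1) :
    ∏ p ∈ s, (1 + f p) = if ∀ p ∈ s, f p = 1 then 2 ^ s.card else 0 := by
  by_cases h : ∀ p ∈ s, f p = 1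
  · rw [if_pos h, Finset.prod_congr rfl (fun p hp => by rw [h p hp])]
    simp
  · rw [if_neg h]
    push_neg at h
    obtain ⟨p, hp, hne⟩ := h
    apply Finset.prod_eq_zero hp
    rcases hf p hp with h1 | h1
    · exact absurd h1 hne
    · rw [h1]; ring

lemma gcd_aux {P S : Finset ℕ} (hP : ∀ p ∈ P, p.Prime) (hS : S ⊆ P) {p : ℕ} (hpp : p.Prime)
    (hpS : p ∉ S) {u : ℤ} (hu : Int.gcd u p = 1) : Int.gcd (u * (pr S : ℤ)) p = 1 := by
  rw [← Int.isCoprime_iff_gcd_eq_one] at hu ⊢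
  apply IsCoprime.mul_left hu
  rw [Int.isCoprime_iff_gcd_eq_one, Int.gcd_natCast_natCast]
  apply Nat.Coprime.prod_left
  intro q hq
  exact (Nat.coprime_primes (hP q (hS hq)) hpp).2 (fun h => hpS (h ▸ hq))

open Classical in
lemma term_eval {P : Finset ℕ} (hP : ∀ p ∈ P, p.Prime) {u : ℤ}
    (hu : ∀ p ∈ P, Int.gcd u p = 1) {S : Finset ℕ} (hS : S ⊆ P) :
    (∏ p ∈ P \ S, (1 + jacobiSym (u * (pr S : ℤ)) p)) *
      (∏ p ∈ S, (1 + jacobiSym (u * (pr (P \ S) : ℤ)) p))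
      = if cond P u S then 2 ^ P.card else 0 := by
  rw [prod_one_add (fun p hp => jacobiSym.eq_one_or_neg_one
        (gcd_aux hP hS (hP p (Finset.mem_sdiff.1 hp).1) (Finset.mem_sdiff.1 hp).2
          (hu p (Finset.mem_sdiff.1 hp).1))),
      prod_one_add (fun p hp => jacobiSym.eq_one_or_neg_one
        (gcd_aux hP Finset.sdiff_subset (hP p (hS hp)) (fun h => (Finset.mem_sdiff.1 h).2 hp)
          (hu p (hS hp))))]
  unfold cond
  by_cases h1 : ∀ p ∈ P \ S, jacobiSym (u * (pr S : ℤ)) p = 1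
  · by_cases h2 : ∀ p ∈ S, jacobiSym (u * (pr (P \ S) : ℤ)) p = 1
    · rw [if_pos h1, if_pos h2, if_pos ⟨h1, h2⟩, ← pow_add,
        Finset.card_sdiff_add_card_eq_card hS]
    · have hn : ¬((∀ p ∈ P \ S, jacobiSym (u * (pr S : ℤ)) p = 1) ∧
          ∀ p ∈ S, jacobiSym (u * (pr (P \ S) : ℤ)) p = 1) := fun h => h2 h.2
      rw [if_neg h2, if_neg hn, mul_zero]
  · have hn : ¬((∀ p ∈ P \ S, jacobiSym (u * (pr S : ℤ)) p = 1) ∧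
        ∀ p ∈ S, jacobiSym (u * (pr (P \ S) : ℤ)) p = 1) := fun h => h1 h.1
    rw [if_neg h1, if_neg hn, zero_mul]

lemma Ssum_eq (D : ℕ) (hsq : Squarefree D) (u : ℤ) :
    Ssum D u u = ∑ S ∈ D.primeFactors.powerset,
      (∏ p ∈ D.primeFactors \ S, (1 + jacobiSym (u * (pr S : ℤ)) p)) *
      (∏ p ∈ S, (1 + jacobiSym (u * (pr (D.primeFactors \ S) : ℤ)) p)) := by
  have hD0 : D ≠ 0 := hsq.ne_zero
  unfold Ssum
  refine Finset.sum_nbij' (fun a => a.primeFactors) (fun S => pr S) ?_ ?_ ?_ ?_ ?_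
  · intro a ha
    exact Finset.mem_powerset.2 (Nat.primeFactors_mono (Nat.dvd_of_mem_divisors ha) hD0)
  · intro S hS
    have hsub := Finset.mem_powerset.1 hS
    refine Nat.mem_divisors.2 ⟨?_, hD0⟩
    have : pr (D.primeFactors \ S) * pr S = D := by
      unfold pr
      rw [Finset.prod_sdiff hsub, Nat.prod_primeFactors_of_squarefree hsq]
    exact Dvd.intro_left _ this
  · intro a ha
    exact Nat.prod_primeFactors_of_squarefree
      (hsq.squarefree_of_dvd (Nat.dvd_of_mem_divisors ha))
  · intro S hS
    exact Nat.primeFactors_prod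
      (fun p hp => Nat.prime_of_mem_primeFactors (Finset.mem_powerset.1 hS hp))
  · intro a ha
    have hpa : pr a.primeFactors = a := Nat.prod_primeFactors_of_squarefree
      (hsq.squarefree_of_dvd (Nat.dvd_of_mem_divisors ha))
    have hsub : a.primeFactors ⊆ D.primeFactors :=
      Nat.primeFactors_mono (Nat.dvd_of_mem_divisors ha) hD0
    have hDa : D / a = pr (D.primeFactors \ a.primeFactors) := by
      unfold pr
      rw [Nat.prod_primeFactors_sdiff_of_squarefree hsq hsub]
      unfold pr at hpa
      rw [hpa]
    have hDpf : (D / a).primeFactors = D.primeFactors \ a.primeFactors := by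
      rw [hDa]
      exact Nat.primeFactors_prod
        (fun p hp => Nat.prime_of_mem_primeFactors (Finset.mem_sdiff.1 hp).1)
    rw [hDpf, hpa, ← hDa, Int.natCast_div]

open Classical in
lemma Ssum_count (D : ℕ) (hsq : Squarefree D) {u : ℤ}
    (hu : ∀ p ∈ D.primeFactors, Int.gcd u p = 1) :
    Ssum D u u = 2 ^ D.primeFactors.card *
      ((D.primeFactors.powerset.filter (cond D.primeFactors u)).card : ℤ) := by
  rw [Ssum_eq D hsq u,
    Finset.sum_congr rfl (fun S hS => term_eval
      (fun p hp => Nat.prime_of_mem_primeFactors hp) hu (Finset.mem_powerset.1 hS)),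
    ← Finset.sum_filter, Finset.sum_const, nsmul_eq_mul]
  ring

end SsumAux

open scoped symmDiff in
theorem Ssum_one_one_ne_zero (D : ℕ) (hD : Odd D) (hsq : Squarefree D) (hpos : 0 < D) :
    Ssum D 1 1 ≠ 0 ∧ (Ssum D 2 2 = 0 ∨ Ssum D 2 2 = Ssum D 1 1) := by
  classical
  open SsumAux in
  set P := D.primeFactors with hPdef
  have hP : ∀ p ∈ P, p.Prime := fun p hp => Nat.prime_of_mem_primeFactors hp
  have hP2 : ∀ p ∈ P, p ≠ 2 := by
    intro p hp h2
    have hdvd := Nat.dvd_of_mem_primeFactors hp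
    rw [h2] at hdvd
    rw [Nat.odd_iff] at hD
    omega
  have hu1 : ∀ p ∈ P, Int.gcd (1 : ℤ) p = 1 := fun p _ => by simp [Int.gcd]
  have hu2 : ∀ p ∈ P, Int.gcd (2 : ℤ) p = 1 := by
    intro p hp
    rw [show (2 : ℤ) = ((2 : ℕ) : ℤ) by norm_num, Int.gcd_natCast_natCast]
    exact (Nat.coprime_primes Nat.prime_two (hP p hp)).2 (Ne.symm (hP2 p hp))
  have h1 := SsumAux.Ssum_count D hsq hu1
  have h2 := SsumAux.Ssum_count D hsq hu2
  have hmem : ∅ ∈ P.powerset.filter (SsumAux.cond P 1) := by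
    refine Finset.mem_filter.2 ⟨Finset.mem_powerset.2 (Finset.empty_subset _), ?_, ?_⟩
    · intro p _
      simp [SsumAux.pr, jacobiSym.one_left]
    · intro p hp
      exact absurd hp (Finset.notMem_empty p)
  constructor
  · rw [h1]
    refine mul_ne_zero (pow_ne_zero _ two_ne_zero) ?_
    exact_mod_cast Finset.card_ne_zero_of_mem hmem
  · by_cases hc : (P.powerset.filter (SsumAux.cond P 2)).Nonempty
    · right
      rw [h1, h2]
      congr 2
      obtain ⟨A₀, hA₀⟩ := hc
      have hA₀sub : A₀ ⊆ P := Finset.mem_powerset.1 (Finset.mem_filter.1 hA₀).1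
      have hA₀c : SsumAux.cond P 2 A₀ := (Finset.mem_filter.1 hA₀).2
      have hsd : ∀ S : Finset ℕ, S ⊆ P → A₀ ∆ S ⊆ P := by
        intro S hS x hx
        rcases Finset.mem_symmDiff.1 hx with ⟨h, _⟩ | ⟨h, _⟩
        exacts [hA₀sub h, hS h]
      refine Finset.card_nbij' (fun S => A₀ ∆ S) (fun S => A₀ ∆ S) ?_ ?_ ?_ ?_
      · intro T hT
        have hTsub : T ⊆ P := Finset.mem_powerset.1 (Finset.mem_filter.1 hT).1
        have hTc : SsumAux.cond P 2 T := (Finset.mem_filter.1 hT).2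
        refine Finset.mem_filter.2 ⟨Finset.mem_powerset.2 (hsd T hTsub), ?_⟩
        exact (SsumAux.cond_four_iff hP hP2 (hsd T hTsub)).1
          (SsumAux.cond_symmDiff hP hA₀sub hTsub hA₀c hTc)
      · intro S hS
        have hSsub : S ⊆ P := Finset.mem_powerset.1 (Finset.mem_filter.1 hS).1
        have hSc : SsumAux.cond P 1 S := (Finset.mem_filter.1 hS).2
        refine Finset.mem_filter.2 ⟨Finset.mem_powerset.2 (hsd S hSsub), ?_⟩
        have := SsumAux.cond_symmDiff hP hA₀sub hSsub hA₀c hSc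
        rwa [mul_one] at this
      · intro T _
        exact symmDiff_symmDiff_cancel_left A₀ T
      · intro S _
        exact symmDiff_symmDiff_cancel_left A₀ S
    · left
      rw [h2, Finset.not_nonempty_iff_eq_empty.1 hc]
      simp
end

section
/- Let D be a positive odd squarefree integer. Then S_D(-1,1) ≠ 0, and either S_D(-2,2) = 0 or S_D(-2,2) = S_D(-1,1), where S_D(u,v) = Σ_{ab=D} Π_{p|b}(1 + J(ua,p)) Π_{p|a}(1 + J(vb,p)). -/
open Finset

namespace SAux

lemma jacobi_prod (s : Finset ℕ) (p : ℕ) :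
    jacobiSym (∏ q ∈ s, (q:ℤ)) p = ∏ q ∈ s, jacobiSym (q:ℤ) p := by
  classical
  induction s using Finset.cons_induction with
  | empty => simp
  | cons a s ha ih => rw [Finset.prod_cons, jacobiSym.mul_left, ih, Finset.prod_cons]

/-- the per-prime symbol -/
def chi (u v : ℤ) (K S : Finset ℕ) (p : ℕ) : ℤ :=
  if p ∈ S then jacobiSym (v * ∏ q ∈ K \ S, (q:ℤ)) p
  else jacobiSym (u * ∏ q ∈ S, (q:ℤ)) p

variable {K : Finset ℕ} (hK : ∀ q ∈ K, Nat.Prime q) (h2 : 2 ∉ K)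

include hK in
lemma not_dvd_prod {p : ℕ} (hp : p ∈ K) {X : Finset ℕ} (hX : X ⊆ K) (hpX : p ∉ X) :
    ¬ (p:ℤ) ∣ ∏ q ∈ X, (q:ℤ) := by
  rw [← Nat.cast_prod, Int.natCast_dvd_natCast]
  intro h
  rcases (Nat.Prime.prime (hK p hp)).dvd_finset_prod_iff _ |>.mp h with ⟨q, hq, hdvd⟩
  exact hpX (((Nat.prime_dvd_prime_iff_eq (hK p hp) (hK q (hX hq))).mp hdvd) ▸ hq)

include hK in
lemma unit_J {p : ℕ} (hp : p ∈ K) {c : ℤ} (hc : ¬ (p:ℤ) ∣ c) {X : Finset ℕ}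
    (hX : X ⊆ K) (hpX : p ∉ X) :
    jacobiSym (c * ∏ q ∈ X, (q:ℤ)) p = 1 ∨ jacobiSym (c * ∏ q ∈ X, (q:ℤ)) p = -1 := by
  apply jacobiSym.eq_one_or_neg_one
  have hpP : Prime (p:ℤ) := Nat.prime_iff_prime_int.mp (hK p hp)
  rw [← Int.isCoprime_iff_gcd_eq_one]
  refine IsCoprime.symm (hpP.coprime_iff_not_dvd.mpr ?_)
  intro h
  rcases hpP.dvd_mul.mp h with h | h
  · exact hc h
  · exact not_dvd_prod hK hp hX hpX h

end SAux

namespace SAux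
open scoped symmDiff

variable {K : Finset ℕ} (hK : ∀ q ∈ K, Nat.Prime q)

/-- product of legendre symbols -/
def R (p : ℕ) (X : Finset ℕ) : ℤ := ∏ q ∈ X, jacobiSym (q:ℤ) p

include hK in
lemma J_sq {p q : ℕ} (hp : p ∈ K) (hq : q ∈ K) (hne : q ≠ p) :
    jacobiSym (q:ℤ) p * jacobiSym (q:ℤ) p = 1 := by
  have h : Int.gcd (q:ℤ) p = 1 := by
    rw [Int.gcd_natCast_natCast]
    exact (Nat.coprime_primes (hK q hq) (hK p hp)).mpr hne
  rw [← sq]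
  exact jacobiSym.sq_one h

include hK in
lemma R_sq {p : ℕ} (hp : p ∈ K) {X : Finset ℕ} (hX : X ⊆ K) (hpX : p ∉ X) :
    R p X * R p X = 1 := by
  rw [R, ← Finset.prod_mul_distrib]
  exact Finset.prod_eq_one fun q hq =>
    J_sq hK hp (hX hq) (fun h => hpX (h ▸ hq))

include hK in
lemma R_mul {p : ℕ} (hp : p ∈ K) {X Y : Finset ℕ} (hX : X ⊆ K) (hY : Y ⊆ K)
    (hpX : p ∉ X) (hpY : p ∉ Y) :
    R p X * R p Y = R p (X ∆ Y) := by
  have h1 : R p X = R p (X \ Y) * R p (X ∩ Y) := by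
    rw [R, R, R, ← Finset.prod_sdiff (Finset.inter_subset_left (s₂ := Y)),
      Finset.sdiff_inter_self_left]
  have h2 : R p Y = R p (Y \ X) * R p (Y ∩ X) := by
    rw [R, R, R, ← Finset.prod_sdiff (Finset.inter_subset_left (s₂ := X)),
      Finset.sdiff_inter_self_left]
  have h3 : R p (X ∩ Y) * R p (Y ∩ X) = 1 := by
    rw [Finset.inter_comm Y X]
    exact R_sq hK hp ((Finset.inter_subset_left).trans hX)
      (fun h => hpX (Finset.mem_inter.mp h).1)
  have h4 : R p (X ∆ Y) = R p (X \ Y) * R p (Y \ X) := by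
    rw [symmDiff_def, R, R, R, Finset.sup_eq_union, Finset.prod_union]
    exact disjoint_sdiff_sdiff
  rw [h1, h2, h4, mul_mul_mul_comm, h3, mul_one]

end SAux

namespace SAux
open scoped symmDiff

variable {K : Finset ℕ} (hK : ∀ q ∈ K, Nat.Prime q) (h2 : 2 ∉ K)

lemma symmdiff_sets {S S' : Finset ℕ} (hS : S ⊆ K) (hS' : S' ⊆ K) :
    (K \ S) ∆ (K \ S') = S ∆ S' ∧ (K \ S) ∆ S' = K \ (S ∆ S')
    ∧ S ∆ (K \ S') = K \ (S ∆ S') ∧ K \ (K \ (S ∆ S')) = S ∆ S' := by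
  refine ⟨?_, ?_, ?_, ?_⟩ <;>
  · ext x
    have h1 := @hS x; have h2 := @hS' x
    simp only [Finset.mem_symmDiff, Finset.mem_sdiff]
    tauto

lemma chi_of_mem {u v : ℤ} {S : Finset ℕ} {p : ℕ} (hp : p ∈ S) :
    chi u v K S p = jacobiSym v p * R p (K \ S) := by
  rw [chi, if_pos hp, jacobiSym.mul_left, jacobi_prod, R]

lemma chi_of_not_mem {u v : ℤ} {S : Finset ℕ} {p : ℕ} (hp : p ∉ S) :
    chi u v K S p = jacobiSym u p * R p S := by
  rw [chi, if_neg hp, jacobiSym.mul_left, jacobi_prod, R]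

include hK h2 in
lemma gcd_two {p : ℕ} (hp : p ∈ K) : Int.gcd (2:ℤ) p = 1 := by
  have := hK p hp
  have : Nat.Coprime 2 p := (Nat.coprime_primes Nat.prime_two this).mpr (fun h => h2 (h ▸ hp))
  simpa [Int.gcd_natCast_natCast] using (by exact_mod_cast this.gcd_eq_one : Int.gcd ((2:ℕ):ℤ) p = 1)

include hK h2 in
lemma gcd_neg_two {p : ℕ} (hp : p ∈ K) : Int.gcd (-2:ℤ) p = 1 := by
  rw [Int.neg_gcd]; exact gcd_two hK h2 hp

lemma gcd_neg_one (p : ℕ) : Int.gcd (-1:ℤ) p = 1 := by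
  rw [Int.neg_gcd]; exact Int.one_gcd

include hK h2 in
lemma J2_sq {p : ℕ} (hp : p ∈ K) : jacobiSym 2 p * jacobiSym 2 p = 1 := by
  rw [← sq]; exact jacobiSym.sq_one (gcd_two hK h2 hp)

include hK h2 in
lemma Jn2_sq {p : ℕ} (hp : p ∈ K) : jacobiSym (-2) p * jacobiSym (-2) p = 1 := by
  rw [← sq]; exact jacobiSym.sq_one (gcd_neg_two hK h2 hp)

include hK h2 in
lemma Jmix {p : ℕ} (hp : p ∈ K) :
    jacobiSym 2 p * jacobiSym (-2) p * jacobiSym (-1) p = 1 := by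
  have h4 : jacobiSym 2 p * jacobiSym (-2) p = jacobiSym (-1) p := by
    rw [← jacobiSym.mul_left]
    have : (2 : ℤ) * (-2) = -1 * 2 ^ 2 := by norm_num
    rw [this, jacobiSym.mul_left, jacobiSym.sq_one' (gcd_two hK h2 hp), mul_one]
  rw [h4, ← sq]
  exact jacobiSym.sq_one (gcd_neg_one p)

include hK h2 in
lemma core {p : ℕ} (hp : p ∈ K) {S S' : Finset ℕ} (hS : S ⊆ K) (hS' : S' ⊆ K) :
    chi (-2) 2 K S p * chi (-2) 2 K S' p * chi (-1) 1 K (K \ (S ∆ S')) p = 1 := by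
  obtain ⟨idB, idC, idD, idA⟩ := symmdiff_sets (K := K) hS hS'
  have hSd : S ∆ S' ⊆ K := fun x hx => by
    rcases Finset.mem_symmDiff.mp hx with ⟨h, _⟩ | ⟨h, _⟩
    exacts [hS h, hS' h]
  have hT : K \ (S ∆ S') ⊆ K := Finset.sdiff_subset
  by_cases hpS : p ∈ S <;> by_cases hpS' : p ∈ S'
  · -- p ∈ S, p ∈ S' : p ∈ T
    have hpsd : p ∉ S ∆ S' := by simp [Finset.mem_symmDiff, hpS, hpS']
    have hpT : p ∈ K \ (S ∆ S') := Finset.mem_sdiff.mpr ⟨hp, hpsd⟩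
    rw [chi_of_mem hpS, chi_of_mem hpS', chi_of_mem hpT, jacobiSym.one_left, one_mul, idA]
    rw [show ∀ x a b c : ℤ, (x*a)*(x*b)*c = (x*x)*((a*b)*c) from fun _ _ _ _ => by ring]
    rw [J2_sq hK h2 hp, one_mul,
      R_mul hK hp (Finset.sdiff_subset) (Finset.sdiff_subset)
        (fun h => (Finset.mem_sdiff.mp h).2 hpS) (fun h => (Finset.mem_sdiff.mp h).2 hpS'),
      idB, R_sq hK hp hSd hpsd]
  · -- p ∈ S, p ∉ S' : p ∉ T
    have hpsd : p ∈ S ∆ S' := Finset.mem_symmDiff.mpr (Or.inl ⟨hpS, hpS'⟩)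
    have hpT : p ∉ K \ (S ∆ S') := fun h => (Finset.mem_sdiff.mp h).2 hpsd
    rw [chi_of_mem hpS, chi_of_not_mem hpS', chi_of_not_mem hpT]
    rw [show ∀ x y z a b c : ℤ, (x*a)*(y*b)*(z*c) = (x*y*z)*((a*b)*c) from
      fun _ _ _ _ _ _ => by ring]
    rw [Jmix hK h2 hp, one_mul,
      R_mul hK hp (Finset.sdiff_subset) hS' (fun h => (Finset.mem_sdiff.mp h).2 hpS) hpS',
      idC, R_sq hK hp hT hpT]
  · -- p ∉ S, p ∈ S' : p ∉ T
    have hpsd : p ∈ S ∆ S' := Finset.mem_symmDiff.mpr (Or.inr ⟨hpS', hpS⟩)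
    have hpT : p ∉ K \ (S ∆ S') := fun h => (Finset.mem_sdiff.mp h).2 hpsd
    rw [chi_of_not_mem hpS, chi_of_mem hpS', chi_of_not_mem hpT]
    rw [show ∀ x y z a b c : ℤ, (x*a)*(y*b)*(z*c) = (y*x*z)*((a*b)*c) from
      fun _ _ _ _ _ _ => by ring]
    rw [Jmix hK h2 hp, one_mul,
      R_mul hK hp hS (Finset.sdiff_subset) hpS (fun h => (Finset.mem_sdiff.mp h).2 hpS'),
      idD, R_sq hK hp hT hpT]
  · -- p ∉ S, p ∉ S' : p ∈ T
    have hpsd : p ∉ S ∆ S' := by simp [Finset.mem_symmDiff, hpS, hpS']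
    have hpT : p ∈ K \ (S ∆ S') := Finset.mem_sdiff.mpr ⟨hp, hpsd⟩
    rw [chi_of_not_mem hpS, chi_of_not_mem hpS', chi_of_mem hpT, jacobiSym.one_left, one_mul, idA]
    rw [show ∀ x a b c : ℤ, (x*a)*(x*b)*c = (x*x)*((a*b)*c) from fun _ _ _ _ => by ring]
    rw [Jn2_sq hK h2 hp, one_mul, R_mul hK hp hS hS' hpS hpS', R_sq hK hp hSd hpsd]

end SAux

namespace SAux
open scoped symmDiff

variable {K : Finset ℕ} (hK : ∀ q ∈ K, Nat.Prime q) (h2 : 2 ∉ K)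

/-- divisor-condition set -/
def Qset (K : Finset ℕ) (u v : ℤ) : Finset (Finset ℕ) :=
  K.powerset.filter (fun S => ∀ p ∈ K, chi u v K S p = 1)

lemma psi_invol {S₀ X : Finset ℕ} (hS₀ : S₀ ⊆ K) (hX : X ⊆ K) :
    K \ (S₀ ∆ (K \ (S₀ ∆ X))) = X := by
  ext x
  have h1 := @hS₀ x; have h2 := @hX x
  simp only [Finset.mem_symmDiff, Finset.mem_sdiff]
  tauto

include hK h2 in
lemma card_transfer {S₀ : Finset ℕ} (hS₀ : S₀ ∈ Qset K (-2) 2) :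
    (Qset K (-2) 2).card = (Qset K (-1) 1).card := by
  obtain ⟨hS₀K, hS₀Q⟩ := Finset.mem_filter.mp hS₀
  rw [Finset.mem_powerset] at hS₀K
  refine Finset.card_bij' (fun X _ => K \ (S₀ ∆ X)) (fun Y _ => K \ (S₀ ∆ Y)) ?_ ?_ ?_ ?_
  · intro X hX
    obtain ⟨hXK, hXQ⟩ := Finset.mem_filter.mp hX
    rw [Finset.mem_powerset] at hXK
    refine Finset.mem_filter.mpr ⟨Finset.mem_powerset.mpr Finset.sdiff_subset, fun p hp => ?_⟩
    have := core hK h2 hp hS₀K hXK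
    rw [hS₀Q p hp, hXQ p hp, one_mul, one_mul] at this
    exact this
  · intro Y hY
    obtain ⟨hYK, hYQ⟩ := Finset.mem_filter.mp hY
    rw [Finset.mem_powerset] at hYK
    refine Finset.mem_filter.mpr ⟨Finset.mem_powerset.mpr Finset.sdiff_subset, fun p hp => ?_⟩
    have := core hK h2 hp hS₀K (Finset.sdiff_subset (s := K) (t := S₀ ∆ Y))
    rw [psi_invol hS₀K hYK, hS₀Q p hp, hYQ p hp, one_mul, mul_one] at this
    exact this
  · intro X hX
    exact psi_invol hS₀K (Finset.mem_powerset.mp (Finset.mem_filter.mp hX).1)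
  · intro Y hY
    exact psi_invol hS₀K (Finset.mem_powerset.mp (Finset.mem_filter.mp hY).1)

include hK h2 in
lemma chi_unit {u v : ℤ} (hu : ∀ p ∈ K, ¬ (p:ℤ) ∣ u) (hv : ∀ p ∈ K, ¬ (p:ℤ) ∣ v)
    {S : Finset ℕ} (hS : S ⊆ K) {p : ℕ} (hp : p ∈ K) :
    chi u v K S p = 1 ∨ chi u v K S p = -1 := by
  by_cases hpS : p ∈ S
  · rw [chi, if_pos hpS]
    exact unit_J hK hp (hv p hp) Finset.sdiff_subset (fun h => (Finset.mem_sdiff.mp h).2 hpS)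
  · rw [chi, if_neg hpS]
    exact unit_J hK hp (hu p hp) hS hpS

include hK h2 in
lemma prod_chi {u v : ℤ} (hu : ∀ p ∈ K, ¬ (p:ℤ) ∣ u) (hv : ∀ p ∈ K, ¬ (p:ℤ) ∣ v)
    {S : Finset ℕ} (hS : S ⊆ K) :
    ∏ p ∈ K, (1 + chi u v K S p)
      = if (∀ p ∈ K, chi u v K S p = 1) then 2 ^ K.card else 0 := by
  by_cases h : ∀ p ∈ K, chi u v K S p = 1
  · rw [if_pos h]
    calc ∏ p ∈ K, (1 + chi u v K S p) = ∏ _p ∈ K, (2:ℤ) :=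
          Finset.prod_congr rfl (fun p hp => by rw [h p hp]; norm_num)
      _ = 2 ^ K.card := by simp
  · rw [if_neg h]
    push_neg at h
    obtain ⟨p, hp, hne⟩ := h
    have : chi u v K S p = -1 := (chi_unit hK h2 hu hv hS hp).resolve_left hne
    exact Finset.prod_eq_zero hp (by rw [this]; ring)

end SAux

namespace SAux

lemma Ssum_eq (D : ℕ) (hsq : Squarefree D) (u v : ℤ) :
    Ssum D u v = ∑ S ∈ D.primeFactors.powerset,
      ∏ p ∈ D.primeFactors, (1 + chi u v D.primeFactors S p) := by
  have hD0 : D ≠ 0 := hsq.ne_zero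
  set K := D.primeFactors with hKdef
  have hKprime : ∀ q ∈ K, Nat.Prime q := fun q hq => Nat.prime_of_mem_primeFactors hq
  rw [Ssum]
  refine Finset.sum_bij' (fun a _ => a.primeFactors) (fun S _ => ∏ p ∈ S, p)
    ?_ ?_ ?_ ?_ ?_
  · intro a ha
    exact Finset.mem_powerset.mpr (Nat.primeFactors_mono (Nat.dvd_of_mem_divisors ha) hD0)
  · intro S hS
    rw [Finset.mem_powerset] at hS
    refine Nat.mem_divisors.mpr ⟨?_, hD0⟩
    calc ∏ p ∈ S, p ∣ ∏ p ∈ K, p := Finset.prod_dvd_prod_of_subset _ _ _ hS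
      _ = D := Nat.prod_primeFactors_of_squarefree hsq
  · intro a ha
    exact Nat.prod_primeFactors_of_squarefree
      (hsq.squarefree_of_dvd (Nat.dvd_of_mem_divisors ha))
  · intro S hS
    rw [Finset.mem_powerset] at hS
    exact Nat.primeFactors_prod (fun p hp => hKprime p (hS hp))
  · intro a ha
    set S := a.primeFactors with hSdef
    have hSK : S ⊆ K := Nat.primeFactors_mono (Nat.dvd_of_mem_divisors ha) hD0
    have haS : ∏ p ∈ S, p = a := Nat.prod_primeFactors_of_squarefree
      (hsq.squarefree_of_dvd (Nat.dvd_of_mem_divisors ha))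
    have hba : ∏ p ∈ K \ S, p = D / a := by
      rw [Nat.prod_primeFactors_sdiff_of_squarefree hsq hSK, haS]
    have hbf : (D / a).primeFactors = K \ S := by
      rw [← hba]
      exact Nat.primeFactors_prod (fun p hp => hKprime p (Finset.mem_sdiff.mp hp).1)
    have hchi1 : ∀ p ∈ K \ S, (1 : ℤ) + jacobiSym (u * a) p = 1 + chi u v K S p := by
      intro p hp
      rw [chi, if_neg (Finset.mem_sdiff.mp hp).2, ← haS]
      push_cast
      rfl
    have hchi2 : ∀ p ∈ S, (1 : ℤ) + jacobiSym (v * (D / a)) p = 1 + chi u v K S p := by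
      intro p hp
      rw [chi, if_pos hp,
        show ((D:ℤ) / (a:ℤ)) = ((D / a : ℕ) : ℤ) from (Int.natCast_ediv D a).symm, ← hba]
      push_cast
      rfl
    rw [hbf, Finset.prod_congr rfl hchi1, Finset.prod_congr rfl hchi2,
      ← Finset.prod_union Finset.sdiff_disjoint, Finset.sdiff_union_of_subset hSK]
end SAux

theorem Ssum_neg_one_one_ne_zero (D : ℕ) (hD : Odd D) (hsq : Squarefree D) (hpos : 0 < D) :
    Ssum D (-1) 1 ≠ 0 ∧ (Ssum D (-2) 2 = 0 ∨ Ssum D (-2) 2 = Ssum D (-1) 1) := by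
  classical
  set K := D.primeFactors with hKdef
  have hK : ∀ q ∈ K, Nat.Prime q := fun q hq => Nat.prime_of_mem_primeFactors hq
  have h2 : 2 ∉ K := by
    intro h
    have := Nat.dvd_of_mem_primeFactors h
    rw [Nat.odd_iff] at hD
    omega
  have hunit : ∀ (c : ℤ), c.natAbs = 1 ∨ c.natAbs = 2 → ∀ p ∈ K, ¬ (p:ℤ) ∣ c := by
    intro c hc p hp h
    have hd : p ∣ c.natAbs := Int.ofNat_dvd_right.mp (Int.dvd_natAbs.mpr h)
    rcases hc with hc | hc
    · rw [hc] at hd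
      exact (hK p hp).one_lt.ne' (Nat.eq_one_of_dvd_one hd)
    · rw [hc] at hd
      have := (Nat.prime_dvd_prime_iff_eq (hK p hp) Nat.prime_two).mp hd
      exact h2 (this ▸ hp)
  have key : ∀ u v : ℤ, (∀ p ∈ K, ¬ (p:ℤ) ∣ u) → (∀ p ∈ K, ¬ (p:ℤ) ∣ v) →
      Ssum D u v = ((SAux.Qset K u v).card : ℤ) * 2 ^ K.card := by
    intro u v hu hv
    rw [SAux.Ssum_eq D hsq u v, ← hKdef]
    rw [Finset.sum_congr rfl (fun S hS =>
      SAux.prod_chi hK h2 hu hv (Finset.mem_powerset.mp hS))]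
    rw [Finset.sum_ite, Finset.sum_const, Finset.sum_const_zero, add_zero, nsmul_eq_mul]
    rfl
  have hu1 : ∀ p ∈ K, ¬ (p:ℤ) ∣ (-1 : ℤ) := hunit (-1) (Or.inl rfl)
  have hv1 : ∀ p ∈ K, ¬ (p:ℤ) ∣ (1 : ℤ) := hunit 1 (Or.inl rfl)
  have hu2 : ∀ p ∈ K, ¬ (p:ℤ) ∣ (-2 : ℤ) := hunit (-2) (Or.inr rfl)
  have hv2 : ∀ p ∈ K, ¬ (p:ℤ) ∣ (2 : ℤ) := hunit 2 (Or.inr rfl)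
  have e1 : Ssum D (-1) 1 = ((SAux.Qset K (-1) 1).card : ℤ) * 2 ^ K.card := key _ _ hu1 hv1
  have e2 : Ssum D (-2) 2 = ((SAux.Qset K (-2) 2).card : ℤ) * 2 ^ K.card := key _ _ hu2 hv2
  have hKQ : K ∈ SAux.Qset K (-1) 1 := by
    refine Finset.mem_filter.mpr ⟨Finset.mem_powerset.mpr subset_rfl, fun p hp => ?_⟩
    rw [SAux.chi, if_pos hp, Finset.sdiff_self, Finset.prod_empty, mul_one]
    exact jacobiSym.one_left p
  constructor
  · rw [e1]
    refine mul_ne_zero ?_ (by positivity)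
    have : 0 < (SAux.Qset K (-1) 1).card := Finset.card_pos.mpr ⟨K, hKQ⟩
    exact_mod_cast this.ne'
  · by_cases hne : (SAux.Qset K (-2) 2).Nonempty
    · obtain ⟨S₀, hS₀⟩ := hne
      right
      rw [e1, e2, SAux.card_transfer hK h2 hS₀]
    · left
      rw [e2, Finset.not_nonempty_iff_eq_empty.mp hne]
      simp
end
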